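/- arXiv:2010.00564 — 10 statements merged into one kernel-verified Lean document; each statement's English description precedes it below -/
import Mathlib

section
/- Consider the ODE system on $\mathbb{R}^3$: $x' = C\cos y$, $y' = B\sin x$, $z' = (C\sin y + B\cos x)\sin z$, where $B, C$ are real constants. Let $(x_0,y_0) \in \mathbb{R}^2$ satisfy $C\cos y_0 = 0$ and $B\sin x_0 = 0$, set $K := C\sin y_0 + B\cos x_0$, and suppose $K > 0$. Then for every $z_0 \in (0,\pi)$ the curve $\gamma(t) = (x_0,\, y_0,\, 2\arctan(\tan(z_0/2)\, e^{K t}))$ is a solution of the system with $\gamma(0) = (x_0,y_0,z_0)$, it satisfies $\lim_{t \to \infty} \gamma(t) = (x_0,y_0,\pi)$ and $\lim_{t \to -\infty} \gamma(t) = (x_0,y_0,0)$, and the right-hand side vector field of the system vanishes at both limit points $(x_0,y_0,0)$ and $(x_0,y_0,\pi)$. In particular, $\gamma$ is a singular periodic orbit of the system. -/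
open Real Filter

theorem stmt2 (B C : ℝ)
    (X : ℝ × ℝ × ℝ → ℝ × ℝ × ℝ)
    (hX : ∀ p : ℝ × ℝ × ℝ,
      X p = (C * Real.cos p.2.1, B * Real.sin p.1,
             (C * Real.sin p.2.1 + B * Real.cos p.1) * Real.sin p.2.2))
    (x₀ y₀ : ℝ) (hx₀ : C * Real.cos y₀ = 0) (hy₀ : B * Real.sin x₀ = 0)
    (K : ℝ) (hK : K = C * Real.sin y₀ + B * Real.cos x₀) (hKpos : K > 0) :
    ∀ z₀ ∈ Set.Ioo 0 Real.pi,
      ∀ γ : ℝ → ℝ × ℝ × ℝ,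
        (∀ t, γ t = (x₀, y₀, 2 * Real.arctan (Real.tan (z₀ / 2) * Real.exp (K * t)))) →
        (∀ t, HasDerivAt γ (X (γ t)) t) ∧
        γ 0 = (x₀, y₀, z₀) ∧
        Tendsto γ atTop (nhds (x₀, y₀, Real.pi)) ∧
        Tendsto γ atBot (nhds (x₀, y₀, 0)) ∧
        X (x₀, y₀, 0) = 0 ∧ X (x₀, y₀, Real.pi) = 0 := by
  intro z₀ hz₀ γ hγ
  have hγfun : γ = fun t => (x₀, y₀,
      2 * Real.arctan (Real.tan (z₀ / 2) * Real.exp (K * t))) := funext hγ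
  subst hγfun
  set c := Real.tan (z₀ / 2) with hc
  have hz1 : 0 < z₀ / 2 := by linarith [hz₀.1]
  have hz2 : z₀ / 2 < Real.pi / 2 := by linarith [hz₀.2]
  have hcpos : 0 < c := Real.tan_pos_of_pos_of_lt_pi_div_two hz1 hz2
  -- derivative of third component
  have hf : ∀ t, HasDerivAt (fun t => 2 * Real.arctan (c * Real.exp (K * t)))
      (K * Real.sin (2 * Real.arctan (c * Real.exp (K * t)))) t := by
    intro t
    have h0 : HasDerivAt (fun t : ℝ => K * t) K t := by
      simpa using (hasDerivAt_id t).const_mul K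
    have h1 := ((h0.exp.const_mul c).arctan).const_mul 2
    refine h1.congr_deriv ?_
    symm
    set u := c * Real.exp (K * t) with hu
    have hs : Real.sqrt (1 + u ^ 2) ^ 2 = 1 + u ^ 2 :=
      Real.sq_sqrt (by positivity)
    have hsne : Real.sqrt (1 + u ^ 2) ≠ 0 := by positivity
    rw [Real.sin_two_mul, Real.sin_arctan, Real.cos_arctan]
    field_simp
    rw [hs, hu]; ring
  refine ⟨fun t => ?_, ?_, ?_, ?_, ?_, ?_⟩
  · rw [hX]
    simp only [hx₀, hy₀, ← hK]
    exact (hasDerivAt_const t x₀).prodMk ((hasDerivAt_const t y₀).prodMk (hf t))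
  · have : Real.arctan (c * Real.exp (K * 0)) = z₀ / 2 := by
      rw [mul_zero, Real.exp_zero, mul_one, hc, Real.arctan_tan (by linarith) hz2]
    simp only [this]
    ring_nf
  · have hlin : Tendsto (fun t : ℝ => K * t) atTop atTop :=
      tendsto_id.const_mul_atTop hKpos
    have hexp : Tendsto (fun t : ℝ => c * Real.exp (K * t)) atTop atTop :=
      (Real.tendsto_exp_atTop.comp hlin).const_mul_atTop hcpos
    have harc : Tendsto (fun t : ℝ => 2 * Real.arctan (c * Real.exp (K * t)))
        atTop (nhds Real.pi) := by
      have := (Real.tendsto_arctan_atTop.mono_right nhdsWithin_le_nhds).comp hexp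
      have h2 := this.const_mul (2 : ℝ)
      simpa [Function.comp, mul_div_cancel₀] using h2
    exact (tendsto_const_nhds.prodMk_nhds
      (tendsto_const_nhds.prodMk_nhds harc))
  · have hlin : Tendsto (fun t : ℝ => K * t) atBot atBot :=
      tendsto_id.const_mul_atBot hKpos
    have hexp : Tendsto (fun t : ℝ => c * Real.exp (K * t)) atBot (nhds 0) := by
      have := (Real.tendsto_exp_atBot.comp hlin).const_mul c
      simpa using this
    have harc : Tendsto (fun t : ℝ => 2 * Real.arctan (c * Real.exp (K * t)))
        atBot (nhds 0) := by
      have := ((Real.continuous_arctan.tendsto 0).comp hexp).const_mul (2 : ℝ)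
      simpa [Function.comp] using this
    exact (tendsto_const_nhds.prodMk_nhds
      (tendsto_const_nhds.prodMk_nhds harc))
  · rw [hX]; simp [hx₀, hy₀, Prod.ext_iff]
  · rw [hX]; simp [hx₀, hy₀, Prod.ext_iff]
end

section
/- Consider the ODE system on $\mathbb{R}^3$: $x' = C\cos y$, $y' = B\sin x$, $z' = (C\sin y + B\cos x)\sin z$, where $B, C$ are real constants. Let $(x,y,z) : \mathbb{R} \to \mathbb{R}^3$ be a differentiable solution defined for all time with $z(0) \in (0,\pi)$, and set $K := C\sin y(0) + B\cos x(0)$. Then $z(t) \in (0,\pi)$ for all $t \in \mathbb{R}$, and: if $K > 0$ then $\lim_{t\to\infty} z(t) = \pi$ and $\lim_{t\to-\infty} z(t) = 0$; if $K < 0$ then $\lim_{t\to\infty} z(t) = 0$ and $\lim_{t\to-\infty} z(t) = \pi$. -/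
open Real Filter

theorem stmt4 (B C : ℝ) (x y z : ℝ → ℝ)
    (hx : ∀ t, HasDerivAt x (C * Real.cos (y t)) t)
    (hy : ∀ t, HasDerivAt y (B * Real.sin (x t)) t)
    (hz : ∀ t, HasDerivAt z ((C * Real.sin (y t) + B * Real.cos (x t)) * Real.sin (z t)) t)
    (hz0 : z 0 ∈ Set.Ioo 0 Real.pi)
    (K : ℝ) (hK : K = C * Real.sin (y 0) + B * Real.cos (x 0)) :
    (∀ t, z t ∈ Set.Ioo 0 Real.pi) ∧
    (K > 0 → Tendsto z atTop (nhds Real.pi) ∧ Tendsto z atBot (nhds 0)) ∧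
    (K < 0 → Tendsto z atTop (nhds 0) ∧ Tendsto z atBot (nhds Real.pi)) := by
  -- Conservation of K
  set F : ℝ → ℝ := fun t => C * Real.sin (y t) + B * Real.cos (x t) with hF
  have hF' : ∀ t, HasDerivAt F 0 t := by
    intro t
    have h1 : HasDerivAt (fun t => C * Real.sin (y t))
        (C * (Real.cos (y t) * (B * Real.sin (x t)))) t := ((hy t).sin).const_mul C
    have h2 : HasDerivAt (fun t => B * Real.cos (x t))
        (B * (-Real.sin (x t) * (C * Real.cos (y t)))) t := ((hx t).cos).const_mul B
    have := h1.add h2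
    refine this.congr_deriv ?_
    ring
  have hFc : ∀ t, F t = K := by
    intro t
    have hconst : ∀ a b : ℝ, F a = F b :=
      is_const_of_deriv_eq_zero (fun t => (hF' t).differentiableAt)
        (fun t => (hF' t).deriv)
    rw [hK]; exact hconst t 0
  have hz' : ∀ t, HasDerivAt z (K * Real.sin (z t)) t := by
    intro t
    have := hz t
    rwa [show C * Real.sin (y t) + B * Real.cos (x t) = K from hFc t] at this
  have hzc : Continuous z :=
    continuous_iff_continuousAt.2 fun t => (hz' t).continuousAt
  -- the vector field is Lipschitz
  have hlip : LipschitzWith ‖K‖₊ (fun u => K * Real.sin u) := by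
    apply lipschitzWith_of_nnnorm_deriv_le
      (fun u => ((Real.hasDerivAt_sin u).const_mul K).differentiableAt)
    intro u
    have hd : deriv (fun u => K * Real.sin u) u = K * Real.cos u :=
      ((Real.hasDerivAt_sin u).const_mul K).deriv
    rw [hd, ← NNReal.coe_le_coe]
    simp only [coe_nnnorm, Real.norm_eq_abs, abs_mul]
    calc |K| * |Real.cos u| ≤ |K| * 1 :=
          mul_le_mul_of_nonneg_left (Real.abs_cos_le_one u) (abs_nonneg K)
      _ = |K| := mul_one _
  -- z never reaches a constant equilibrium
  have huniq : ∀ c : ℝ, Real.sin c = 0 → ∀ t₁, z t₁ = c → z 0 = c := by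
    intro c hc t₁ ht₁
    have key : Set.EqOn z (fun _ => c) (Set.Icc (min t₁ 0 - 1) (max t₁ 0 + 1)) := by
      apply ODE_solution_unique_of_mem_Icc
        (v := fun _ u => K * Real.sin u) (s := fun _ => Set.univ)
        (fun _ _ => hlip.lipschitzOnWith)
        (t₀ := t₁)
      · constructor
        · have : min t₁ 0 ≤ t₁ := min_le_left _ _
          linarith
        · have : t₁ ≤ max t₁ 0 := le_max_left _ _
          linarith
      · exact hzc.continuousOn
      · exact fun t _ => hz' t
      · exact fun t _ => Set.mem_univ _
      · exact continuousOn_const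
      · intro t _
        simpa [hc] using (hasDerivAt_const t c)
      · exact fun t _ => Set.mem_univ _
      · exact ht₁
    have h0 : (0 : ℝ) ∈ Set.Icc (min t₁ 0 - 1) (max t₁ 0 + 1) := by
      constructor
      · have : min t₁ 0 ≤ 0 := min_le_right _ _
        linarith
      · have : (0:ℝ) ≤ max t₁ 0 := le_max_right _ _
        linarith
    exact key h0
  have hne0 : ∀ t, z t ≠ 0 := fun t h => by
    have := huniq 0 Real.sin_zero t h
    exact absurd this (ne_of_gt hz0.1)
  have hnepi : ∀ t, z t ≠ Real.pi := fun t h => by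
    have := huniq Real.pi Real.sin_pi t h
    exact absurd this (ne_of_lt hz0.2)
  -- invariance of (0, π)
  have hzI : ∀ t, z t ∈ Set.Ioo 0 Real.pi := by
    intro t
    by_contra h
    rw [Set.mem_Ioo, not_and_or] at h
    rcases h with h | h
    · push_neg at h
      have h0 : (0:ℝ) ∈ Set.uIcc (z 0) (z t) :=
        Set.mem_uIcc.2 (Or.inr ⟨h, le_of_lt hz0.1⟩)
      obtain ⟨s, _, hs⟩ := intermediate_value_uIcc (hzc.continuousOn (s := Set.uIcc 0 t)) h0
      exact hne0 s hs
    · push_neg at h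
      have h0 : Real.pi ∈ Set.uIcc (z 0) (z t) :=
        Set.mem_uIcc.2 (Or.inl ⟨le_of_lt hz0.2, h⟩)
      obtain ⟨s, _, hs⟩ := intermediate_value_uIcc (hzc.continuousOn (s := Set.uIcc 0 t)) h0
      exact hnepi s hs
  refine ⟨hzI, ?_⟩
  -- half-angle facts
  have hhalf : ∀ t, z t / 2 ∈ Set.Ioo 0 (Real.pi / 2) := fun t =>
    ⟨by linarith [(hzI t).1], by linarith [(hzI t).2]⟩
  have hcos : ∀ t, 0 < Real.cos (z t / 2) := fun t =>
    Real.cos_pos_of_mem_Ioo ⟨by linarith [(hhalf t).1, Real.pi_pos], (hhalf t).2⟩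
  have hsin : ∀ t, 0 < Real.sin (z t / 2) := fun t =>
    Real.sin_pos_of_pos_of_lt_pi (hhalf t).1 (by linarith [(hhalf t).2, Real.pi_pos])
  have htan : ∀ t, 0 < Real.tan (z t / 2) := fun t => by
    rw [Real.tan_eq_sin_div_cos]
    exact div_pos (hsin t) (hcos t)
  -- w = log (tan (z/2)) has derivative K
  set w : ℝ → ℝ := fun t => Real.log (Real.tan (z t / 2)) with hw
  have hw' : ∀ t, HasDerivAt w K t := by
    intro t
    have h1 : HasDerivAt (fun t => z t / 2) (K * Real.sin (z t) / 2) t := (hz' t).div_const 2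
    have h2 : HasDerivAt Real.tan (1 / Real.cos (z t / 2) ^ 2) (z t / 2) :=
      Real.hasDerivAt_tan (ne_of_gt (hcos t))
    have h3 := h2.comp t h1
    have h4 : HasDerivAt Real.log (Real.tan (z t / 2))⁻¹ (Real.tan (z t / 2)) :=
      Real.hasDerivAt_log (ne_of_gt (htan t))
    have h5 := h4.comp t h3
    refine h5.congr_deriv ?_
    have hs2 : Real.sin (z t) = 2 * Real.sin (z t / 2) * Real.cos (z t / 2) := by
      rw [← Real.sin_two_mul]; congr 1; ring
    rw [Real.tan_eq_sin_div_cos, hs2]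
    have hc := ne_of_gt (hcos t)
    have hsn := ne_of_gt (hsin t)
    field_simp
  -- hence w t = K t + w 0
  have hwlin : ∀ t, w t = K * t + w 0 := by
    intro t
    have hg : ∀ s, HasDerivAt (fun s => w s - K * s) 0 s := by
      intro s
      have := (hw' s).sub ((hasDerivAt_id s).const_mul K)
      exact this.congr_deriv (by ring)
    have hconst : ∀ a b : ℝ, (fun s => w s - K * s) a = (fun s => w s - K * s) b :=
      is_const_of_deriv_eq_zero (fun s => (hg s).differentiableAt) (fun s => (hg s).deriv)
    have := hconst t 0
    simp only [mul_zero, sub_zero] at this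
    linarith
  have hzeq : ∀ t, z t = 2 * Real.arctan (Real.exp (K * t + w 0)) := by
    intro t
    have h1 : Real.tan (z t / 2) = Real.exp (K * t + w 0) := by
      rw [← hwlin t, hw, Real.exp_log (htan t)]
    rw [← h1, Real.arctan_tan (by linarith [(hhalf t).1, Real.pi_pos]) (hhalf t).2]
    ring
  have hzfun : z = fun t => 2 * Real.arctan (Real.exp (K * t + w 0)) := funext hzeq
  have harct : Tendsto Real.arctan atTop (nhds (Real.pi / 2)) :=
    Real.tendsto_arctan_atTop.mono_right nhdsWithin_le_nhds
  have harc0 : Tendsto Real.arctan (nhds 0) (nhds 0) := by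
    simpa using (Real.continuous_arctan.tendsto 0)
  constructor
  · -- K > 0
    intro hKpos
    have hlinTop : Tendsto (fun t => K * t + w 0) atTop atTop :=
      tendsto_atTop_add_const_right _ _ (tendsto_id.const_mul_atTop hKpos)
    have hlinBot : Tendsto (fun t => K * t + w 0) atBot atBot :=
      tendsto_atBot_add_const_right _ _ ((tendsto_const_mul_atBot_of_pos hKpos).2 tendsto_id)
    constructor
    · rw [hzfun]
      have := (harct.comp (Real.tendsto_exp_atTop.comp hlinTop)).const_mul (2:ℝ)
      simpa [Function.comp, mul_div_cancel₀] using this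
    · rw [hzfun]
      have hexp := Real.tendsto_exp_atBot.comp hlinBot
      have := (harc0.comp hexp).const_mul (2:ℝ)
      simpa [Function.comp] using this
  · -- K < 0
    intro hKneg
    have hlinTop : Tendsto (fun t => K * t + w 0) atTop atBot :=
      tendsto_atBot_add_const_right _ _ ((tendsto_const_mul_atBot_of_neg hKneg).2 tendsto_id)
    have hlinBot : Tendsto (fun t => K * t + w 0) atBot atTop :=
      tendsto_atTop_add_const_right _ _ ((tendsto_const_mul_atTop_of_neg hKneg).2 tendsto_id)
    constructor
    · rw [hzfun]
      have hexp := Real.tendsto_exp_atBot.comp hlinTop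
      have := (harc0.comp hexp).const_mul (2:ℝ)
      simpa [Function.comp] using this
    · rw [hzfun]
      have := (harct.comp (Real.tendsto_exp_atTop.comp hlinBot)).const_mul (2:ℝ)
      simpa [Function.comp, mul_div_cancel₀] using this
end

section
/- Let $\lambda \neq 0$ be a real constant, let $h_{11}, h_{12}, h_{22} : \mathbb{R}^2 \to \mathbb{R}$ be smooth functions with $D := h_{11}h_{22} - h_{12}^2 > 0$ everywhere, and let $u, v, w : \mathbb{R}^2 \to \mathbb{R}$ be smooth functions satisfying the system: (i) $\lambda\sqrt{D}\, w = \partial_x(h_{12}u + h_{22}v) - \partial_y(h_{11}u + h_{12}v)$; (ii) $-\lambda\sqrt{D}\, v = \partial_x w$; (iii) $\lambda\sqrt{D}\, u = \partial_y w$. Then $w$ satisfies $\Delta_h w = -\lambda^2 w$, where $\Delta_h$ is the second-order operator $\Delta_h f = \frac{1}{\sqrt{D}}\left[\partial_x\!\left(\frac{h_{22}\partial_x f - h_{12}\partial_y f}{\sqrt{D}}\right) + \partial_y\!\left(\frac{h_{11}\partial_y f - h_{12}\partial_x f}{\sqrt{D}}\right)\right]$. -/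
open Real

/-- Partial derivative in the first variable of a function on `ℝ × ℝ`. -/
noncomputable def pdx (f : ℝ × ℝ → ℝ) : ℝ × ℝ → ℝ := fun p => fderiv ℝ f p (1, 0)

/-- Partial derivative in the second variable of a function on `ℝ × ℝ`. -/
noncomputable def pdy (f : ℝ × ℝ → ℝ) : ℝ × ℝ → ℝ := fun p => fderiv ℝ f p (0, 1)

theorem stmt5 (lam : ℝ) (hlam : lam ≠ 0)
    (h11 h12 h22 u v w : ℝ × ℝ → ℝ)
    (hh11 : ContDiff ℝ (⊤ : ℕ∞) h11) (hh12 : ContDiff ℝ (⊤ : ℕ∞) h12) (hh22 : ContDiff ℝ (⊤ : ℕ∞) h22)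
    (hu : ContDiff ℝ (⊤ : ℕ∞) u) (hv : ContDiff ℝ (⊤ : ℕ∞) v) (hw : ContDiff ℝ (⊤ : ℕ∞) w)
    (D : ℝ × ℝ → ℝ) (hD : ∀ q, D q = h11 q * h22 q - h12 q ^ 2)
    (hDpos : ∀ q, 0 < D q)
    (eq1 : ∀ p, lam * Real.sqrt (D p) * w p =
      pdx (fun q => h12 q * u q + h22 q * v q) p -
      pdy (fun q => h11 q * u q + h12 q * v q) p)
    (eq2 : ∀ p, -(lam * Real.sqrt (D p)) * v p = pdx w p)
    (eq3 : ∀ p, lam * Real.sqrt (D p) * u p = pdy w p) :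
    ∀ p, (1 / Real.sqrt (D p)) *
      (pdx (fun q => (h22 q * pdx w q - h12 q * pdy w q) / Real.sqrt (D q)) p +
       pdy (fun q => (h11 q * pdy w q - h12 q * pdx w q) / Real.sqrt (D q)) p)
      = -lam ^ 2 * w p := by
  intro p
  have hSne : ∀ q, Real.sqrt (D q) ≠ 0 := fun q =>
    ne_of_gt (Real.sqrt_pos.mpr (hDpos q))
  have hf1 : (fun q => (h22 q * pdx w q - h12 q * pdy w q) / Real.sqrt (D q)) =
      fun q => -lam * (h12 q * u q + h22 q * v q) := by
    funext q
    rw [← eq2 q, ← eq3 q]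
    field_simp [hSne q]
    ring
  have hf2 : (fun q => (h11 q * pdy w q - h12 q * pdx w q) / Real.sqrt (D q)) =
      fun q => lam * (h11 q * u q + h12 q * v q) := by
    funext q
    rw [← eq2 q, ← eq3 q]
    field_simp [hSne q]
    ring
  have hd1 : DifferentiableAt ℝ (fun q => h12 q * u q + h22 q * v q) p :=
    (((hh12.mul hu).add (hh22.mul hv)).differentiable (by simp)) p
  have hd2 : DifferentiableAt ℝ (fun q => h11 q * u q + h12 q * v q) p :=
    (((hh11.mul hu).add (hh12.mul hv)).differentiable (by simp)) p
  have e1 : pdx (fun q => (h22 q * pdx w q - h12 q * pdy w q) / Real.sqrt (D q)) p =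
      -lam * pdx (fun q => h12 q * u q + h22 q * v q) p := by
    rw [hf1]
    simp only [pdx, fderiv_const_mul hd1]
    simp
  have e2 : pdy (fun q => (h11 q * pdy w q - h12 q * pdx w q) / Real.sqrt (D q)) p =
      lam * pdy (fun q => h11 q * u q + h12 q * v q) p := by
    rw [hf2]
    simp only [pdy, fderiv_const_mul hd2]
    simp
  rw [e1, e2]
  have key : -lam * pdx (fun q => h12 q * u q + h22 q * v q) p +
      lam * pdy (fun q => h11 q * u q + h12 q * v q) p =
      -lam * (lam * Real.sqrt (D p) * w p) := by
    rw [eq1 p]; ring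
  rw [key]
  field_simp [hSne p]
end

section
/- Let $\lambda \neq 0$ be a real constant, let $H, h_{11}, h_{12}, h_{22} : \mathbb{R}^2 \to \mathbb{R}$ be $C^2$ functions with $D := h_{11}h_{22} - h_{12}^2 > 0$ everywhere, and define the vector field $X : \mathbb{R}^3 \to \mathbb{R}^3$ by $X(x,y,z) = \left(-\frac{\partial_y H(x,y)}{\lambda\sqrt{D(x,y)}},\; \frac{\partial_x H(x,y)}{\lambda\sqrt{D(x,y)}},\; -z\,H(x,y)\right)$. Let $p = (x_0,y_0)$ be a critical point of $H$ (i.e., $\partial_x H(p) = \partial_y H(p) = 0$), and let $M \in \mathrm{M}_3(\mathbb{R})$ be the total derivative of $X$ at $(x_0,y_0,0)$. Then the characteristic polynomial of $M$ is $\det(tI - M) = (t + H(p))\left(t^2 + \frac{\partial_{xx}H(p)\,\partial_{yy}H(p) - (\partial_{xy}H(p))^2}{\lambda^2 D(p)}\right)$; in particular, the complex eigenvalues of $M$ are $-H(p)$ and $\pm\sqrt{-\mathrm{Hess}\,H(p)/(\lambda^2 D(p))}$, where $\mathrm{Hess}\,H = \partial_{xx}H\,\partial_{yy}H - (\partial_{xy}H)^2$.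 -/
open Real Polynomial

private theorem charpoly3 (B Dy A Hp c E : ℝ) (hc : c ≠ 0)
    (hE : E = (A * Dy - B ^ 2) / c ^ 2) :
    (Matrix.of ![![-B/c, -Dy/c, 0], ![A/c, B/c, 0], ![0,0,-Hp]]).charpoly
      = (X + C Hp) * (X ^ 2 + C E) := by
  have hEc : E = A/c * (Dy/c) - B/c * (B/c) := by rw [hE]; field_simp
  rw [Matrix.charpoly, Matrix.det_fin_three]
  simp only [Matrix.charmatrix_apply, Matrix.diagonal_apply, Fin.isValue, Matrix.of_apply,
    Matrix.cons_val', Matrix.cons_val_zero, Matrix.cons_val_one, Matrix.head_cons,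
    Matrix.empty_val', Matrix.cons_val_fin_one, Matrix.cons_val_two, Matrix.tail_cons,
    Fin.reduceEq, if_true, if_false, reduceIte, ite_true, ite_false, map_zero, sub_zero,
    zero_sub, neg_neg]
  simp only [Matrix.vecHead]
  rw [hEc]
  simp only [neg_div, Polynomial.C_neg, Polynomial.C_mul, Polynomial.C_sub, Polynomial.C_add,
    map_div₀]
  ring

set_option maxHeartbeats 1000000 in
theorem stmt7 (lam : ℝ) (hlam : lam ≠ 0)
    (H h11 h12 h22 : ℝ × ℝ → ℝ)
    (hH : ContDiff ℝ 2 H) (hh11 : ContDiff ℝ 2 h11) (hh12 : ContDiff ℝ 2 h12)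
    (hh22 : ContDiff ℝ 2 h22)
    (D : ℝ × ℝ → ℝ) (hD : ∀ q, D q = h11 q * h22 q - h12 q ^ 2)
    (hDpos : ∀ q, 0 < D q)
    (X : (Fin 3 → ℝ) → (Fin 3 → ℝ))
    (hX : ∀ p : Fin 3 → ℝ,
      X p = ![ -(pdy H (p 0, p 1)) / (lam * Real.sqrt (D (p 0, p 1))),
               pdx H (p 0, p 1) / (lam * Real.sqrt (D (p 0, p 1))),
               -(p 2) * H (p 0, p 1) ])
    (x₀ y₀ : ℝ) (p : ℝ × ℝ) (hp : p = (x₀, y₀))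
    (hcx : pdx H p = 0) (hcy : pdy H p = 0)
    (M : Matrix (Fin 3) (Fin 3) ℝ)
    (hM : M = LinearMap.toMatrix'
      ((fderiv ℝ X ![x₀, y₀, 0]) : (Fin 3 → ℝ) →ₗ[ℝ] (Fin 3 → ℝ))) :
    M.charpoly =
      (Polynomial.X + Polynomial.C (H p)) *
      (Polynomial.X ^ 2 + Polynomial.C
        ((pdx (pdx H) p * pdy (pdy H) p - (pdx (pdy H) p) ^ 2) / (lam ^ 2 * D p))) ∧
    ∃ s : ℂ,
      s ^ 2 = -(((pdx (pdx H) p * pdy (pdy H) p - (pdx (pdy H) p) ^ 2)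
          / (lam ^ 2 * D p) : ℝ) : ℂ) ∧
      ∀ μ : ℂ, (Matrix.charpoly (M.map (algebraMap ℝ ℂ))).IsRoot μ ↔
        μ = -((H p : ℝ) : ℂ) ∨ μ = s ∨ μ = -s := by
  classical
  subst hp
  set q₀ : ℝ × ℝ := (x₀, y₀) with hq₀
  have hsqpos : 0 < Real.sqrt (D q₀) := Real.sqrt_pos.2 (hDpos q₀)
  have hc : lam * Real.sqrt (D q₀) ≠ 0 := mul_ne_zero hlam (ne_of_gt hsqpos)
  have hDc : ContDiff ℝ 2 D := by
    have : D = fun q => h11 q * h22 q - h12 q ^ 2 := funext hD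
    rw [this]; exact (hh11.mul hh22).sub (hh12.pow 2)
  -- differentiability of pieces
  have hfd : ContDiff ℝ 1 (fderiv ℝ H) := hH.fderiv_right (by norm_num)
  have hpdy : ContDiff ℝ 1 (pdy H) := hfd.clm_apply contDiff_const
  have hpdx : ContDiff ℝ 1 (pdx H) := hfd.clm_apply contDiff_const
  have hs : DifferentiableAt ℝ (fun q => lam * Real.sqrt (D q)) q₀ :=
    (((hDc.differentiable (by norm_num)) q₀).sqrt (ne_of_gt (hDpos q₀))).const_mul lam
  have hinv : DifferentiableAt ℝ (fun q => (lam * Real.sqrt (D q))⁻¹) q₀ := hs.inv hc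
  set W : (ℝ × ℝ) →L[ℝ] ℝ := fderiv ℝ (fun q => (lam * Real.sqrt (D q))⁻¹) q₀ with hW
  -- Schwarz symmetry
  have h2nd : HasFDerivAt (fderiv ℝ H) (fderiv ℝ (fderiv ℝ H) q₀) q₀ :=
    ((hfd.differentiable (by norm_num)) q₀).hasFDerivAt
  have key : ∀ v w, fderiv ℝ (fderiv ℝ H) q₀ v w = fderiv ℝ (fderiv ℝ H) q₀ w v :=
    second_derivative_symmetric (fun y => ((hH.differentiable (by norm_num)) y).hasFDerivAt) h2nd
  have e1 : HasFDerivAt (pdy H)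
      ((ContinuousLinearMap.apply ℝ ℝ ((0:ℝ),(1:ℝ))).comp (fderiv ℝ (fderiv ℝ H) q₀)) q₀ :=
    ((ContinuousLinearMap.apply ℝ ℝ ((0:ℝ),(1:ℝ))).hasFDerivAt).comp q₀ h2nd
  have e2 : HasFDerivAt (pdx H)
      ((ContinuousLinearMap.apply ℝ ℝ ((1:ℝ),(0:ℝ))).comp (fderiv ℝ (fderiv ℝ H) q₀)) q₀ :=
    ((ContinuousLinearMap.apply ℝ ℝ ((1:ℝ),(0:ℝ))).hasFDerivAt).comp q₀ h2nd
  have hsymm : pdy (pdx H) q₀ = pdx (pdy H) q₀ := by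
    simp only [pdx, pdy, e1.fderiv, e2.fderiv, ContinuousLinearMap.comp_apply,
      ContinuousLinearMap.apply_apply]
    exact (key (0,1) (1,0))
  -- component derivatives
  have hnum0 : HasFDerivAt (fun q => -(pdy H q)) (-(fderiv ℝ (pdy H) q₀)) q₀ :=
    (((hpdy.differentiable (by norm_num)) q₀).hasFDerivAt).neg
  have h0 : HasFDerivAt (fun q => -(pdy H q) / (lam * Real.sqrt (D q)))
      ((lam * Real.sqrt (D q₀))⁻¹ • (-(fderiv ℝ (pdy H) q₀))) q₀ := by
    have h := hnum0.mul hinv.hasFDerivAt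
    simp only [div_eq_mul_inv]
    simpa [hcy, ← hW, Pi.mul_def] using h
  have hnum1 : HasFDerivAt (pdx H) (fderiv ℝ (pdx H) q₀) q₀ :=
    ((hpdx.differentiable (by norm_num)) q₀).hasFDerivAt
  have h1 : HasFDerivAt (fun q => pdx H q / (lam * Real.sqrt (D q)))
      ((lam * Real.sqrt (D q₀))⁻¹ • fderiv ℝ (pdx H) q₀) q₀ := by
    have h := hnum1.mul hinv.hasFDerivAt
    simp only [div_eq_mul_inv]
    simpa [hcx, ← hW, Pi.mul_def] using h
  set pr : (Fin 3 → ℝ) →L[ℝ] ℝ × ℝ :=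
    (ContinuousLinearMap.proj 0).prod (ContinuousLinearMap.proj 1) with hpr
  set v₀ : Fin 3 → ℝ := ![x₀, y₀, 0] with hv₀
  have hprv₀ : pr v₀ = q₀ := by simp [hpr, hv₀, hq₀]
  have hz : HasFDerivAt (fun v : Fin 3 → ℝ => -(v 2))
      (-(ContinuousLinearMap.proj (R := ℝ) (φ := fun _ : Fin 3 => ℝ) 2)) v₀ :=
    (hasFDerivAt_apply 2 v₀).neg
  have hHcomp : HasFDerivAt (fun v : Fin 3 → ℝ => H (pr v)) ((fderiv ℝ H q₀).comp pr) v₀ :=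
    (((hH.differentiable (by norm_num)) q₀).hasFDerivAt).comp v₀ pr.hasFDerivAt
  have h2 : HasFDerivAt (fun v : Fin 3 → ℝ => -(v 2) * H (pr v))
      ((H q₀) • (-(ContinuousLinearMap.proj (R := ℝ) (φ := fun _ : Fin 3 => ℝ) 2))) v₀ := by
    have h := hz.mul hHcomp
    have hv2 : v₀ 2 = 0 := by simp [hv₀]
    simpa [hv2, hprv₀, Pi.mul_def] using h
  set Φ' : (Fin 3 → ℝ) →L[ℝ] (Fin 3 → ℝ) := ContinuousLinearMap.pi
    ![(((lam * Real.sqrt (D q₀))⁻¹ • (-(fderiv ℝ (pdy H) q₀)))).comp pr,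
      (((lam * Real.sqrt (D q₀))⁻¹ • fderiv ℝ (pdx H) q₀)).comp pr,
      (H q₀) • (-(ContinuousLinearMap.proj (R := ℝ) (φ := fun _ : Fin 3 => ℝ) 2))] with hΦ'
  have hXd : HasFDerivAt X Φ' v₀ := by
    rw [hasFDerivAt_pi']
    intro i
    fin_cases i
    · show HasFDerivAt (fun v => X v 0) ((ContinuousLinearMap.proj (0 : Fin 3)).comp Φ') v₀
      have : (fun v : Fin 3 → ℝ => X v 0)
          = (fun q => -(pdy H q) / (lam * Real.sqrt (D q))) ∘ pr := by
        funext v; rw [hX]; simp [hpr]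
      rw [this, hΦ', ContinuousLinearMap.proj_pi]
      exact (by simpa [hprv₀] using h0.comp v₀ pr.hasFDerivAt)
    · show HasFDerivAt (fun v => X v 1) ((ContinuousLinearMap.proj (1 : Fin 3)).comp Φ') v₀
      have : (fun v : Fin 3 → ℝ => X v 1)
          = (fun q => pdx H q / (lam * Real.sqrt (D q))) ∘ pr := by
        funext v; rw [hX]; simp [hpr]
      rw [this, hΦ', ContinuousLinearMap.proj_pi]
      exact (by simpa [hprv₀] using h1.comp v₀ pr.hasFDerivAt)
    · show HasFDerivAt (fun v => X v 2) ((ContinuousLinearMap.proj (2 : Fin 3)).comp Φ') v₀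
      have : (fun v : Fin 3 → ℝ => X v 2)
          = (fun v : Fin 3 → ℝ => -(v 2) * H (pr v)) := by
        funext v; rw [hX]; simp [hpr]
      rw [this, hΦ', ContinuousLinearMap.proj_pi]
      exact h2
  -- the explicit matrix
  set c : ℝ := lam * Real.sqrt (D q₀) with hcdef
  set A : ℝ := pdx (pdx H) q₀ with hA
  set B : ℝ := pdx (pdy H) q₀ with hB
  set Dy : ℝ := pdy (pdy H) q₀ with hDy
  set Hp : ℝ := H q₀ with hHp
  have hMexp : M = Matrix.of ![![-B/c, -Dy/c, 0], ![A/c, B/c, 0], ![0,0,-Hp]] := by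
    rw [hM, hXd.fderiv]
    ext i j
    rw [LinearMap.toMatrix'_apply]
    fin_cases i <;> fin_cases j <;>
      · simp only [hΦ', hpr, ContinuousLinearMap.pi_apply, Matrix.cons_val', Matrix.cons_val_zero,
          Matrix.cons_val_one, Matrix.cons_val_two, Matrix.head_cons, Matrix.tail_cons,
          Matrix.empty_val', Matrix.cons_val_fin_one, Matrix.of_apply,
          ContinuousLinearMap.coe_coe, ContinuousLinearMap.comp_apply,
          ContinuousLinearMap.smul_apply, ContinuousLinearMap.neg_apply,
          ContinuousLinearMap.prod_apply, ContinuousLinearMap.proj_apply,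
          Fin.isValue, Fin.reduceEq, if_true, if_false, reduceIte, ite_true, ite_false]
        try simp only [Prod.mk_zero_zero, map_zero, Matrix.vecHead, Matrix.vecTail]
        try simp only [pdx, pdy, smul_eq_mul, hA, hB, hDy, hHp, hcdef]
        try ring_nf
        try simp
        try exact Or.inl hsymm
        try exact Or.inr (ContinuousLinearMap.map_zero _)
  have hc2 : lam ^ 2 * D q₀ = c ^ 2 := by
    rw [hcdef, mul_pow, Real.sq_sqrt (le_of_lt (hDpos q₀))]
  have hEeq : (A * Dy - B ^ 2) / (lam ^ 2 * D q₀) = (A * Dy - B ^ 2) / c ^ 2 := by rw [hc2]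
  set E : ℝ := (A * Dy - B ^ 2) / (lam ^ 2 * D q₀) with hE
  have hcharR : M.charpoly = (Polynomial.X + C Hp) * (Polynomial.X ^ 2 + C E) := by
    rw [hMexp]; exact charpoly3 B Dy A Hp c E hc hEeq
  refine ⟨hcharR, ?_⟩
  obtain ⟨s, hs⟩ := IsAlgClosed.exists_pow_nat_eq (-(E : ℂ)) (n := 2) (by norm_num)
  refine ⟨s, by exact_mod_cast hs, ?_⟩
  intro μ
  have hmap : (M.map (algebraMap ℝ ℂ)).charpoly
      = (Polynomial.X + C (Hp : ℂ)) * (Polynomial.X ^ 2 + C (E : ℂ)) := by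
    rw [Matrix.charpoly_map, hcharR]
    simp [Polynomial.map_mul, Polynomial.map_add, Polynomial.map_pow]
  rw [hmap]
  simp only [IsRoot.def, eval_mul, eval_add, eval_pow, eval_X, eval_C, mul_eq_zero]
  constructor
  · rintro (h | h)
    · left; linear_combination h
    · right
      have : (μ - s) * (μ + s) = 0 := by linear_combination h - hs
      rcases mul_eq_zero.1 this with h' | h'
      · left; linear_combination h'
      · right; linear_combination h'
  · rintro (h | h | h)
    · left; rw [h]; ring
    · right; rw [h]; linear_combination hs
    · right; rw [h]; linear_combination hs
end

section
/- Let $\lambda \neq 0$ be a real constant, let $H, h_{11}, h_{12}, h_{22} : \mathbb{R}^2 \to \mathbb{R}$ be $C^2$ functions with $D := h_{11}h_{22} - h_{12}^2 > 0$ everywhere, and define the vector field $X : \mathbb{R}^3 \to \mathbb{R}^3$ by $X(x,y,z) = \left(-\frac{\partial_y H(x,y)}{\lambda\sqrt{D(x,y)}},\; \frac{\partial_x H(x,y)}{\lambda\sqrt{D(x,y)}},\; -z\,H(x,y)\right)$. Let $p = (x_0,y_0)$ be a critical point of $H$, and let $M$ be the total derivative of $X$ at $(x_0,y_0,0)$.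 Then $\det M = -\frac{H(p)\,\left(\partial_{xx}H(p)\,\partial_{yy}H(p) - (\partial_{xy}H(p))^2\right)}{\lambda^2 D(p)}$. In particular, if $H(p) \neq 0$ and $p$ is a nondegenerate critical point of $H$, then $M$ is invertible, i.e., $(x_0,y_0,0)$ is a nondegenerate zero of $X$. -/
open Real

set_option maxHeartbeats 1000000 in
theorem stmt8 (lam : ℝ) (hlam : lam ≠ 0)
    (H h11 h12 h22 : ℝ × ℝ → ℝ)
    (hH : ContDiff ℝ 2 H) (hh11 : ContDiff ℝ 2 h11) (hh12 : ContDiff ℝ 2 h12)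
    (hh22 : ContDiff ℝ 2 h22)
    (D : ℝ × ℝ → ℝ) (hD : ∀ q, D q = h11 q * h22 q - h12 q ^ 2)
    (hDpos : ∀ q, 0 < D q)
    (X : (Fin 3 → ℝ) → (Fin 3 → ℝ))
    (hX : ∀ p : Fin 3 → ℝ,
      X p = ![ -(pdy H (p 0, p 1)) / (lam * Real.sqrt (D (p 0, p 1))),
               pdx H (p 0, p 1) / (lam * Real.sqrt (D (p 0, p 1))),
               -(p 2) * H (p 0, p 1) ])
    (x₀ y₀ : ℝ) (p : ℝ × ℝ) (hp : p = (x₀, y₀))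
    (hcx : pdx H p = 0) (hcy : pdy H p = 0)
    (M : Matrix (Fin 3) (Fin 3) ℝ)
    (hM : M = LinearMap.toMatrix'
      ((fderiv ℝ X ![x₀, y₀, 0]) : (Fin 3 → ℝ) →ₗ[ℝ] (Fin 3 → ℝ))) :
    M.det = -(H p * (pdx (pdx H) p * pdy (pdy H) p - (pdx (pdy H) p) ^ 2))
        / (lam ^ 2 * D p) ∧
    (H p ≠ 0 → pdx (pdx H) p * pdy (pdy H) p - (pdx (pdy H) p) ^ 2 ≠ 0 → IsUnit M) := by
  subst hp
  -- basic differentiability facts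
  have h1 : ContDiff ℝ 1 (fderiv ℝ H) := hH.fderiv_right (by norm_num)
  have hdH : Differentiable ℝ H := hH.differentiable two_ne_zero
  have hdfH : DifferentiableAt ℝ (fderiv ℝ H) (x₀, y₀) := (h1.differentiable one_ne_zero) _
  have hpdx : Differentiable ℝ (pdx H) :=
    fun q => ((h1.differentiable one_ne_zero) q).clm_apply (differentiableAt_const _)
  have hpdy : Differentiable ℝ (pdy H) :=
    fun q => ((h1.differentiable one_ne_zero) q).clm_apply (differentiableAt_const _)
  -- symmetry of second derivatives
  have hsymm : pdy (pdx H) (x₀, y₀) = pdx (pdy H) (x₀, y₀) := by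
    have hs := second_derivative_symmetric
      (fun y => (hdH y).hasFDerivAt) hdfH.hasFDerivAt (0,1) (1,0)
    have e1 : pdx (pdy H) (x₀, y₀) = fderiv ℝ (fderiv ℝ H) (x₀, y₀) (1,0) (0,1) := by
      show fderiv ℝ (fun q => fderiv ℝ H q (0,1)) (x₀, y₀) (1,0) = _
      rw [fderiv_clm_apply hdfH (differentiableAt_const _)]; simp
    have e2 : pdy (pdx H) (x₀, y₀) = fderiv ℝ (fderiv ℝ H) (x₀, y₀) (0,1) (1,0) := by
      show fderiv ℝ (fun q => fderiv ℝ H q (1,0)) (x₀, y₀) (0,1) = _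
      rw [fderiv_clm_apply hdfH (differentiableAt_const _)]; simp
    rw [e1, e2, hs]
  -- denominator
  have hDdiff : DifferentiableAt ℝ D (x₀, y₀) := by
    rw [funext hD]
    exact (((hh11.differentiable two_ne_zero) _).mul ((hh22.differentiable two_ne_zero) _)).sub
      (((hh12.differentiable two_ne_zero) _).pow 2)
  have hDne : D (x₀, y₀) ≠ 0 := (hDpos _).ne'
  have hsq : Real.sqrt (D (x₀, y₀)) ≠ 0 := (Real.sqrt_pos.2 (hDpos _)).ne'
  set c : ℝ := lam * Real.sqrt (D (x₀, y₀)) with hcdef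
  have hc : c ≠ 0 := mul_ne_zero hlam hsq
  have hc2 : c ^ 2 = lam ^ 2 * D (x₀, y₀) := by
    rw [hcdef, mul_pow, Real.sq_sqrt (hDpos _).le]
  have hden : HasFDerivAt (fun q => lam * Real.sqrt (D q))
      (fderiv ℝ (fun q => lam * Real.sqrt (D q)) (x₀, y₀)) (x₀, y₀) :=
    (((hDdiff.sqrt hDne).const_mul lam)).hasFDerivAt
  set ℓd := fderiv ℝ (fun q => lam * Real.sqrt (D q)) (x₀, y₀) with hℓd
  have hinv : HasFDerivAt (fun q => (lam * Real.sqrt (D q))⁻¹) ((-(c^2)⁻¹) • ℓd) (x₀, y₀) :=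
    (hasDerivAt_inv hc).comp_hasFDerivAt (x₀, y₀) hden
  set ℓA := fderiv ℝ (pdx H) (x₀, y₀) with hℓA
  set ℓC := fderiv ℝ (pdy H) (x₀, y₀) with hℓC
  -- derivative of first component on the base
  have hg0 : HasFDerivAt (fun q : ℝ × ℝ => -(pdy H q) / (lam * Real.sqrt (D q)))
      (c⁻¹ • (-ℓC)) (x₀, y₀) := by
    have h := (hpdy _).hasFDerivAt.neg.mul hinv
    rw [Pi.neg_apply, hcy, neg_zero, zero_smul, zero_add] at h
    simpa only [div_eq_mul_inv, ← hcdef, Pi.mul_def, Pi.neg_apply] using h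
  have hg1 : HasFDerivAt (fun q : ℝ × ℝ => pdx H q / (lam * Real.sqrt (D q)))
      (c⁻¹ • ℓA) (x₀, y₀) := by
    have h := (hpdx _).hasFDerivAt.mul hinv
    rw [hcx, zero_smul, zero_add] at h
    simpa only [div_eq_mul_inv, ← hcdef, Pi.mul_def] using h
  -- projection to the base
  set pr : (Fin 3 → ℝ) →L[ℝ] ℝ × ℝ :=
    (ContinuousLinearMap.proj 0).prod (ContinuousLinearMap.proj 1) with hprdef
  have hpr : HasFDerivAt (fun q : Fin 3 → ℝ => (q 0, q 1)) pr ![x₀, y₀, 0] :=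
    (hasFDerivAt_apply 0 _).prodMk (hasFDerivAt_apply 1 _)
  -- full component derivatives
  have h0 : HasFDerivAt (fun q : Fin 3 → ℝ =>
      -(pdy H (q 0, q 1)) / (lam * Real.sqrt (D (q 0, q 1))))
      ((c⁻¹ • (-ℓC)).comp pr) ![x₀, y₀, 0] :=
    by have := hg0.comp ![x₀, y₀, 0] hpr; exact this
  have h1' : HasFDerivAt (fun q : Fin 3 → ℝ =>
      pdx H (q 0, q 1) / (lam * Real.sqrt (D (q 0, q 1))))
      ((c⁻¹ • ℓA).comp pr) ![x₀, y₀, 0] :=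
    by have := hg1.comp ![x₀, y₀, 0] hpr; exact this
  have h2 : HasFDerivAt (fun q : Fin 3 → ℝ => -(q 2) * H (q 0, q 1))
      ((H (x₀, y₀)) • (-(ContinuousLinearMap.proj 2 : (Fin 3 → ℝ) →L[ℝ] ℝ))) ![x₀, y₀, 0] := by
    have ha : HasFDerivAt (fun q : Fin 3 → ℝ => -(q 2))
        (-(ContinuousLinearMap.proj 2 : (Fin 3 → ℝ) →L[ℝ] ℝ)) ![x₀, y₀, 0] :=
      (hasFDerivAt_apply 2 _).neg
    have hb : HasFDerivAt (fun q : Fin 3 → ℝ => H (q 0, q 1))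
        ((fderiv ℝ H (x₀, y₀)).comp pr) ![x₀, y₀, 0] :=
      (hdH (x₀, y₀)).hasFDerivAt.comp ![x₀, y₀, 0] hpr
    have h := ha.mul hb
    have hz : -(![x₀, y₀, (0:ℝ)] 2) = 0 := by simp
    rw [hz, zero_smul, zero_add] at h
    exact h
  -- total derivative
  set L : (Fin 3 → ℝ) →L[ℝ] (Fin 3 → ℝ) := ContinuousLinearMap.pi
    ![((c⁻¹ • (-ℓC)).comp pr), ((c⁻¹ • ℓA).comp pr),
      ((H (x₀, y₀)) • (-(ContinuousLinearMap.proj 2 : (Fin 3 → ℝ) →L[ℝ] ℝ)))] with hLdef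
  have hL : HasFDerivAt X L ![x₀, y₀, 0] := by
    have hXeq : X = fun q (i : Fin 3) =>
        ![ (fun q : Fin 3 → ℝ => -(pdy H (q 0, q 1)) / (lam * Real.sqrt (D (q 0, q 1)))),
           (fun q : Fin 3 → ℝ => pdx H (q 0, q 1) / (lam * Real.sqrt (D (q 0, q 1)))),
           (fun q : Fin 3 → ℝ => -(q 2) * H (q 0, q 1)) ] i q := by
      funext q
      rw [hX q]
      funext i
      fin_cases i <;> simp
    rw [hXeq, hLdef]
    apply hasFDerivAt_pi.2
    intro i
    fin_cases i
    · exact h0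
    · exact h1'
    · exact h2
  have hfd : fderiv ℝ X ![x₀, y₀, 0] = L := hL.fderiv
  -- explicit matrix
  have hMeq : M = Matrix.of
      ![![ -(pdx (pdy H) (x₀, y₀)) / c, -(pdy (pdy H) (x₀, y₀)) / c, 0],
        ![ pdx (pdx H) (x₀, y₀) / c, pdy (pdx H) (x₀, y₀) / c, 0],
        ![0, 0, -(H (x₀, y₀))]] := by
    rw [hM, hfd]
    ext i j
    rw [LinearMap.toMatrix'_apply]
    fin_cases i <;> fin_cases j <;>
      simp [hLdef, hprdef, hℓA, hℓC, ContinuousLinearMap.pi_apply, pdx, pdy,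
        div_eq_inv_mul, mul_comm, Prod.mk_zero_zero]
  have hdet : M.det = -(H (x₀, y₀) * (pdx (pdx H) (x₀, y₀) * pdy (pdy H) (x₀, y₀)
      - (pdx (pdy H) (x₀, y₀)) ^ 2)) / (lam ^ 2 * D (x₀, y₀)) := by
    rw [hMeq, Matrix.det_fin_three]
    simp only [Matrix.of_apply, Matrix.cons_val', Matrix.cons_val_zero, Matrix.cons_val_one,
      Matrix.head_cons, Matrix.empty_val', Matrix.cons_val_fin_one, Matrix.head_fin_const,
      Matrix.cons_val_two, Matrix.tail_cons]
    rw [hsymm, ← hc2]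
    field_simp
    ring
  refine ⟨hdet, fun hH0 hnd => ?_⟩
  rw [Matrix.isUnit_iff_isUnit_det, isUnit_iff_ne_zero, hdet]
  exact div_ne_zero (neg_ne_zero.2 (mul_ne_zero hH0 hnd))
    (mul_ne_zero (pow_ne_zero 2 hlam) hDne)
end

section
/- Let $\mu > 0$, let $v \in \mathbb{R}^2$ be a nonzero vector, and let $f : \mathbb{R}^2 \to \mathbb{R}$ be a smooth function satisfying $\Delta f = -\mu f$ and such that the gradient $\nabla f(x)$ is parallel to $v$ at every point $x \in \mathbb{R}^2$ (i.e., $-v_2\,\partial_x f(x) + v_1\,\partial_y f(x) = 0$ for all $x$). Then there exist constants $A_1, A_2 \in \mathbb{R}$ such that $f(x) = A_1 \cos\!\left(\frac{\sqrt{\mu}}{|v|}\, v\cdot x\right) + A_2 \sin\!\left(\frac{\sqrt{\mu}}{|v|}\, v\cdot x\right)$ for all $x \in \mathbb{R}^2$. -/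
open Real

theorem fderiv_apply_pair (f : ℝ × ℝ → ℝ) (p a : ℝ × ℝ) :
    fderiv ℝ f p a = a.1 * pdx f p + a.2 * pdy f p := by
  have h : a = a.1 • ((1:ℝ),(0:ℝ)) + a.2 • ((0:ℝ),(1:ℝ)) := by
    simp [Prod.ext_iff]
  rw [h, map_add, map_smul, map_smul]
  simp [pdx, pdy, smul_eq_mul]

theorem contDiff_dir (f : ℝ × ℝ → ℝ) (hf : ContDiff ℝ (⊤ : ℕ∞) f) (a : ℝ × ℝ) :
    ContDiff ℝ (⊤ : ℕ∞) (fun p => fderiv ℝ f p a) :=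
  (hf.fderiv_right (by simp)).clm_apply contDiff_const

theorem hasDerivAt_line (f : ℝ × ℝ → ℝ) (hf : Differentiable ℝ f) (p a : ℝ × ℝ) (t : ℝ) :
    HasDerivAt (fun s : ℝ => f (p + s • a)) (fderiv ℝ f (p + t • a) a) t := by
  have h1 : HasDerivAt (fun s : ℝ => p + s • a) a t := by
    simpa using ((hasDerivAt_id t).smul_const a).const_add p
  exact (hf (p + t • a)).hasFDerivAt.comp_hasDerivAt t h1

theorem ode_cos_sin (μ : ℝ) (hμ : 0 < μ) (g g₁ : ℝ → ℝ)
    (hg : ∀ t, HasDerivAt g (g₁ t) t) (hg' : ∀ t, HasDerivAt g₁ (-μ * g t) t) (t : ℝ) :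
    g t = g 0 * Real.cos (Real.sqrt μ * t) + (g₁ 0 / Real.sqrt μ) * Real.sin (Real.sqrt μ * t) := by
  set ω := Real.sqrt μ with hωdef
  have hω : 0 < ω := Real.sqrt_pos.mpr hμ
  have hω2 : ω ^ 2 = μ := Real.sq_sqrt hμ.le
  set c₁ := g 0 with hc₁
  set c₂ := g₁ 0 / ω with hc₂
  set h : ℝ → ℝ := fun s => g s - c₁ * Real.cos (ω * s) - c₂ * Real.sin (ω * s) with hh
  set h₁ : ℝ → ℝ := fun s => g₁ s + c₁ * ω * Real.sin (ω * s) - c₂ * ω * Real.cos (ω * s) with hh₁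
  have hcos : ∀ s : ℝ, HasDerivAt (fun r : ℝ => Real.cos (ω * r)) (-ω * Real.sin (ω * s)) s := by
    intro s
    have h0 : HasDerivAt (fun r : ℝ => Real.cos (ω * r)) (-Real.sin (ω * s) * (ω * 1)) s :=
      (Real.hasDerivAt_cos (ω * s)).comp s ((hasDerivAt_id s).const_mul ω)
    convert h0 using 1; ring
  have hsin : ∀ s : ℝ, HasDerivAt (fun r : ℝ => Real.sin (ω * r)) (ω * Real.cos (ω * s)) s := by
    intro s
    have h0 : HasDerivAt (fun r : ℝ => Real.sin (ω * r)) (Real.cos (ω * s) * (ω * 1)) s :=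
      (Real.hasDerivAt_sin (ω * s)).comp s ((hasDerivAt_id s).const_mul ω)
    convert h0 using 1; ring
  have hdh : ∀ s, HasDerivAt h (h₁ s) s := by
    intro s
    have := ((hg s).sub (((hcos s).const_mul c₁))).sub ((hsin s).const_mul c₂)
    refine this.congr_deriv ?_; symm
    simp only [hh₁]; ring
  have hdh₁ : ∀ s, HasDerivAt h₁ (-μ * h s) s := by
    intro s
    have := (((hg' s).add ((hsin s).const_mul (c₁ * ω)))).sub ((hcos s).const_mul (c₂ * ω))
    refine this.congr_deriv ?_; symm
    simp only [hh]
    linear_combination (-c₁ * Real.cos (ω * s) - c₂ * Real.sin (ω * s)) * hω2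
  set E : ℝ → ℝ := fun s => h₁ s ^ 2 + μ * h s ^ 2 with hE
  have hdE : ∀ s, HasDerivAt E 0 s := by
    intro s
    have := ((hdh₁ s).pow 2).add (((hdh s).pow 2).const_mul μ)
    refine this.congr_deriv ?_; symm
    ring
  have hEconst : ∀ s, E s = E 0 := fun s =>
    is_const_of_deriv_eq_zero (fun r => (hdE r).differentiableAt)
      (fun r => (hdE r).deriv) s 0
  have hE0 : E 0 = 0 := by
    have h0 : h 0 = 0 := by simp [hh, hc₁]
    have h₁0 : h₁ 0 = 0 := by
      simp only [hh₁, hc₂]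
      field_simp
      simp
    simp [hE, h0, h₁0]
  have hEt : h₁ t ^ 2 + μ * h t ^ 2 = 0 := by
    have := hEconst t
    rw [hE0] at this
    simpa [hE] using this
  have h2 : h t ^ 2 = 0 := by
    nlinarith [sq_nonneg (h₁ t), sq_nonneg (h t)]
  have hht : h t = 0 := by
    exact (pow_eq_zero_iff two_ne_zero).mp h2
  simp only [hh] at hht
  linarith

theorem stmt9 (μ : ℝ) (hμ : 0 < μ) (v : ℝ × ℝ) (hv : v ≠ 0)
    (f : ℝ × ℝ → ℝ) (hf : ContDiff ℝ (⊤ : ℕ∞) f)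
    (heig : ∀ p, pdx (pdx f) p + pdy (pdy f) p = -μ * f p)
    (hpar : ∀ p, -v.2 * pdx f p + v.1 * pdy f p = 0) :
    ∃ A₁ A₂ : ℝ, ∀ p : ℝ × ℝ,
      f p = A₁ * Real.cos (Real.sqrt μ / Real.sqrt (v.1 ^ 2 + v.2 ^ 2)
              * (v.1 * p.1 + v.2 * p.2))
          + A₂ * Real.sin (Real.sqrt μ / Real.sqrt (v.1 ^ 2 + v.2 ^ 2)
              * (v.1 * p.1 + v.2 * p.2)) := by
  have hdf : Differentiable ℝ f := hf.differentiable (by simp)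
  have hDx : ContDiff ℝ (⊤ : ℕ∞) (pdx f) := contDiff_dir f hf (1,0)
  have hDy : ContDiff ℝ (⊤ : ℕ∞) (pdy f) := contDiff_dir f hf (0,1)
  have hdDx : Differentiable ℝ (pdx f) := hDx.differentiable (by simp)
  have hdDy : Differentiable ℝ (pdy f) := hDy.differentiable (by simp)
  have hdf2 : Differentiable ℝ (fderiv ℝ f) := (hf.fderiv_right (m := 1) (by norm_cast)).differentiable (by simp)
  have hsymm : ∀ (p a b : ℝ × ℝ), fderiv ℝ (fderiv ℝ f) p a b = fderiv ℝ (fderiv ℝ f) p b a :=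
    fun p a b => second_derivative_symmetric (fun q => (hdf q).hasFDerivAt)
      ((hdf2 p).hasFDerivAt) a b
  have hkey : ∀ (p a b : ℝ × ℝ),
      fderiv ℝ (fun q => fderiv ℝ f q a) p b = fderiv ℝ (fderiv ℝ f) p b a := by
    intro p a b
    rw [fderiv_clm_apply (hdf2 p) (differentiableAt_const a)]
    simp
  have hBA : ∀ p, pdx (pdy f) p = pdy (pdx f) p := by
    intro p
    show fderiv ℝ (fun q => fderiv ℝ f q ((0:ℝ),(1:ℝ))) p (1,0)
        = fderiv ℝ (fun q => fderiv ℝ f q ((1:ℝ),(0:ℝ))) p (0,1)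
    simp only [hkey]
    exact hsymm p _ _
  -- derivative of the parallel relation
  have hparD : ∀ (p b : ℝ × ℝ),
      -v.2 * fderiv ℝ (pdx f) p b + v.1 * fderiv ℝ (pdy f) p b = 0 := by
    intro p b
    have hfun : (fun q => -v.2 * pdx f q + v.1 * pdy f q) = fun _ => (0:ℝ) :=
      funext fun q => hpar q
    have h1 : fderiv ℝ (fun q => -v.2 * pdx f q + v.1 * pdy f q) p = 0 := by
      rw [hfun]; simp
    have h2 : fderiv ℝ (fun q => -v.2 * pdx f q + v.1 * pdy f q) p
        = (-v.2) • fderiv ℝ (pdx f) p + v.1 • fderiv ℝ (pdy f) p := by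
      rw [fderiv_fun_add ((hdDx p).const_mul _) ((hdDy p).const_mul _),
        fderiv_const_mul (hdDx p), fderiv_const_mul (hdDy p)]
    have h3 := congrArg (fun (L : (ℝ × ℝ) →L[ℝ] ℝ) => L b) (h2.symm.trans h1)
    simpa using h3
  have rel1 : ∀ p, -v.2 * pdx (pdx f) p + v.1 * pdy (pdx f) p = 0 := by
    intro p
    have := hparD p (1,0)
    have e : fderiv ℝ (pdy f) p (1,0) = pdy (pdx f) p := hBA p
    rw [e] at this
    exact this
  have rel2 : ∀ p, -v.2 * pdy (pdx f) p + v.1 * pdy (pdy f) p = 0 := by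
    intro p
    exact hparD p (0,1)
  -- geometry setup
  have hvv : v.1 ≠ 0 ∨ v.2 ≠ 0 := by
    by_contra h
    push_neg at h
    exact hv (Prod.ext h.1 h.2)
  have hvpos : 0 < v.1 ^ 2 + v.2 ^ 2 := by
    rcases hvv with h | h <;> positivity
  set n := Real.sqrt (v.1 ^ 2 + v.2 ^ 2) with hndef
  have hn : 0 < n := Real.sqrt_pos.mpr hvpos
  have hn2 : n ^ 2 = v.1 ^ 2 + v.2 ^ 2 := Real.sq_sqrt hvpos.le
  set u : ℝ × ℝ := (v.1 / n, v.2 / n) with hudef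
  have hDu : Differentiable ℝ (fun q => fderiv ℝ f q u) :=
    (contDiff_dir f hf u).differentiable (by simp)
  -- second directional derivative along u equals the Laplacian
  have hS : ∀ p, fderiv ℝ (fun q => fderiv ℝ f q u) p u = -μ * f p := by
    intro p
    have hfu : (fun q => fderiv ℝ f q u) = (fun q => u.1 * pdx f q + u.2 * pdy f q) :=
      funext fun q => fderiv_apply_pair f q u
    have e1 : fderiv ℝ (fun q => u.1 * pdx f q + u.2 * pdy f q) p
        = u.1 • fderiv ℝ (pdx f) p + u.2 • fderiv ℝ (pdy f) p := by
      rw [fderiv_fun_add ((hdDx p).const_mul _) ((hdDy p).const_mul _),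
        fderiv_const_mul (hdDx p), fderiv_const_mul (hdDy p)]
    have e2 : fderiv ℝ (pdx f) p u = u.1 * pdx (pdx f) p + u.2 * pdy (pdx f) p :=
      fderiv_apply_pair (pdx f) p u
    have e3 : fderiv ℝ (pdy f) p u = u.1 * pdx (pdy f) p + u.2 * pdy (pdy f) p :=
      fderiv_apply_pair (pdy f) p u
    rw [hfu, ← heig p]
    have e4 := congrArg (fun (L : (ℝ × ℝ) →L[ℝ] ℝ) => L u) e1
    rw [e4]
    simp only [ContinuousLinearMap.add_apply, ContinuousLinearMap.coe_smul',
      Pi.smul_apply, smul_eq_mul]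
    rw [e2, e3, hBA p]
    have hu1 : u.1 = v.1 / n := rfl
    have hu2 : u.2 = v.2 / n := rfl
    rw [hu1, hu2]
    have hr1 := rel1 p
    have hr2 := rel2 p
    have hne : n ≠ 0 := ne_of_gt hn
    have hnum : v.1 ^ 2 * pdx (pdx f) p + 2 * v.1 * v.2 * pdy (pdx f) p
        + v.2 ^ 2 * pdy (pdy f) p
        = (pdx (pdx f) p + pdy (pdy f) p) * n ^ 2 := by
      rw [hn2]; linear_combination v.2 * hr1 - v.1 * hr2
    have hfrac : v.1 / n * (v.1 / n * pdx (pdx f) p + v.2 / n * pdy (pdx f) p)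
        + v.2 / n * (v.1 / n * pdy (pdx f) p + v.2 / n * pdy (pdy f) p)
        = (v.1 ^ 2 * pdx (pdx f) p + 2 * v.1 * v.2 * pdy (pdx f) p
            + v.2 ^ 2 * pdy (pdy f) p) / n ^ 2 := by
      ring
    rw [hfrac, hnum]
    field_simp
  -- constancy along the orthogonal direction
  set w : ℝ × ℝ := (-v.2, v.1) with hwdef
  have hzero : ∀ p, fderiv ℝ f p w = 0 := by
    intro p
    rw [fderiv_apply_pair]
    simpa [hwdef] using hpar p
  have hconst : ∀ (p : ℝ × ℝ) (s : ℝ), f (p + s • w) = f p := by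
    intro p s
    have hd : ∀ r : ℝ, HasDerivAt (fun s : ℝ => f (p + s • w)) 0 r := by
      intro r
      have := hasDerivAt_line f hdf p w r
      rwa [hzero] at this
    have := is_const_of_deriv_eq_zero (f := fun s : ℝ => f (p + s • w))
      (fun r => (hd r).differentiableAt) (fun r => (hd r).deriv) s 0
    simpa using this
  -- the one-dimensional profile
  set g : ℝ → ℝ := fun t => f ((0 : ℝ × ℝ) + t • u) with hgdef
  set g₁ : ℝ → ℝ := fun t => fderiv ℝ f ((0 : ℝ × ℝ) + t • u) u with hg₁def
  have hg : ∀ t, HasDerivAt g (g₁ t) t := fun t => hasDerivAt_line f hdf 0 u t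
  have hg' : ∀ t, HasDerivAt g₁ (-μ * g t) t := by
    intro t
    have := hasDerivAt_line (fun q => fderiv ℝ f q u) hDu 0 u t
    rwa [hS] at this
  have hode := ode_cos_sin μ hμ g g₁ hg hg'
  -- every point decomposes
  have hdecomp : ∀ p : ℝ × ℝ,
      ((0 : ℝ × ℝ) + ((v.1 * p.1 + v.2 * p.2) / n) • u) + ((-v.2 * p.1 + v.1 * p.2) / n ^ 2) • w = p := by
    intro p
    have hne : n ≠ 0 := ne_of_gt hn
    apply Prod.ext
    · show 0 + (v.1 * p.1 + v.2 * p.2) / n * (v.1 / n) + (-v.2 * p.1 + v.1 * p.2) / n ^ 2 * (-v.2) = p.1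
      field_simp
      linear_combination (-p.1) * hn2
    · show 0 + (v.1 * p.1 + v.2 * p.2) / n * (v.2 / n) + (-v.2 * p.1 + v.1 * p.2) / n ^ 2 * v.1 = p.2
      field_simp
      linear_combination (-p.2) * hn2
  have hrep : ∀ p : ℝ × ℝ, f p = g ((v.1 * p.1 + v.2 * p.2) / n) := by
    intro p
    conv_lhs => rw [← hdecomp p]
    rw [hconst]
  refine ⟨g 0, g₁ 0 / Real.sqrt μ, ?_⟩
  intro p
  rw [hrep p, hode]
  have harg : Real.sqrt μ * ((v.1 * p.1 + v.2 * p.2) / n)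
      = Real.sqrt μ / n * (v.1 * p.1 + v.2 * p.2) := by ring
  rw [harg]
end

section
/- Let $\mu > 0$ and let $V_\mu$ denote the real vector space of smooth $2\pi\mathbb{Z}^2$-periodic functions $f : \mathbb{R}^2 \to \mathbb{R}$ satisfying $\Delta f = -\mu f$. Suppose there exist a point $x_* \in \mathbb{R}^2$ and a nonzero vector $v \in \mathbb{R}^2$ such that $\nabla f(x_*)$ is parallel to $v$ for every $f \in V_\mu$. Then $\dim_{\mathbb{R}} V_\mu \leq 2$. -/
open Real

/-- `f` is `2π ℤ²`-periodic. -/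
def IsTorusPeriodic (f : ℝ × ℝ → ℝ) : Prop :=
  ∀ (p : ℝ × ℝ) (m n : ℤ), f (p.1 + 2 * Real.pi * m, p.2 + 2 * Real.pi * n) = f p

/-- `f` belongs to the `μ`-eigenspace of the flat Laplacian on the torus. -/
def InEigenspace (μ : ℝ) (f : ℝ × ℝ → ℝ) : Prop :=
  ContDiff ℝ (⊤ : ℕ∞) f ∧ IsTorusPeriodic f ∧
    ∀ p, pdx (pdx f) p + pdy (pdy f) p = -μ * f p

section aux

variable {f : ℝ × ℝ → ℝ}

lemma aux_hasFDerivAt (hf : ContDiff ℝ (⊤ : ℕ∞) f) (p : ℝ × ℝ) :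
    HasFDerivAt f (fderiv ℝ f p) p :=
  (hf.differentiable (by simp) p).hasFDerivAt

lemma aux_contDiff_fderiv (hf : ContDiff ℝ (⊤ : ℕ∞) f) : ContDiff ℝ (⊤ : ℕ∞) (fderiv ℝ f) :=
  hf.fderiv_right (by simp)

lemma aux_hasFDerivAt_fderiv (hf : ContDiff ℝ (⊤ : ℕ∞) f) (p : ℝ × ℝ) :
    HasFDerivAt (fderiv ℝ f) (fderiv ℝ (fderiv ℝ f) p) p :=
  ((aux_contDiff_fderiv hf).differentiable (by simp) p).hasFDerivAt

/-- derivative of directional derivative -/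
lemma aux_hasFDerivAt_pdu (hf : ContDiff ℝ (⊤ : ℕ∞) f) (p : ℝ × ℝ) (u : ℝ × ℝ) :
    HasFDerivAt (fun q => fderiv ℝ f q u)
      ((ContinuousLinearMap.apply ℝ ℝ u).comp (fderiv ℝ (fderiv ℝ f) p)) p :=
  (ContinuousLinearMap.apply ℝ ℝ u).hasFDerivAt.comp p (aux_hasFDerivAt_fderiv hf p)

lemma aux_contDiff_pdu (hf : ContDiff ℝ (⊤ : ℕ∞) f) (u : ℝ × ℝ) :
    ContDiff ℝ (⊤ : ℕ∞) (fun q => fderiv ℝ f q u) :=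
  (ContinuousLinearMap.apply ℝ ℝ u).contDiff.comp (aux_contDiff_fderiv hf)

lemma aux_snd_fderiv_pdu (hf : ContDiff ℝ (⊤ : ℕ∞) f) (p : ℝ × ℝ) (u u' : ℝ × ℝ) :
    fderiv ℝ (fun q => fderiv ℝ f q u) p u' = fderiv ℝ (fderiv ℝ f) p u' u := by
  rw [(aux_hasFDerivAt_pdu hf p u).fderiv]; rfl

lemma aux_snd_symm (hf : ContDiff ℝ (⊤ : ℕ∞) f) (p : ℝ × ℝ) (a b : ℝ × ℝ) :
    fderiv ℝ (fderiv ℝ f) p a b = fderiv ℝ (fderiv ℝ f) p b a :=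
  second_derivative_symmetric (fun y => aux_hasFDerivAt hf y)
    (aux_hasFDerivAt_fderiv hf p) a b

/-- translation -/
lemma aux_pdu_translate (hf : ContDiff ℝ (⊤ : ℕ∞) f) (a u : ℝ × ℝ) (p : ℝ × ℝ) :
    fderiv ℝ (fun q => f (q + a)) p u = fderiv ℝ f (p + a) u := by
  have h : HasFDerivAt (fun q => f (q + a)) (fderiv ℝ f (p + a)) p := by
    have := (aux_hasFDerivAt hf (p + a)).comp p ((hasFDerivAt_id p).add_const a)
    simpa [Function.comp_def] using this
  rw [h.fderiv]

lemma aux_eigen_translate {μ : ℝ} (hf : InEigenspace μ f) (a : ℝ × ℝ) :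
    InEigenspace μ (fun p => f (p + a)) := by
  obtain ⟨hs, hper, hlap⟩ := hf
  have hs' : ContDiff ℝ (⊤ : ℕ∞) (fun p => f (p + a)) := hs.comp (contDiff_id.add contDiff_const)
  refine ⟨hs', ?_, ?_⟩
  · intro p m n
    have h := hper (p.1 + a.1, p.2 + a.2) m n
    have e1 : ((p.1 + 2 * Real.pi * m, p.2 + 2 * Real.pi * n) : ℝ × ℝ) + a
        = (p.1 + a.1 + 2 * Real.pi * m, p.2 + a.2 + 2 * Real.pi * n) := by
      simp [Prod.ext_iff]; constructor <;> ring
    have e2 : p + a = (p.1 + a.1, p.2 + a.2) := rfl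
    simp only [e1, e2]
    exact h
  · intro p
    have hx : pdx (fun p => f (p + a)) = fun q => pdx f (q + a) := by
      funext q; exact aux_pdu_translate hs a (1, 0) q
    have hy : pdy (fun p => f (p + a)) = fun q => pdy f (q + a) := by
      funext q; exact aux_pdu_translate hs a (0, 1) q
    have hx2 : pdx (pdx (fun p => f (p + a))) p = pdx (pdx f) (p + a) := by
      rw [hx]; exact aux_pdu_translate (aux_contDiff_pdu hs (1, 0)) a (1, 0) p
    have hy2 : pdy (pdy (fun p => f (p + a))) p = pdy (pdy f) (p + a) := by
      rw [hy]; exact aux_pdu_translate (aux_contDiff_pdu hs (0, 1)) a (0, 1) p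
    rw [hx2, hy2]
    exact hlap (p + a)

end aux

section core

variable {f : ℝ × ℝ → ℝ} {μ : ℝ} {v x₀ : ℝ × ℝ}

/-- Linear expansion of a directional derivative in coordinates. -/
lemma aux_fderiv_dir (L : (ℝ × ℝ) →L[ℝ] ℝ) (u : ℝ × ℝ) :
    L u = u.1 * L (1, 0) + u.2 * L (0, 1) := by
  have h : u = u.1 • ((1 : ℝ), (0 : ℝ)) + u.2 • ((0 : ℝ), (1 : ℝ)) := by
    simp [Prod.ext_iff]
  conv_lhs => rw [h]
  rw [map_add, map_smul, map_smul, smul_eq_mul, smul_eq_mul]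

/-- From the parallel-gradient hypothesis at every point, the derivative in the
direction `(-v.2, v.1)` vanishes everywhere. -/
lemma aux_w_deriv_zero (hf : InEigenspace μ f)
    (hpar : ∀ g : ℝ × ℝ → ℝ, InEigenspace μ g →
      -v.2 * pdx g x₀ + v.1 * pdy g x₀ = 0) :
    ∀ p, fderiv ℝ f p (-v.2, v.1) = 0 := by
  intro p
  have h := hpar (fun q => f (q + (p - x₀))) (aux_eigen_translate hf (p - x₀))
  have hx : pdx (fun q => f (q + (p - x₀))) x₀ = pdx f p := by
    show fderiv ℝ (fun q => f (q + (p - x₀))) x₀ (1, 0) = _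
    rw [aux_pdu_translate hf.1 _ _ x₀, add_sub_cancel]; rfl
  have hy : pdy (fun q => f (q + (p - x₀))) x₀ = pdy f p := by
    show fderiv ℝ (fun q => f (q + (p - x₀))) x₀ (0, 1) = _
    rw [aux_pdu_translate hf.1 _ _ x₀, add_sub_cancel]; rfl
  rw [hx, hy] at h
  rw [aux_fderiv_dir (fderiv ℝ f p) (-v.2, v.1)]
  simpa [pdx, pdy] using h

/-- key second derivative identity along `v`. -/
lemma aux_key (hf : InEigenspace μ f)
    (hw : ∀ p, fderiv ℝ f p (-v.2, v.1) = 0) (p : ℝ × ℝ) :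
    fderiv ℝ (fderiv ℝ f) p v v = -(μ * (v.1 ^ 2 + v.2 ^ 2)) * f p := by
  obtain ⟨hs, -, hlap⟩ := hf
  set S := fderiv ℝ (fderiv ℝ f) p with hS
  have hSw : ∀ u : ℝ × ℝ, S u (-v.2, v.1) = 0 := by
    intro u
    have h0 : HasFDerivAt (fun q => fderiv ℝ f q (-v.2, v.1)) (0 : (ℝ × ℝ) →L[ℝ] ℝ) p := by
      have he : (fun q : ℝ × ℝ => fderiv ℝ f q (-v.2, v.1)) = fun _ => (0 : ℝ) := by
        funext q; exact hw q
      rw [he]; exact hasFDerivAt_const 0 p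
    have h1 := (aux_hasFDerivAt_pdu hs p (-v.2, v.1)).unique h0
    have := congrArg (fun L => L u) h1
    simpa using this
  set a := S (1, 0) (1, 0) with ha
  set b := S (0, 1) (0, 1) with hb
  set m := S (1, 0) (0, 1) with hm
  have hsymm : S (0, 1) (1, 0) = m := aux_snd_symm hs p (0, 1) (1, 0)
  have hlap' : a + b = -μ * f p := by
    have h := hlap p
    have e1 : pdx (pdx f) p = a := by
      show fderiv ℝ (fun q => fderiv ℝ f q (1, 0)) p (1, 0) = a
      rw [aux_snd_fderiv_pdu hs]
    have e2 : pdy (pdy f) p = b := by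
      show fderiv ℝ (fun q => fderiv ℝ f q (0, 1)) p (0, 1) = b
      rw [aux_snd_fderiv_pdu hs]
    rw [e1, e2] at h; exact h
  have h1 : -v.2 * a + v.1 * m = 0 := by
    have h := hSw (1, 0)
    rw [aux_fderiv_dir (S (1, 0)) (-v.2, v.1)] at h
    simp only [← ha, ← hm] at h
    linarith [h]
  have h2 : -v.2 * m + v.1 * b = 0 := by
    have h := hSw (0, 1)
    rw [aux_fderiv_dir (S (0, 1)) (-v.2, v.1), hsymm] at h
    simp only [← hb] at h
    linarith [h]
  have hv1 : S v (1, 0) = v.1 * a + v.2 * m := by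
    rw [aux_snd_symm hs p v (1, 0), aux_fderiv_dir (S (1, 0)) v, ← hsymm]
    rw [aux_snd_symm hs p (0, 1) (1, 0)]
  have hv2 : S v (0, 1) = v.1 * m + v.2 * b := by
    rw [aux_snd_symm hs p v (0, 1), aux_fderiv_dir (S (0, 1)) v, hsymm]
  have hexp : S v v = v.1 ^ 2 * a + 2 * v.1 * v.2 * m + v.2 ^ 2 * b := by
    linear_combination aux_fderiv_dir (S v) v + v.1 * hv1 + v.2 * hv2
  rw [hexp]
  linear_combination v.2 * h1 - v.1 * h2 + (v.1 ^ 2 + v.2 ^ 2) * hlap'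

/-- constancy in the orthogonal direction -/
lemma aux_const_w (hf : ContDiff ℝ (⊤ : ℕ∞) f)
    (hw : ∀ p, fderiv ℝ f p (-v.2, v.1) = 0) (q : ℝ × ℝ) (s : ℝ) :
    f (q + s • (-v.2, v.1)) = f q := by
  set w : ℝ × ℝ := (-v.2, v.1)
  have hcurve : ∀ t : ℝ, HasDerivAt (fun t : ℝ => q + t • w) w t := by
    intro t
    have h1 : HasDerivAt (fun t : ℝ => t • w) ((1 : ℝ) • w) t :=
      (hasDerivAt_id t).smul_const w
    simpa using h1.const_add q
  have hg : ∀ t : ℝ, HasDerivAt (fun t : ℝ => f (q + t • w)) 0 t := by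
    intro t
    have := (aux_hasFDerivAt hf (q + t • w)).comp_hasDerivAt t (hcurve t)
    simpa [hw, Function.comp_def] using this
  have hc := is_const_of_deriv_eq_zero (f := fun t : ℝ => f (q + t • w))
    (fun t => (hg t).differentiableAt) (fun t => (hg t).deriv) s 0
  simpa using hc

/-- ODE with zero initial data. -/
lemma aux_ode (c : ℝ) (hc : 0 < c) (g g' : ℝ → ℝ)
    (hg : ∀ t, HasDerivAt g (g' t) t)
    (hg' : ∀ t, HasDerivAt g' (-c * g t) t)
    (h0 : g 0 = 0) (h0' : g' 0 = 0) : ∀ t, g t = 0 := by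
  have hE : ∀ t, HasDerivAt (fun t => g' t ^ 2 + c * g t ^ 2) 0 t := by
    intro t
    have h1 := (hg' t).pow 2
    have h2 := ((hg t).pow 2).const_mul c
    have := h1.add h2
    convert this using 1
    · rfl
    · rfl
    · rfl
    ring
  have hconst : ∀ t, g' t ^ 2 + c * g t ^ 2 = g' 0 ^ 2 + c * g 0 ^ 2 :=
    fun t => is_const_of_deriv_eq_zero (fun t => (hE t).differentiableAt)
      (fun t => (hE t).deriv) t 0
  intro t
  have h := hconst t
  rw [h0, h0'] at h
  have h2 : g t ^ 2 = 0 := by nlinarith [sq_nonneg (g' t), sq_nonneg (g t)]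
  exact pow_eq_zero_iff (two_ne_zero) |>.mp h2

end core

theorem stmt10 (μ : ℝ) (hμ : 0 < μ)
    (x₀ : ℝ × ℝ) (v : ℝ × ℝ) (hv : v ≠ 0)
    (hpar : ∀ f : ℝ × ℝ → ℝ, InEigenspace μ f →
      -v.2 * pdx f x₀ + v.1 * pdy f x₀ = 0) :
    ∀ f₁ f₂ f₃ : ℝ × ℝ → ℝ, InEigenspace μ f₁ → InEigenspace μ f₂ →
      InEigenspace μ f₃ → ¬ LinearIndependent ℝ ![f₁, f₂, f₃] := by
  intro f₁ f₂ f₃ h₁ h₂ h₃ hLI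
  have hn : 0 < v.1 ^ 2 + v.2 ^ 2 := by
    by_contra h
    push_neg at h
    apply hv
    have hv1 : v.1 = 0 := by nlinarith [sq_nonneg v.1, sq_nonneg v.2]
    have hv2 : v.2 = 0 := by nlinarith [sq_nonneg v.1, sq_nonneg v.2]
    exact Prod.ext hv1 hv2
  set n : ℝ := v.1 ^ 2 + v.2 ^ 2 with hn_def
  -- three vectors in ℝ × ℝ are dependent
  set u : Fin 3 → ℝ × ℝ :=
    ![(f₁ x₀, fderiv ℝ f₁ x₀ v), (f₂ x₀, fderiv ℝ f₂ x₀ v), (f₃ x₀, fderiv ℝ f₃ x₀ v)] with hu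
  have hnotLI : ¬ LinearIndependent ℝ u := by
    intro h
    have hcard := h.fintype_card_le_finrank
    simp at hcard
  obtain ⟨c, hcsum, i, hci⟩ := Fintype.not_linearIndependent_iff.mp hnotLI
  -- initial conditions
  have hcsum1 : c 0 * f₁ x₀ + c 1 * f₂ x₀ + c 2 * f₃ x₀ = 0 := by
    have := congrArg Prod.fst hcsum
    simpa [hu, Fin.sum_univ_three] using this
  have hcsum2 : c 0 * fderiv ℝ f₁ x₀ v + c 1 * fderiv ℝ f₂ x₀ v
      + c 2 * fderiv ℝ f₃ x₀ v = 0 := by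
    have := congrArg Prod.snd hcsum
    simpa [hu, Fin.sum_univ_three] using this
  -- directional derivative facts
  have hw₁ := aux_w_deriv_zero h₁ hpar
  have hw₂ := aux_w_deriv_zero h₂ hpar
  have hw₃ := aux_w_deriv_zero h₃ hpar
  have key₁ := aux_key h₁ hw₁
  have key₂ := aux_key h₂ hw₂
  have key₃ := aux_key h₃ hw₃
  -- the line
  set ℓ : ℝ → ℝ × ℝ := fun t => x₀ + t • v with hℓ
  have hcurve : ∀ t : ℝ, HasDerivAt ℓ v t := by
    intro t
    have h1 : HasDerivAt (fun t : ℝ => t • v) ((1 : ℝ) • v) t :=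
      (hasDerivAt_id t).smul_const v
    simpa [hℓ] using h1.const_add x₀
  set g : ℝ → ℝ := fun t => c 0 * f₁ (ℓ t) + c 1 * f₂ (ℓ t) + c 2 * f₃ (ℓ t) with hg_def
  set g' : ℝ → ℝ := fun t => c 0 * fderiv ℝ f₁ (ℓ t) v + c 1 * fderiv ℝ f₂ (ℓ t) v
    + c 2 * fderiv ℝ f₃ (ℓ t) v with hg'_def
  have hd : ∀ (f : ℝ × ℝ → ℝ), InEigenspace μ f →
      ∀ t : ℝ, HasDerivAt (fun t => f (ℓ t)) (fderiv ℝ f (ℓ t) v) t := by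
    intro f hf t
    exact (aux_hasFDerivAt hf.1 (ℓ t)).comp_hasDerivAt t (hcurve t)
  have hd' : ∀ (f : ℝ × ℝ → ℝ), InEigenspace μ f →
      ∀ t : ℝ, HasDerivAt (fun t => fderiv ℝ f (ℓ t) v)
        (fderiv ℝ (fderiv ℝ f) (ℓ t) v v) t := by
    intro f hf t
    have := (aux_hasFDerivAt_pdu hf.1 (ℓ t) v).comp_hasDerivAt t (hcurve t)
    simpa [Function.comp_def] using this
  have hg : ∀ t, HasDerivAt g (g' t) t := by
    intro t
    exact (((hd f₁ h₁ t).const_mul (c 0)).add ((hd f₂ h₂ t).const_mul (c 1))).add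
      ((hd f₃ h₃ t).const_mul (c 2))
  have hg' : ∀ t, HasDerivAt g' (-(μ * n) * g t) t := by
    intro t
    have h := (((hd' f₁ h₁ t).const_mul (c 0)).add ((hd' f₂ h₂ t).const_mul (c 1))).add
      ((hd' f₃ h₃ t).const_mul (c 2))
    rw [key₁, key₂, key₃] at h
    convert h using 1
    · rfl
    · rfl
    · rfl
    simp [hg_def]
    ring
  have hℓ0 : ℓ 0 = x₀ := by simp [hℓ]
  have hg0 : g 0 = 0 := by rw [hg_def]; simp only [hℓ0]; exact hcsum1
  have hg'0 : g' 0 = 0 := by rw [hg'_def]; simp only [hℓ0]; exact hcsum2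
  have hzero : ∀ t, g t = 0 :=
    aux_ode (μ * n) (by positivity) g g' hg hg' hg0 hg'0
  -- every point decomposes
  have hdec : ∀ p : ℝ × ℝ, ∃ t s : ℝ, p = (x₀ + t • v) + s • (-v.2, v.1) := by
    intro p
    refine ⟨((p.1 - x₀.1) * v.1 + (p.2 - x₀.2) * v.2) / n,
            (-(p.1 - x₀.1) * v.2 + (p.2 - x₀.2) * v.1) / n, ?_⟩
    have hne : n ≠ 0 := ne_of_gt hn
    apply Prod.ext
    · simp only [Prod.fst_add, Prod.smul_fst, smul_eq_mul]
      field_simp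
      ring
    · simp only [Prod.snd_add, Prod.smul_snd, smul_eq_mul]
      field_simp
      ring
  -- the combination vanishes everywhere
  have hF : ∀ p : ℝ × ℝ, c 0 * f₁ p + c 1 * f₂ p + c 2 * f₃ p = 0 := by
    intro p
    obtain ⟨t, s, rfl⟩ := hdec p
    rw [aux_const_w h₁.1 hw₁, aux_const_w h₂.1 hw₂, aux_const_w h₃.1 hw₃]
    exact hzero t
  -- contradiction with linear independence
  have hsum0 : ∑ j, c j • ![f₁, f₂, f₃] j = 0 := by
    funext p
    simp only [Fin.sum_univ_three, Matrix.cons_val_zero, Matrix.cons_val_one, Matrix.head_cons,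
      Matrix.cons_val_two, Matrix.tail_cons, Pi.add_apply, Pi.smul_apply, smul_eq_mul,
      Pi.zero_apply]
    linarith [hF p]
  exact hci (Fintype.linearIndependent_iff.mp hLI c hsum0 i)
end

section
/- Let $\mu = k_1^2 + k_2^2$ for some nonzero $(k_1,k_2) \in \mathbb{Z}^2$, and let $V_\mu$ be the real vector space of smooth $2\pi\mathbb{Z}^2$-periodic functions $f : \mathbb{R}^2 \to \mathbb{R}$ with $\Delta f = -\mu f$. Then for every point $x \in \mathbb{R}^2$, the set of gradients $\{\nabla f(x) : f \in V_\mu\}$ spans $\mathbb{R}^2$. Equivalently, if $f_1,\dots,f_m$ is a basis of $V_\mu$, the map $F : \mathbb{R}^2 \times \mathbb{R}^m \to \mathbb{R}^2$, $F(x,a) = a_1 \nabla f_1(x) + \cdots + a_m \nabla f_m(x)$, has surjective derivative at every point of $F^{-1}(0)$, i.e., $F$ is transverse to $\{0\}$. -/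
open Real

noncomputable def linAB (a b : ℝ) : ℝ × ℝ →L[ℝ] ℝ :=
  a • (ContinuousLinearMap.fst ℝ ℝ ℝ) + b • (ContinuousLinearMap.snd ℝ ℝ ℝ)

lemma linAB_apply (a b : ℝ) (v : ℝ × ℝ) : linAB a b v = a * v.1 + b * v.2 := rfl

lemma hasFDerivAt_affine (a b c : ℝ) (p : ℝ × ℝ) :
    HasFDerivAt (fun p : ℝ × ℝ => a * p.1 + b * p.2 + c) (linAB a b) p := by
  have h1 : HasFDerivAt (fun p : ℝ × ℝ => a * p.1 + b * p.2) (linAB a b) p :=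
    ((hasFDerivAt_fst.const_mul a).add (hasFDerivAt_snd.const_mul b))
  simpa using h1.add_const c

lemma hasFDerivAt_sin_wave (a b c : ℝ) (p : ℝ × ℝ) :
    HasFDerivAt (fun p : ℝ × ℝ => Real.sin (a * p.1 + b * p.2 + c))
      (Real.cos (a * p.1 + b * p.2 + c) • linAB a b) p :=
  (Real.hasDerivAt_sin _).comp_hasFDerivAt p (hasFDerivAt_affine a b c p)

lemma hasFDerivAt_cos_wave (a b c : ℝ) (p : ℝ × ℝ) :
    HasFDerivAt (fun p : ℝ × ℝ => Real.cos (a * p.1 + b * p.2 + c))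
      ((-Real.sin (a * p.1 + b * p.2 + c)) • linAB a b) p :=
  (Real.hasDerivAt_cos _).comp_hasFDerivAt p (hasFDerivAt_affine a b c p)

lemma pdx_sin_wave (a b c : ℝ) :
    pdx (fun p : ℝ × ℝ => Real.sin (a * p.1 + b * p.2 + c))
      = fun p : ℝ × ℝ => a * Real.cos (a * p.1 + b * p.2 + c) := by
  funext p
  simp only [pdx, (hasFDerivAt_sin_wave a b c p).fderiv]
  simp [linAB_apply]
  ring

lemma pdy_sin_wave (a b c : ℝ) :
    pdy (fun p : ℝ × ℝ => Real.sin (a * p.1 + b * p.2 + c))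
      = fun p : ℝ × ℝ => b * Real.cos (a * p.1 + b * p.2 + c) := by
  funext p
  simp only [pdy, (hasFDerivAt_sin_wave a b c p).fderiv]
  simp [linAB_apply]
  ring

lemma pdx_cos_wave (a b c : ℝ) :
    pdx (fun p : ℝ × ℝ => a * Real.cos (a * p.1 + b * p.2 + c))
      = fun p : ℝ × ℝ => -(a * a) * Real.sin (a * p.1 + b * p.2 + c) := by
  funext p
  have h := (hasFDerivAt_cos_wave a b c p).const_mul a
  simp only [pdx, h.fderiv]
  simp [linAB_apply]
  ring

lemma pdy_cos_wave (a b c : ℝ) :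
    pdy (fun p : ℝ × ℝ => b * Real.cos (a * p.1 + b * p.2 + c))
      = fun p : ℝ × ℝ => -(b * b) * Real.sin (a * p.1 + b * p.2 + c) := by
  funext p
  have h := (hasFDerivAt_cos_wave a b c p).const_mul b
  simp only [pdy, h.fderiv]
  simp [linAB_apply]
  ring

lemma wave_eigen (a b : ℤ) (c : ℝ) :
    InEigenspace ((a : ℝ) ^ 2 + (b : ℝ) ^ 2)
      (fun p : ℝ × ℝ => Real.sin ((a : ℝ) * p.1 + (b : ℝ) * p.2 + c)) := by
  refine ⟨?_, ?_, ?_⟩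
  · exact Real.contDiff_sin.comp
      (((contDiff_fst.const_smul (a : ℝ)).add (contDiff_snd.const_smul (b : ℝ))).add contDiff_const)
  · intro p m n
    have : (a : ℝ) * (p.1 + 2 * Real.pi * m) + (b : ℝ) * (p.2 + 2 * Real.pi * n) + c
        = ((a : ℝ) * p.1 + (b : ℝ) * p.2 + c) + ((a * m + b * n : ℤ) : ℝ) * (2 * Real.pi) := by
      push_cast; ring
    simp only [this, Real.sin_add_int_mul_two_pi]
  · intro p
    rw [pdx_sin_wave, pdy_sin_wave, pdx_cos_wave, pdy_cos_wave]
    ring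

lemma grad_at (a b : ℝ) (x : ℝ × ℝ) :
    (pdx (fun p : ℝ × ℝ => Real.sin (a * p.1 + b * p.2 + -(a * x.1 + b * x.2))) x,
     pdy (fun p : ℝ × ℝ => Real.sin (a * p.1 + b * p.2 + -(a * x.1 + b * x.2))) x) = (a, b) := by
  rw [pdx_sin_wave, pdy_sin_wave]
  simp only []
  rw [show a * x.1 + b * x.2 + -(a * x.1 + b * x.2) = 0 from by ring]
  simp

theorem stmt12 (k₁ k₂ : ℤ) (hk : (k₁, k₂) ≠ (0, 0))
    (μ : ℝ) (hμ : μ = (k₁ : ℝ) ^ 2 + (k₂ : ℝ) ^ 2) :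
    ∀ x : ℝ × ℝ,
      Submodule.span ℝ
        {g : ℝ × ℝ | ∃ f : ℝ × ℝ → ℝ, InEigenspace μ f ∧ g = (pdx f x, pdy f x)} = ⊤ := by
  intro x
  subst hμ
  have hk' : k₁ ≠ 0 ∨ k₂ ≠ 0 := by
    rcases eq_or_ne k₁ 0 with h1 | h1
    · exact Or.inr fun h2 => hk (by rw [h1, h2])
    · exact Or.inl h1
  have hμ2 : (k₁ : ℝ) ^ 2 + (k₂ : ℝ) ^ 2 ≠ 0 := by
    rcases hk' with h | h
    · have : (k₁ : ℝ) ≠ 0 := Int.cast_ne_zero.mpr h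
      positivity
    · have : (k₂ : ℝ) ≠ 0 := Int.cast_ne_zero.mpr h
      positivity
  set S := {g : ℝ × ℝ | ∃ f : ℝ × ℝ → ℝ,
    InEigenspace ((k₁ : ℝ) ^ 2 + (k₂ : ℝ) ^ 2) f ∧ g = (pdx f x, pdy f x)} with hS
  have mem1 : ((k₁ : ℝ), (k₂ : ℝ)) ∈ S := by
    exact ⟨fun p : ℝ × ℝ => Real.sin ((k₁ : ℝ) * p.1 + (k₂ : ℝ) * p.2
      + (-((k₁ : ℝ) * x.1 + (k₂ : ℝ) * x.2))), wave_eigen k₁ k₂ _,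
      (grad_at (k₁ : ℝ) (k₂ : ℝ) x).symm⟩
  have mem2 : ((k₂ : ℝ), (-k₁ : ℝ)) ∈ S := by
    have hμ' : ((k₁ : ℝ) ^ 2 + (k₂ : ℝ) ^ 2) = ((k₂ : ℤ) : ℝ) ^ 2 + (((-k₁ : ℤ)) : ℝ) ^ 2 := by
      push_cast; ring
    refine ⟨fun p : ℝ × ℝ => Real.sin (((k₂ : ℤ) : ℝ) * p.1 + ((-k₁ : ℤ) : ℝ) * p.2
      + (-(((k₂ : ℤ) : ℝ) * x.1 + ((-k₁ : ℤ) : ℝ) * x.2))), hμ' ▸ wave_eigen k₂ (-k₁) _, ?_⟩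
    have := (grad_at ((k₂ : ℤ) : ℝ) ((-k₁ : ℤ) : ℝ) x).symm
    rw [show ((-k₁ : ℤ) : ℝ) = (-k₁ : ℝ) from by push_cast; ring] at this ⊢
    exact this
  rw [eq_top_iff]
  rintro ⟨w₁, w₂⟩ -
  have h1 := Submodule.subset_span (R := ℝ) mem1
  have h2 := Submodule.subset_span (R := ℝ) mem2
  have key : (w₁, w₂) = ((w₁ * k₁ + w₂ * k₂) / ((k₁ : ℝ) ^ 2 + (k₂ : ℝ) ^ 2)) • ((k₁ : ℝ), (k₂ : ℝ))
      + ((w₁ * k₂ - w₂ * k₁) / ((k₁ : ℝ) ^ 2 + (k₂ : ℝ) ^ 2)) • ((k₂ : ℝ), (-k₁ : ℝ)) := by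
    ext <;> simp [Prod.smul_def] <;> field_simp <;> ring
  rw [key]
  exact Submodule.add_mem _ (Submodule.smul_mem _ _ h1) (Submodule.smul_mem _ _ h2)
end

section
/- Let $\mu = k_1^2 + k_2^2$ for some nonzero $(k_1,k_2) \in \mathbb{Z}^2$, let $V_\mu$ be the real vector space of smooth $2\pi\mathbb{Z}^2$-periodic functions $f : \mathbb{R}^2 \to \mathbb{R}$ with $\Delta f = -\mu f$, and let $f_1,\dots,f_m$ be a basis of $V_\mu$. Then for Lebesgue-almost every $a = (a_1,\dots,a_m) \in \mathbb{R}^m$, the function $a_1 f_1 + \cdots + a_m f_m$ is Morse, i.e., at every point where both of its first partial derivatives vanish, its Hessian determinant is nonzero. -/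
open Real MeasureTheory

/-- A function on `ℝ²` is Morse if at every critical point its Hessian determinant
is nonzero. -/
def IsMorse (g : ℝ × ℝ → ℝ) : Prop :=
  ∀ p : ℝ × ℝ, pdx g p = 0 → pdy g p = 0 →
    pdx (pdx g) p * pdy (pdy g) p - (pdx (pdy g) p) ^ 2 ≠ 0

lemma pdx_of_hasFDerivAt {f : ℝ×ℝ→ℝ} {p} {L : ℝ×ℝ →L[ℝ] ℝ} (h : HasFDerivAt f L p) :
    pdx f p = L (1,0) := by rw [pdx, h.fderiv]
lemma pdy_of_hasFDerivAt {f : ℝ×ℝ→ℝ} {p} {L : ℝ×ℝ →L[ℝ] ℝ} (h : HasFDerivAt f L p) :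
    pdy f p = L (0,1) := by rw [pdy, h.fderiv]

lemma contDiff_pdx {f : ℝ×ℝ→ℝ} (hf : ContDiff ℝ (⊤ : ℕ∞) f) : ContDiff ℝ (⊤ : ℕ∞) (pdx f) :=
  (hf.fderiv_right (by simp)).clm_apply contDiff_const
lemma contDiff_pdy {f : ℝ×ℝ→ℝ} (hf : ContDiff ℝ (⊤ : ℕ∞) f) : ContDiff ℝ (⊤ : ℕ∞) (pdy f) :=
  (hf.fderiv_right (by simp)).clm_apply contDiff_const

lemma pdx_add {A B : ℝ×ℝ→ℝ} {p} (hA : DifferentiableAt ℝ A p) (hB : DifferentiableAt ℝ B p) :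
    pdx (fun q => A q + B q) p = pdx A p + pdx B p := by
  simp [pdx, fderiv_fun_add hA hB]
lemma pdy_add {A B : ℝ×ℝ→ℝ} {p} (hA : DifferentiableAt ℝ A p) (hB : DifferentiableAt ℝ B p) :
    pdy (fun q => A q + B q) p = pdy A p + pdy B p := by
  simp [pdy, fderiv_fun_add hA hB]

lemma pdx_const_mul {A : ℝ×ℝ→ℝ} {p} (hA : DifferentiableAt ℝ A p) (c : ℝ) :
    pdx (fun q => c * A q) p = c * pdx A p := by
  simp [pdx, fderiv_const_mul hA c]
lemma pdy_const_mul {A : ℝ×ℝ→ℝ} {p} (hA : DifferentiableAt ℝ A p) (c : ℝ) :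
    pdy (fun q => c * A q) p = c * pdy A p := by
  simp [pdy, fderiv_const_mul hA c]

lemma pdx_sum {n : ℕ} {A : Fin n → (ℝ×ℝ→ℝ)} {p} (h : ∀ i, DifferentiableAt ℝ (A i) p)
    (c : Fin n → ℝ) :
    pdx (fun q => ∑ i, c i * A i q) p = ∑ i, c i * pdx (A i) p := by
  rw [pdx, fderiv_fun_sum (fun i _ => (h i).const_mul (c i))]
  simp only [ContinuousLinearMap.coe_sum', Finset.sum_apply]
  exact Finset.sum_congr rfl fun i _ => by
    rw [fderiv_const_mul (h i) (c i)]; rfl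

lemma pdy_sum {n : ℕ} {A : Fin n → (ℝ×ℝ→ℝ)} {p} (h : ∀ i, DifferentiableAt ℝ (A i) p)
    (c : Fin n → ℝ) :
    pdy (fun q => ∑ i, c i * A i q) p = ∑ i, c i * pdy (A i) p := by
  rw [pdy, fderiv_fun_sum (fun i _ => (h i).const_mul (c i))]
  simp only [ContinuousLinearMap.coe_sum', Finset.sum_apply]
  exact Finset.sum_congr rfl fun i _ => by
    rw [fderiv_const_mul (h i) (c i)]; rfl

-- trig
lemma hasFDerivAt_lin (a b : ℝ) (p : ℝ×ℝ) :
    HasFDerivAt (fun q : ℝ×ℝ => a*q.1+b*q.2)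
      (a • ContinuousLinearMap.fst ℝ ℝ ℝ + b • ContinuousLinearMap.snd ℝ ℝ ℝ) p := by
  exact (hasFDerivAt_fst.const_mul a).add (hasFDerivAt_snd.const_mul b)

lemma hasFDerivAt_cosl (a b : ℝ) (p : ℝ×ℝ) :
    HasFDerivAt (fun q : ℝ×ℝ => Real.cos (a*q.1+b*q.2))
      ((-Real.sin (a*p.1+b*p.2)) • (a • ContinuousLinearMap.fst ℝ ℝ ℝ + b • ContinuousLinearMap.snd ℝ ℝ ℝ)) p :=
  (Real.hasDerivAt_cos (a*p.1+b*p.2)).comp_hasFDerivAt (f := fun q : ℝ×ℝ => a*q.1+b*q.2) p (hasFDerivAt_lin a b p)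

lemma hasFDerivAt_sinl (a b : ℝ) (p : ℝ×ℝ) :
    HasFDerivAt (fun q : ℝ×ℝ => Real.sin (a*q.1+b*q.2))
      ((Real.cos (a*p.1+b*p.2)) • (a • ContinuousLinearMap.fst ℝ ℝ ℝ + b • ContinuousLinearMap.snd ℝ ℝ ℝ)) p :=
  (Real.hasDerivAt_sin (a*p.1+b*p.2)).comp_hasFDerivAt (f := fun q : ℝ×ℝ => a*q.1+b*q.2) p (hasFDerivAt_lin a b p)

lemma pdx_cosl (a b : ℝ) (p : ℝ×ℝ) :
    pdx (fun q : ℝ×ℝ => Real.cos (a*q.1+b*q.2)) p = -Real.sin (a*p.1+b*p.2) * a := by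
  rw [pdx_of_hasFDerivAt (hasFDerivAt_cosl a b p)]; simp
lemma pdy_cosl (a b : ℝ) (p : ℝ×ℝ) :
    pdy (fun q : ℝ×ℝ => Real.cos (a*q.1+b*q.2)) p = -Real.sin (a*p.1+b*p.2) * b := by
  rw [pdy_of_hasFDerivAt (hasFDerivAt_cosl a b p)]; simp
lemma pdx_sinl (a b : ℝ) (p : ℝ×ℝ) :
    pdx (fun q : ℝ×ℝ => Real.sin (a*q.1+b*q.2)) p = Real.cos (a*p.1+b*p.2) * a := by
  rw [pdx_of_hasFDerivAt (hasFDerivAt_sinl a b p)]; simp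
lemma pdy_sinl (a b : ℝ) (p : ℝ×ℝ) :
    pdy (fun q : ℝ×ℝ => Real.sin (a*q.1+b*q.2)) p = Real.cos (a*p.1+b*p.2) * b := by
  rw [pdy_of_hasFDerivAt (hasFDerivAt_sinl a b p)]; simp

lemma contDiff_cosl (a b : ℝ) : ContDiff ℝ (⊤ : ℕ∞) (fun q : ℝ×ℝ => Real.cos (a*q.1+b*q.2)) :=
  Real.contDiff_cos.comp ((contDiff_const.mul contDiff_fst).add (contDiff_const.mul contDiff_snd))
lemma contDiff_sinl (a b : ℝ) : ContDiff ℝ (⊤ : ℕ∞) (fun q : ℝ×ℝ => Real.sin (a*q.1+b*q.2)) :=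
  Real.contDiff_sin.comp ((contDiff_const.mul contDiff_fst).add (contDiff_const.mul contDiff_snd))

lemma pdev {f : ℝ×ℝ→ℝ} (hf : ContDiff ℝ (⊤ : ℕ∞) f) (p : ℝ×ℝ) (v w : ℝ×ℝ) :
    fderiv ℝ (fun q => fderiv ℝ f q v) p w = fderiv ℝ (fderiv ℝ f) p w v := by
  have hA : HasFDerivAt (fderiv ℝ f) (fderiv ℝ (fderiv ℝ f) p) p :=
    (((hf.fderiv_right (m := (⊤ : ℕ∞)) (by simp)).differentiable (by simp)) p).hasFDerivAt
  have h : HasFDerivAt (fun q => fderiv ℝ f q v)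
      ((ContinuousLinearMap.apply ℝ ℝ v).comp (fderiv ℝ (fderiv ℝ f) p)) p := by
    have := (ContinuousLinearMap.apply ℝ ℝ v).hasFDerivAt.comp p hA
    exact this
  rw [h.fderiv]; rfl

lemma pdx_pdy_symm {f : ℝ×ℝ→ℝ} (hf : ContDiff ℝ (⊤ : ℕ∞) f) (p : ℝ×ℝ) :
    pdx (pdy f) p = pdy (pdx f) p := by
  have hdiff : ∀ y, HasFDerivAt f (fderiv ℝ f y) y :=
    fun y => ((hf.differentiable (by simp)) y).hasFDerivAt
  have hA : HasFDerivAt (fderiv ℝ f) (fderiv ℝ (fderiv ℝ f) p) p :=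
    (((hf.fderiv_right (m := (⊤ : ℕ∞)) (by simp)).differentiable (by simp)) p).hasFDerivAt
  have h1 : pdx (pdy f) p = fderiv ℝ (fderiv ℝ f) p (1,0) (0,1) := by
    simp only [pdx, pdy]
    exact pdev hf p _ _
  have h2 : pdy (pdx f) p = fderiv ℝ (fderiv ℝ f) p (0,1) (1,0) := by
    simp only [pdx, pdy]
    exact pdev hf p _ _
  rw [h1, h2, second_derivative_symmetric hdiff hA (1,0) (0,1)]

lemma clm_det (L : (ℝ×ℝ) →L[ℝ] (ℝ×ℝ)) :
    L.det = (L (1,0)).1 * (L (0,1)).2 - (L (0,1)).1 * (L (1,0)).2 := by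
  have : L.det = LinearMap.det (L : (ℝ×ℝ) →ₗ[ℝ] (ℝ×ℝ)) := rfl
  rw [this, ← LinearMap.det_toMatrix (Module.Basis.finTwoProd ℝ), Matrix.det_fin_two]
  simp [LinearMap.toMatrix_apply, Module.Basis.finTwoProd_zero, Module.Basis.finTwoProd_one,
    Module.Basis.coe_finTwoProd_repr]

lemma pdx_comb {A B C : ℝ×ℝ→ℝ} (hA : Differentiable ℝ A) (hB : Differentiable ℝ B)
    (hC : Differentiable ℝ C) (c₁ c₂ : ℝ) (p : ℝ×ℝ) :
    pdx (fun q => A q + c₁ * B q + c₂ * C q) p = pdx A p + c₁ * pdx B p + c₂ * pdx C p := by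
  rw [pdx_add (A := fun q => A q + c₁ * B q) ((hA p).add ((hB p).const_mul c₁)) ((hC p).const_mul c₂),
    pdx_add (hA p) ((hB p).const_mul c₁), pdx_const_mul (hB p), pdx_const_mul (hC p)]
lemma pdy_comb {A B C : ℝ×ℝ→ℝ} (hA : Differentiable ℝ A) (hB : Differentiable ℝ B)
    (hC : Differentiable ℝ C) (c₁ c₂ : ℝ) (p : ℝ×ℝ) :
    pdy (fun q => A q + c₁ * B q + c₂ * C q) p = pdy A p + c₁ * pdy B p + c₂ * pdy C p := by
  rw [pdy_add (A := fun q => A q + c₁ * B q) ((hA p).add ((hB p).const_mul c₁)) ((hC p).const_mul c₂),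
    pdy_add (hA p) ((hB p).const_mul c₁), pdy_const_mul (hB p), pdy_const_mul (hC p)]

lemma pdx_comb_fun {A B C : ℝ×ℝ→ℝ} (hA : Differentiable ℝ A) (hB : Differentiable ℝ B)
    (hC : Differentiable ℝ C) (c₁ c₂ : ℝ) :
    pdx (fun q => A q + c₁ * B q + c₂ * C q) = fun p => pdx A p + c₁ * pdx B p + c₂ * pdx C p :=
  funext fun p => pdx_comb hA hB hC c₁ c₂ p
lemma pdy_comb_fun {A B C : ℝ×ℝ→ℝ} (hA : Differentiable ℝ A) (hB : Differentiable ℝ B)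
    (hC : Differentiable ℝ C) (c₁ c₂ : ℝ) :
    pdy (fun q => A q + c₁ * B q + c₂ * C q) = fun p => pdy A p + c₁ * pdy B p + c₂ * pdy C p :=
  funext fun p => pdy_comb hA hB hC c₁ c₂ p

noncomputable def dd (h₁ h₂ : ℝ×ℝ→ℝ) : ℝ×ℝ→ℝ :=
  fun p => pdx h₁ p * pdy h₂ p - pdx h₂ p * pdy h₁ p
noncomputable def Phi1 (g h₁ h₂ : ℝ×ℝ→ℝ) : ℝ×ℝ→ℝ :=
  fun p => (-(pdx g p) * pdy h₂ p + pdy g p * pdx h₂ p) / dd h₁ h₂ p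
noncomputable def Phi2 (g h₁ h₂ : ℝ×ℝ→ℝ) : ℝ×ℝ→ℝ :=
  fun p => (pdx g p * pdy h₁ p - pdy g p * pdx h₁ p) / dd h₁ h₂ p
noncomputable def Phi (g h₁ h₂ : ℝ×ℝ→ℝ) : ℝ×ℝ→ℝ×ℝ :=
  fun p => (Phi1 g h₁ h₂ p, Phi2 g h₁ h₂ p)

lemma core (g h₁ h₂ : ℝ×ℝ→ℝ) (hg : ContDiff ℝ (⊤ : ℕ∞) g) (hh₁ : ContDiff ℝ (⊤ : ℕ∞) h₁)
    (hh₂ : ContDiff ℝ (⊤ : ℕ∞) h₂) (U : Set (ℝ×ℝ)) (hU : IsOpen U)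
    (hdet : ∀ p ∈ U, dd h₁ h₂ p ≠ 0) :
    volume {b : ℝ×ℝ | ∃ p ∈ U,
      pdx (fun q => g q + b.1 * h₁ q + b.2 * h₂ q) p = 0 ∧
      pdy (fun q => g q + b.1 * h₁ q + b.2 * h₂ q) p = 0 ∧
      pdx (pdx (fun q => g q + b.1 * h₁ q + b.2 * h₂ q)) p *
        pdy (pdy (fun q => g q + b.1 * h₁ q + b.2 * h₂ q)) p -
      pdx (pdy (fun q => g q + b.1 * h₁ q + b.2 * h₂ q)) p *
        pdy (pdx (fun q => g q + b.1 * h₁ q + b.2 * h₂ q)) p = 0} = 0 := by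
  have Dg := hg.differentiable (by simp)
  have Dh₁ := hh₁.differentiable (by simp)
  have Dh₂ := hh₂.differentiable (by simp)
  have Dgx := (contDiff_pdx hg).differentiable (by simp)
  have Dgy := (contDiff_pdy hg).differentiable (by simp)
  have Dh₁x := (contDiff_pdx hh₁).differentiable (by simp)
  have Dh₁y := (contDiff_pdy hh₁).differentiable (by simp)
  have Dh₂x := (contDiff_pdx hh₂).differentiable (by simp)
  have Dh₂y := (contDiff_pdy hh₂).differentiable (by simp)
  have Dd : Differentiable ℝ (dd h₁ h₂) := (Dh₁x.mul Dh₂y).sub (Dh₂x.mul Dh₁y)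
  have DΦ₁ : ∀ p ∈ U, DifferentiableAt ℝ (Phi1 g h₁ h₂) p := by
    intro p hp
    show DifferentiableAt ℝ (fun p => (-(pdx g p) * pdy h₂ p + pdy g p * pdx h₂ p) / dd h₁ h₂ p) p
    simp only [div_eq_mul_inv]
    exact (((Dgx p).neg.mul (Dh₂y p)).add ((Dgy p).mul (Dh₂x p))).mul ((Dd p).inv (hdet p hp))
  have DΦ₂ : ∀ p ∈ U, DifferentiableAt ℝ (Phi2 g h₁ h₂) p := by
    intro p hp
    show DifferentiableAt ℝ (fun p => (pdx g p * pdy h₁ p - pdy g p * pdx h₁ p) / dd h₁ h₂ p) p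
    simp only [div_eq_mul_inv]
    exact (((Dgx p).mul (Dh₁y p)).sub ((Dgy p).mul (Dh₁x p))).mul ((Dd p).inv (hdet p hp))
  have idx : ∀ p ∈ U, pdx g p + pdx h₁ p * Phi1 g h₁ h₂ p + pdx h₂ p * Phi2 g h₁ h₂ p = 0 := by
    intro p hp
    have hd := hdet p hp
    have hd' : pdx h₁ p * pdy h₂ p - pdx h₂ p * pdy h₁ p ≠ 0 := hd
    simp only [Phi1, Phi2, dd]
    field_simp
    ring
  have idy : ∀ p ∈ U, pdy g p + pdy h₁ p * Phi1 g h₁ h₂ p + pdy h₂ p * Phi2 g h₁ h₂ p = 0 := by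
    intro p hp
    have hd := hdet p hp
    have hd' : pdx h₁ p * pdy h₂ p - pdx h₂ p * pdy h₁ p ≠ 0 := hd
    simp only [Phi1, Phi2, dd]
    rw [div_eq_mul_inv, div_eq_mul_inv]
    have hinv := mul_inv_cancel₀ hd'
    linear_combination (-pdy g p) * hinv
  set s : Set (ℝ×ℝ) := {p | p ∈ U ∧ (fderiv ℝ (Phi g h₁ h₂) p).det = 0} with hs_def
  have hSard : volume (Phi g h₁ h₂ '' s) = 0 := by
    refine addHaar_image_eq_zero_of_det_fderivWithin_eq_zero volume
      (f' := fun p => fderiv ℝ (Phi g h₁ h₂) p) ?_ (fun p hp => hp.2)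
    intro p hp
    have hΦd : DifferentiableAt ℝ (Phi g h₁ h₂) p := (DΦ₁ p hp.1).prodMk (DΦ₂ p hp.1)
    exact hΦd.hasFDerivAt.hasFDerivWithinAt
  refine measure_mono_null ?_ hSard
  rintro b ⟨p, hp, ex, ey, edet⟩
  have hd := hdet p hp
  rw [pdx_comb Dg Dh₁ Dh₂ b.1 b.2 p] at ex
  rw [pdy_comb Dg Dh₁ Dh₂ b.1 b.2 p] at ey
  have hb1 : b.1 = Phi1 g h₁ h₂ p := by
    simp only [Phi1]
    rw [eq_div_iff hd]
    simp only [dd]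
    linear_combination (pdy h₂ p) * ex - (pdx h₂ p) * ey
  have hb2 : b.2 = Phi2 g h₁ h₂ p := by
    simp only [Phi2]
    rw [eq_div_iff hd]
    simp only [dd]
    linear_combination (-(pdy h₁ p)) * ex + (pdx h₁ p) * ey
  -- Hessian entries of F
  have hFxx : pdx (pdx (fun q => g q + b.1 * h₁ q + b.2 * h₂ q)) p
      = pdx (pdx g) p + b.1 * pdx (pdx h₁) p + b.2 * pdx (pdx h₂) p := by
    rw [pdx_comb_fun Dg Dh₁ Dh₂ b.1 b.2]; exact pdx_comb Dgx Dh₁x Dh₂x _ _ p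
  have hFyx : pdy (pdx (fun q => g q + b.1 * h₁ q + b.2 * h₂ q)) p
      = pdy (pdx g) p + b.1 * pdy (pdx h₁) p + b.2 * pdy (pdx h₂) p := by
    rw [pdx_comb_fun Dg Dh₁ Dh₂ b.1 b.2]; exact pdy_comb Dgx Dh₁x Dh₂x _ _ p
  have hFxy : pdx (pdy (fun q => g q + b.1 * h₁ q + b.2 * h₂ q)) p
      = pdx (pdy g) p + b.1 * pdx (pdy h₁) p + b.2 * pdx (pdy h₂) p := by
    rw [pdy_comb_fun Dg Dh₁ Dh₂ b.1 b.2]; exact pdx_comb Dgy Dh₁y Dh₂y _ _ p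
  have hFyy : pdy (pdy (fun q => g q + b.1 * h₁ q + b.2 * h₂ q)) p
      = pdy (pdy g) p + b.1 * pdy (pdy h₁) p + b.2 * pdy (pdy h₂) p := by
    rw [pdy_comb_fun Dg Dh₁ Dh₂ b.1 b.2]; exact pdy_comb Dgy Dh₁y Dh₂y _ _ p
  -- differentiate the identities
  have hUn : U ∈ nhds p := hU.mem_nhds hp
  have dΦ₁ := DΦ₁ p hp
  have dΦ₂ := DΦ₂ p hp
  have hfdx : fderiv ℝ (fun q => pdx g q + pdx h₁ q * Phi1 g h₁ h₂ q + pdx h₂ q * Phi2 g h₁ h₂ q) p = 0 := by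
    have hev : (fun q => pdx g q + pdx h₁ q * Phi1 g h₁ h₂ q + pdx h₂ q * Phi2 g h₁ h₂ q)
        =ᶠ[nhds p] (fun _ => (0:ℝ)) := Filter.eventuallyEq_of_mem hUn idx
    rw [hev.fderiv_eq]
    exact fderiv_const_apply 0
  have hfdy : fderiv ℝ (fun q => pdy g q + pdy h₁ q * Phi1 g h₁ h₂ q + pdy h₂ q * Phi2 g h₁ h₂ q) p = 0 := by
    have hev : (fun q => pdy g q + pdy h₁ q * Phi1 g h₁ h₂ q + pdy h₂ q * Phi2 g h₁ h₂ q)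
        =ᶠ[nhds p] (fun _ => (0:ℝ)) := Filter.eventuallyEq_of_mem hUn idy
    rw [hev.fderiv_eq]
    exact fderiv_const_apply 0
  have hexp_x : fderiv ℝ (fun q => pdx g q + pdx h₁ q * Phi1 g h₁ h₂ q + pdx h₂ q * Phi2 g h₁ h₂ q) p
      = fderiv ℝ (pdx g) p
        + (pdx h₁ p • fderiv ℝ (Phi1 g h₁ h₂) p + Phi1 g h₁ h₂ p • fderiv ℝ (pdx h₁) p)
        + (pdx h₂ p • fderiv ℝ (Phi2 g h₁ h₂) p + Phi2 g h₁ h₂ p • fderiv ℝ (pdx h₂) p) := by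
    rw [fderiv_fun_add (f := fun q => pdx g q + pdx h₁ q * Phi1 g h₁ h₂ q)
          (g := fun q => pdx h₂ q * Phi2 g h₁ h₂ q) ((Dgx p).add ((Dh₁x p).mul dΦ₁)) ((Dh₂x p).mul dΦ₂),
        fderiv_fun_add (g := fun q => pdx h₁ q * Phi1 g h₁ h₂ q) (Dgx p) ((Dh₁x p).mul dΦ₁), fderiv_fun_mul (Dh₁x p) dΦ₁,
        fderiv_fun_mul (Dh₂x p) dΦ₂]
  have hexp_y : fderiv ℝ (fun q => pdy g q + pdy h₁ q * Phi1 g h₁ h₂ q + pdy h₂ q * Phi2 g h₁ h₂ q) p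
      = fderiv ℝ (pdy g) p
        + (pdy h₁ p • fderiv ℝ (Phi1 g h₁ h₂) p + Phi1 g h₁ h₂ p • fderiv ℝ (pdy h₁) p)
        + (pdy h₂ p • fderiv ℝ (Phi2 g h₁ h₂) p + Phi2 g h₁ h₂ p • fderiv ℝ (pdy h₂) p) := by
    rw [fderiv_fun_add (f := fun q => pdy g q + pdy h₁ q * Phi1 g h₁ h₂ q)
          (g := fun q => pdy h₂ q * Phi2 g h₁ h₂ q) ((Dgy p).add ((Dh₁y p).mul dΦ₁)) ((Dh₂y p).mul dΦ₂),
        fderiv_fun_add (g := fun q => pdy h₁ q * Phi1 g h₁ h₂ q) (Dgy p) ((Dh₁y p).mul dΦ₁), fderiv_fun_mul (Dh₁y p) dΦ₁,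
        fderiv_fun_mul (Dh₂y p) dΦ₂]
  have e11 : pdx (pdx g) p + (pdx h₁ p * (fderiv ℝ (Phi1 g h₁ h₂) p (1,0))
      + Phi1 g h₁ h₂ p * pdx (pdx h₁) p) + (pdx h₂ p * (fderiv ℝ (Phi2 g h₁ h₂) p (1,0))
      + Phi2 g h₁ h₂ p * pdx (pdx h₂) p) = 0 := by
    have := congrArg (fun L : (ℝ×ℝ) →L[ℝ] ℝ => L (1,0)) (hexp_x.symm.trans hfdx)
    simp only [ContinuousLinearMap.add_apply, ContinuousLinearMap.smul_apply,
      ContinuousLinearMap.zero_apply, smul_eq_mul] at this; exact this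
  have e12 : pdy (pdx g) p + (pdx h₁ p * (fderiv ℝ (Phi1 g h₁ h₂) p (0,1))
      + Phi1 g h₁ h₂ p * pdy (pdx h₁) p) + (pdx h₂ p * (fderiv ℝ (Phi2 g h₁ h₂) p (0,1))
      + Phi2 g h₁ h₂ p * pdy (pdx h₂) p) = 0 := by
    have := congrArg (fun L : (ℝ×ℝ) →L[ℝ] ℝ => L (0,1)) (hexp_x.symm.trans hfdx)
    simp only [ContinuousLinearMap.add_apply, ContinuousLinearMap.smul_apply,
      ContinuousLinearMap.zero_apply, smul_eq_mul] at this; exact this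
  have e21 : pdx (pdy g) p + (pdy h₁ p * (fderiv ℝ (Phi1 g h₁ h₂) p (1,0))
      + Phi1 g h₁ h₂ p * pdx (pdy h₁) p) + (pdy h₂ p * (fderiv ℝ (Phi2 g h₁ h₂) p (1,0))
      + Phi2 g h₁ h₂ p * pdx (pdy h₂) p) = 0 := by
    have := congrArg (fun L : (ℝ×ℝ) →L[ℝ] ℝ => L (1,0)) (hexp_y.symm.trans hfdy)
    simp only [ContinuousLinearMap.add_apply, ContinuousLinearMap.smul_apply,
      ContinuousLinearMap.zero_apply, smul_eq_mul] at this; exact this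
  have e22 : pdy (pdy g) p + (pdy h₁ p * (fderiv ℝ (Phi1 g h₁ h₂) p (0,1))
      + Phi1 g h₁ h₂ p * pdy (pdy h₁) p) + (pdy h₂ p * (fderiv ℝ (Phi2 g h₁ h₂) p (0,1))
      + Phi2 g h₁ h₂ p * pdy (pdy h₂) p) = 0 := by
    have := congrArg (fun L : (ℝ×ℝ) →L[ℝ] ℝ => L (0,1)) (hexp_y.symm.trans hfdy)
    simp only [ContinuousLinearMap.add_apply, ContinuousLinearMap.smul_apply,
      ContinuousLinearMap.zero_apply, smul_eq_mul] at this; exact this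
  -- membership
  refine ⟨p, ⟨hp, ?_⟩, ?_⟩
  · have hΦd : HasFDerivAt (Phi g h₁ h₂) ((fderiv ℝ (Phi1 g h₁ h₂) p).prod (fderiv ℝ (Phi2 g h₁ h₂) p)) p :=
      dΦ₁.hasFDerivAt.prodMk dΦ₂.hasFDerivAt
    rw [hΦd.fderiv, clm_det]
    simp only [ContinuousLinearMap.prod_apply]
    rw [hb1, hb2] at edet hFxx hFyx hFxy hFyy
    rw [hFxx, hFyy, hFxy, hFyx] at edet
    have key : dd h₁ h₂ p *
        (fderiv ℝ (Phi1 g h₁ h₂) p (1,0) * fderiv ℝ (Phi2 g h₁ h₂) p (0,1)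
          - fderiv ℝ (Phi1 g h₁ h₂) p (0,1) * fderiv ℝ (Phi2 g h₁ h₂) p (1,0)) = 0 := by
      simp only [dd]
      linear_combination edet
        + (pdy h₁ p * fderiv ℝ (Phi1 g h₁ h₂) p (0,1) + pdy h₂ p * fderiv ℝ (Phi2 g h₁ h₂) p (0,1)) * e11
        - (pdx (pdx g) p + Phi1 g h₁ h₂ p * pdx (pdx h₁) p + Phi2 g h₁ h₂ p * pdx (pdx h₂) p) * e22
        - (pdx h₁ p * fderiv ℝ (Phi1 g h₁ h₂) p (0,1) + pdx h₂ p * fderiv ℝ (Phi2 g h₁ h₂) p (0,1)) * e21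
        + (pdx (pdy g) p + Phi1 g h₁ h₂ p * pdx (pdy h₁) p + Phi2 g h₁ h₂ p * pdx (pdy h₂) p) * e12
    exact (mul_eq_zero.mp key).resolve_left hd
  · exact (Prod.ext hb1 hb2).symm

lemma measurableSet_proj {α β : Type*} [MetricSpace α] [ProperSpace α] [MeasurableSpace α]
    [OpensMeasurableSpace α] [MetricSpace β] [ProperSpace β] [Nonempty α] [Nonempty β]
    [T2Space α]
    {C : Set (α × β)} (hC : IsClosed C) : MeasurableSet {x | ∃ p, (x, p) ∈ C} := by
  obtain ⟨x₀⟩ := (inferInstance : Nonempty α)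
  obtain ⟨p₀⟩ := (inferInstance : Nonempty β)
  have key : {x | ∃ p, (x, p) ∈ C} =
      ⋃ n : ℕ, Prod.fst '' (C ∩ (Metric.closedBall x₀ n ×ˢ Metric.closedBall p₀ n)) := by
    ext x
    constructor
    · rintro ⟨p, hp⟩
      refine Set.mem_iUnion.2 ⟨⌈max (dist x x₀) (dist p p₀)⌉₊, ⟨(x, p), ⟨hp, ?_, ?_⟩, rfl⟩⟩
      · exact Metric.mem_closedBall.2 (le_trans (le_max_left _ _) (Nat.le_ceil _))
      · exact Metric.mem_closedBall.2 (le_trans (le_max_right _ _) (Nat.le_ceil _))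
    · rintro hx
      obtain ⟨n, ⟨⟨x', p⟩, ⟨hmem, _⟩, rfl⟩⟩ := Set.mem_iUnion.1 hx
      exact ⟨p, hmem⟩
  rw [key]
  refine MeasurableSet.iUnion fun n => ?_
  have hcpt : IsCompact (C ∩ (Metric.closedBall x₀ n ×ˢ Metric.closedBall p₀ n)) :=
    ((isCompact_closedBall x₀ n).prod (isCompact_closedBall p₀ n)).inter_left hC
  exact (hcpt.image continuous_fst).isClosed.measurableSet

lemma prod_null_right {α β : Type*} [MeasureSpace α] [MeasureSpace β]
    [SFinite (volume : Measure α)] [SFinite (volume : Measure β)]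
    {S : Set (α × β)} (hS : MeasurableSet S)
    (h : ∀ x : α, volume {y : β | (x, y) ∈ S} = 0) : volume S = 0 := by
  rw [Measure.volume_eq_prod, Measure.measure_prod_null hS]
  exact Filter.Eventually.of_forall fun x => h x

lemma prod_null_left {α β : Type*} [MeasureSpace α] [MeasureSpace β]
    [SFinite (volume : Measure α)] [SFinite (volume : Measure β)]
    {S : Set (α × β)} (hS : MeasurableSet S)
    (h : ∀ y : β, volume {x : α | (x, y) ∈ S} = 0) : volume S = 0 := by
  rw [Measure.volume_eq_prod]
  have hS' : MeasurableSet ((Prod.swap : β × α → α × β) ⁻¹' S) := hS.preimage measurable_swap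
  have hswap : ((volume : Measure β).prod volume) ((Prod.swap : β × α → α × β) ⁻¹' S) = 0 := by
    rw [Measure.measure_prod_null hS']
    exact Filter.Eventually.of_forall fun y => h y
  calc ((volume : Measure α).prod volume) S
      = Measure.map Prod.swap ((volume : Measure β).prod volume) S := by
        rw [Measure.prod_swap]
    _ = ((volume : Measure β).prod volume) ((Prod.swap : β × α → α × β) ⁻¹' S) := by
        rw [Measure.map_apply measurable_swap hS]
    _ = 0 := hswap

lemma exists_null_slice {α β : Type*} [MeasureSpace α] [MeasureSpace β]
    [SFinite (volume : Measure α)] [SFinite (volume : Measure β)]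
    (hβ : (volume : Measure β) ≠ 0)
    {S : Set (α × β)} (hS : MeasurableSet S)
    (h : volume S = 0) : ∃ y : β, volume {x : α | (x, y) ∈ S} = 0 := by
  have hS' : MeasurableSet ((Prod.swap : β × α → α × β) ⁻¹' S) := hS.preimage measurable_swap
  have h' : ((volume : Measure β).prod volume) ((Prod.swap : β × α → α × β) ⁻¹' S) = 0 := by
    have : Measure.map Prod.swap ((volume : Measure β).prod volume) S
        = ((volume : Measure β).prod volume) ((Prod.swap : β × α → α × β) ⁻¹' S) :=
      Measure.map_apply measurable_swap hS
    rw [← this, Measure.prod_swap, ← Measure.volume_eq_prod, h]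
  have hae := Measure.measure_ae_null_of_prod_null h'
  haveI : (ae (volume : Measure β)).NeBot := ae_neBot.mpr hβ
  obtain ⟨y, hy⟩ := hae.exists
  exact ⟨y, hy⟩

lemma pdx_cosl_fun (a b : ℝ) : pdx (fun q : ℝ×ℝ => Real.cos (a*q.1+b*q.2))
    = fun p => (-a) * Real.sin (a*p.1+b*p.2) := funext fun p => by rw [pdx_cosl]; ring
lemma pdy_cosl_fun (a b : ℝ) : pdy (fun q : ℝ×ℝ => Real.cos (a*q.1+b*q.2))
    = fun p => (-b) * Real.sin (a*p.1+b*p.2) := funext fun p => by rw [pdy_cosl]; ring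
lemma pdx_sinl_fun (a b : ℝ) : pdx (fun q : ℝ×ℝ => Real.sin (a*q.1+b*q.2))
    = fun p => a * Real.cos (a*p.1+b*p.2) := funext fun p => by rw [pdx_sinl]; ring
lemma pdy_sinl_fun (a b : ℝ) : pdy (fun q : ℝ×ℝ => Real.sin (a*q.1+b*q.2))
    = fun p => b * Real.cos (a*p.1+b*p.2) := funext fun p => by rw [pdy_sinl]; ring

lemma inEigenspace_cosl (a b : ℤ) (μ : ℝ) (hμ : μ = (a:ℝ)^2+(b:ℝ)^2) :
    InEigenspace μ (fun q : ℝ×ℝ => Real.cos ((a:ℝ)*q.1+(b:ℝ)*q.2)) := by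
  refine ⟨contDiff_cosl _ _, ?_, ?_⟩
  · intro p m n
    have harg : (a:ℝ)*(p.1 + 2*Real.pi*m)+(b:ℝ)*(p.2 + 2*Real.pi*n)
        = ((a:ℝ)*p.1+(b:ℝ)*p.2) + ((a*m+b*n : ℤ) : ℝ) * (2*Real.pi) := by push_cast; ring
    simp only [harg, Real.cos_add_int_mul_two_pi]
  · intro p
    have Dsin : Differentiable ℝ (fun q : ℝ×ℝ => Real.sin ((a:ℝ)*q.1+(b:ℝ)*q.2)) :=
      (contDiff_sinl _ _).differentiable (by simp)
    rw [pdx_cosl_fun, pdy_cosl_fun, pdx_const_mul (Dsin p), pdy_const_mul (Dsin p),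
      pdx_sinl, pdy_sinl, hμ]
    ring
lemma inEigenspace_sinl (a b : ℤ) (μ : ℝ) (hμ : μ = (a:ℝ)^2+(b:ℝ)^2) :
    InEigenspace μ (fun q : ℝ×ℝ => Real.sin ((a:ℝ)*q.1+(b:ℝ)*q.2)) := by
  refine ⟨contDiff_sinl _ _, ?_, ?_⟩
  · intro p m n
    have harg : (a:ℝ)*(p.1 + 2*Real.pi*m)+(b:ℝ)*(p.2 + 2*Real.pi*n)
        = ((a:ℝ)*p.1+(b:ℝ)*p.2) + ((a*m+b*n : ℤ) : ℝ) * (2*Real.pi) := by push_cast; ring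
    simp only [harg, Real.sin_add_int_mul_two_pi]
  · intro p
    have Dcos : Differentiable ℝ (fun q : ℝ×ℝ => Real.cos ((a:ℝ)*q.1+(b:ℝ)*q.2)) :=
      (contDiff_cosl _ _).differentiable (by simp)
    rw [pdx_sinl_fun, pdy_sinl_fun, pdx_const_mul (Dcos p), pdy_const_mul (Dcos p),
      pdx_cosl, pdy_cosl, hμ]
    ring

abbrev Bsp : Type := (ℝ×ℝ) × ((ℝ×ℝ) × ((ℝ×ℝ) × (ℝ×ℝ)))

noncomputable def shape {m : ℕ} (f : Fin m → (ℝ×ℝ→ℝ)) (g1 g2 g3 g4 g5 g6 g7 g8 : ℝ×ℝ→ℝ)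
    (a : Fin m → ℝ) (t : Bsp) : ℝ×ℝ→ℝ :=
  fun q => (∑ i, a i * f i q) +
    (t.1.1 * g1 q + t.1.2 * g2 q + (t.2.1.1 * g3 q + t.2.1.2 * g4 q +
      (t.2.2.1.1 * g5 q + t.2.2.1.2 * g6 q + (t.2.2.2.1 * g7 q + t.2.2.2.2 * g8 q))))

variable {m : ℕ} {f : Fin m → (ℝ×ℝ→ℝ)} {g1 g2 g3 g4 g5 g6 g7 g8 : ℝ×ℝ→ℝ}

lemma pdx_shape (hf : ∀ i, Differentiable ℝ (f i)) (h1 : Differentiable ℝ g1)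
    (h2 : Differentiable ℝ g2) (h3 : Differentiable ℝ g3) (h4 : Differentiable ℝ g4)
    (h5 : Differentiable ℝ g5) (h6 : Differentiable ℝ g6) (h7 : Differentiable ℝ g7)
    (h8 : Differentiable ℝ g8) (a : Fin m → ℝ) (t : Bsp) :
    pdx (shape f g1 g2 g3 g4 g5 g6 g7 g8 a t)
      = shape (fun i => pdx (f i)) (pdx g1) (pdx g2) (pdx g3) (pdx g4) (pdx g5) (pdx g6)
          (pdx g7) (pdx g8) a t := by
  funext p
  have D78 : DifferentiableAt ℝ (fun q => t.2.2.2.1 * g7 q + t.2.2.2.2 * g8 q) p :=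
    ((h7 p).const_mul _).add ((h8 p).const_mul _)
  have D5678 : DifferentiableAt ℝ (fun q => t.2.2.1.1 * g5 q + t.2.2.1.2 * g6 q
      + (t.2.2.2.1 * g7 q + t.2.2.2.2 * g8 q)) p :=
    (((h5 p).const_mul _).add ((h6 p).const_mul _)).add D78
  have D345678 : DifferentiableAt ℝ (fun q => t.2.1.1 * g3 q + t.2.1.2 * g4 q
      + (t.2.2.1.1 * g5 q + t.2.2.1.2 * g6 q
        + (t.2.2.2.1 * g7 q + t.2.2.2.2 * g8 q))) p :=
    (((h3 p).const_mul _).add ((h4 p).const_mul _)).add D5678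
  have DT : DifferentiableAt ℝ (fun q => t.1.1 * g1 q + t.1.2 * g2 q
      + (t.2.1.1 * g3 q + t.2.1.2 * g4 q + (t.2.2.1.1 * g5 q + t.2.2.1.2 * g6 q
        + (t.2.2.2.1 * g7 q + t.2.2.2.2 * g8 q)))) p :=
    (((h1 p).const_mul _).add ((h2 p).const_mul _)).add D345678
  have DS : DifferentiableAt ℝ (fun q => ∑ i, a i * f i q) p := by
    apply DifferentiableAt.fun_sum
    exact fun i _ => ((hf i) p).const_mul (a i)
  show pdx (fun q => (∑ i, a i * f i q) + _) p = _
  rw [pdx_add DS DT,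
    pdx_sum (fun i => (hf i) p) a,
    pdx_add (A := fun q => t.1.1 * g1 q + t.1.2 * g2 q) (((h1 p).const_mul _).add ((h2 p).const_mul _)) D345678,
    pdx_add ((h1 p).const_mul _) ((h2 p).const_mul _),
    pdx_add (A := fun q => t.2.1.1 * g3 q + t.2.1.2 * g4 q) (((h3 p).const_mul _).add ((h4 p).const_mul _)) D5678,
    pdx_add ((h3 p).const_mul _) ((h4 p).const_mul _),
    pdx_add (A := fun q => t.2.2.1.1 * g5 q + t.2.2.1.2 * g6 q) (((h5 p).const_mul _).add ((h6 p).const_mul _)) D78,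
    pdx_add ((h5 p).const_mul _) ((h6 p).const_mul _),
    pdx_add ((h7 p).const_mul _) ((h8 p).const_mul _),
    pdx_const_mul (h1 p), pdx_const_mul (h2 p), pdx_const_mul (h3 p), pdx_const_mul (h4 p),
    pdx_const_mul (h5 p), pdx_const_mul (h6 p), pdx_const_mul (h7 p), pdx_const_mul (h8 p)]
  rfl

lemma pdy_shape (hf : ∀ i, Differentiable ℝ (f i)) (h1 : Differentiable ℝ g1)
    (h2 : Differentiable ℝ g2) (h3 : Differentiable ℝ g3) (h4 : Differentiable ℝ g4)
    (h5 : Differentiable ℝ g5) (h6 : Differentiable ℝ g6) (h7 : Differentiable ℝ g7)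
    (h8 : Differentiable ℝ g8) (a : Fin m → ℝ) (t : Bsp) :
    pdy (shape f g1 g2 g3 g4 g5 g6 g7 g8 a t)
      = shape (fun i => pdy (f i)) (pdy g1) (pdy g2) (pdy g3) (pdy g4) (pdy g5) (pdy g6)
          (pdy g7) (pdy g8) a t := by
  funext p
  have D78 : DifferentiableAt ℝ (fun q => t.2.2.2.1 * g7 q + t.2.2.2.2 * g8 q) p :=
    ((h7 p).const_mul _).add ((h8 p).const_mul _)
  have D5678 : DifferentiableAt ℝ (fun q => t.2.2.1.1 * g5 q + t.2.2.1.2 * g6 q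
      + (t.2.2.2.1 * g7 q + t.2.2.2.2 * g8 q)) p :=
    (((h5 p).const_mul _).add ((h6 p).const_mul _)).add D78
  have D345678 : DifferentiableAt ℝ (fun q => t.2.1.1 * g3 q + t.2.1.2 * g4 q
      + (t.2.2.1.1 * g5 q + t.2.2.1.2 * g6 q
        + (t.2.2.2.1 * g7 q + t.2.2.2.2 * g8 q))) p :=
    (((h3 p).const_mul _).add ((h4 p).const_mul _)).add D5678
  have DT : DifferentiableAt ℝ (fun q => t.1.1 * g1 q + t.1.2 * g2 q
      + (t.2.1.1 * g3 q + t.2.1.2 * g4 q + (t.2.2.1.1 * g5 q + t.2.2.1.2 * g6 q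
        + (t.2.2.2.1 * g7 q + t.2.2.2.2 * g8 q)))) p :=
    (((h1 p).const_mul _).add ((h2 p).const_mul _)).add D345678
  have DS : DifferentiableAt ℝ (fun q => ∑ i, a i * f i q) p := by
    apply DifferentiableAt.fun_sum
    exact fun i _ => ((hf i) p).const_mul (a i)
  show pdy (fun q => (∑ i, a i * f i q) + _) p = _
  rw [pdy_add DS DT,
    pdy_sum (fun i => (hf i) p) a,
    pdy_add (A := fun q => t.1.1 * g1 q + t.1.2 * g2 q) (((h1 p).const_mul _).add ((h2 p).const_mul _)) D345678,
    pdy_add ((h1 p).const_mul _) ((h2 p).const_mul _),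
    pdy_add (A := fun q => t.2.1.1 * g3 q + t.2.1.2 * g4 q) (((h3 p).const_mul _).add ((h4 p).const_mul _)) D5678,
    pdy_add ((h3 p).const_mul _) ((h4 p).const_mul _),
    pdy_add (A := fun q => t.2.2.1.1 * g5 q + t.2.2.1.2 * g6 q) (((h5 p).const_mul _).add ((h6 p).const_mul _)) D78,
    pdy_add ((h5 p).const_mul _) ((h6 p).const_mul _),
    pdy_add ((h7 p).const_mul _) ((h8 p).const_mul _),
    pdy_const_mul (h1 p), pdy_const_mul (h2 p), pdy_const_mul (h3 p), pdy_const_mul (h4 p),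
    pdy_const_mul (h5 p), pdy_const_mul (h6 p), pdy_const_mul (h7 p), pdy_const_mul (h8 p)]
  rfl

lemma contDiff_shape (hf : ∀ i, ContDiff ℝ (⊤ : ℕ∞) (f i)) (h1 : ContDiff ℝ (⊤ : ℕ∞) g1)
    (h2 : ContDiff ℝ (⊤ : ℕ∞) g2) (h3 : ContDiff ℝ (⊤ : ℕ∞) g3) (h4 : ContDiff ℝ (⊤ : ℕ∞) g4)
    (h5 : ContDiff ℝ (⊤ : ℕ∞) g5) (h6 : ContDiff ℝ (⊤ : ℕ∞) g6) (h7 : ContDiff ℝ (⊤ : ℕ∞) g7)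
    (h8 : ContDiff ℝ (⊤ : ℕ∞) g8) (a : Fin m → ℝ) (t : Bsp) :
    ContDiff ℝ (⊤ : ℕ∞) (shape f g1 g2 g3 g4 g5 g6 g7 g8 a t) := by
  refine ContDiff.add (ContDiff.sum fun i _ => contDiff_const.mul (hf i)) ?_
  exact ((contDiff_const.mul h1).add (contDiff_const.mul h2)).add
    (((contDiff_const.mul h3).add (contDiff_const.mul h4)).add
      (((contDiff_const.mul h5).add (contDiff_const.mul h6)).add
        ((contDiff_const.mul h7).add (contDiff_const.mul h8))))

lemma cont_shapeEval {F : Fin m → ℝ×ℝ→ℝ} {G1 G2 G3 G4 G5 G6 G7 G8 : ℝ×ℝ→ℝ}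
    (hF : ∀ i, Continuous (F i)) (h1 : Continuous G1) (h2 : Continuous G2)
    (h3 : Continuous G3) (h4 : Continuous G4) (h5 : Continuous G5) (h6 : Continuous G6)
    (h7 : Continuous G7) (h8 : Continuous G8) :
    Continuous (fun z : ((Fin m → ℝ) × Bsp) × (ℝ×ℝ) =>
      shape F G1 G2 G3 G4 G5 G6 G7 G8 z.1.1 z.1.2 z.2) := by
  simp only [shape]
  have hq : Continuous (fun z : ((Fin m → ℝ) × Bsp) × (ℝ×ℝ) => z.2) := continuous_snd
  have ht : Continuous (fun z : ((Fin m → ℝ) × Bsp) × (ℝ×ℝ) => z.1.2) :=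
    continuous_snd.comp continuous_fst
  refine Continuous.add ?_ ?_
  · exact continuous_finset_sum _ fun i _ =>
      ((continuous_apply i).comp (continuous_fst.comp continuous_fst)).mul ((hF i).comp hq)
  · refine Continuous.add (Continuous.add ?_ ?_) (Continuous.add (Continuous.add ?_ ?_)
      (Continuous.add (Continuous.add ?_ ?_) (Continuous.add ?_ ?_)))
    · exact (continuous_fst.comp (continuous_fst.comp ht)).mul (h1.comp hq)
    · exact (continuous_snd.comp (continuous_fst.comp ht)).mul (h2.comp hq)
    · exact (continuous_fst.comp (continuous_fst.comp (continuous_snd.comp ht))).mul (h3.comp hq)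
    · exact (continuous_snd.comp (continuous_fst.comp (continuous_snd.comp ht))).mul (h4.comp hq)
    · exact (continuous_fst.comp (continuous_fst.comp (continuous_snd.comp
        (continuous_snd.comp ht)))).mul (h5.comp hq)
    · exact (continuous_snd.comp (continuous_fst.comp (continuous_snd.comp
        (continuous_snd.comp ht)))).mul (h6.comp hq)
    · exact (continuous_fst.comp (continuous_snd.comp (continuous_snd.comp
        (continuous_snd.comp ht)))).mul (h7.comp hq)
    · exact (continuous_snd.comp (continuous_snd.comp (continuous_snd.comp
        (continuous_snd.comp ht)))).mul (h8.comp hq)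


theorem stmt13 (k₁ k₂ : ℤ) (hk : (k₁, k₂) ≠ (0, 0))
    (μ : ℝ) (hμ : μ = (k₁ : ℝ) ^ 2 + (k₂ : ℝ) ^ 2)
    (m : ℕ) (f : Fin m → (ℝ × ℝ → ℝ))
    (hfmem : ∀ i, InEigenspace μ (f i))
    (hfind : LinearIndependent ℝ f)
    (hfspan : ∀ g : ℝ × ℝ → ℝ, InEigenspace μ g → g ∈ Submodule.span ℝ (Set.range f)) :
    ∀ᵐ a : Fin m → ℝ ∂volume, IsMorse (fun q => ∑ i, a i * f i q) := by
  classical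
  have hfs : ∀ i, ContDiff ℝ (⊤ : ℕ∞) (f i) := fun i => (hfmem i).1
  have hfd : ∀ i, Differentiable ℝ (f i) := fun i => (hfs i).differentiable (by simp)
  have hk' : ¬(k₁ = 0 ∧ k₂ = 0) := by simpa [Prod.ext_iff] using hk
  have hμpos : 0 < μ := by
    rcases not_and_or.mp hk' with h | h
    · have h0 : ((k₁:ℝ)) ≠ 0 := Int.cast_ne_zero.mpr h
      have h1 : 0 < (k₁:ℝ)^2 := lt_of_le_of_ne (sq_nonneg _) (Ne.symm (pow_ne_zero 2 h0))
      rw [hμ]; nlinarith [sq_nonneg ((k₂:ℝ))]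
    · have h0 : ((k₂:ℝ)) ≠ 0 := Int.cast_ne_zero.mpr h
      have h1 : 0 < (k₂:ℝ)^2 := lt_of_le_of_ne (sq_nonneg _) (Ne.symm (pow_ne_zero 2 h0))
      rw [hμ]; nlinarith [sq_nonneg ((k₁:ℝ))]
  have hμ0 : μ ≠ 0 := ne_of_gt hμpos
  -- the four basic trigonometric eigenfunctions
  set c1 : ℝ×ℝ→ℝ := fun q => Real.cos ((k₁:ℝ)*q.1+(k₂:ℝ)*q.2) with hc1def
  set s1 : ℝ×ℝ→ℝ := fun q => Real.sin ((k₁:ℝ)*q.1+(k₂:ℝ)*q.2) with hs1def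
  set c2 : ℝ×ℝ→ℝ := fun q => Real.cos (((-k₂:ℤ):ℝ)*q.1+((k₁:ℤ):ℝ)*q.2) with hc2def
  set s2 : ℝ×ℝ→ℝ := fun q => Real.sin (((-k₂:ℤ):ℝ)*q.1+((k₁:ℤ):ℝ)*q.2) with hs2def
  have hμ' : μ = ((-k₂:ℤ):ℝ)^2 + ((k₁:ℤ):ℝ)^2 := by rw [hμ]; push_cast; ring
  have hc1sm : ContDiff ℝ (⊤ : ℕ∞) c1 := contDiff_cosl _ _
  have hs1sm : ContDiff ℝ (⊤ : ℕ∞) s1 := contDiff_sinl _ _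
  have hc2sm : ContDiff ℝ (⊤ : ℕ∞) c2 := contDiff_cosl _ _
  have hs2sm : ContDiff ℝ (⊤ : ℕ∞) s2 := contDiff_sinl _ _
  have Dc1 : Differentiable ℝ c1 := hc1sm.differentiable (by simp)
  have Ds1 : Differentiable ℝ s1 := hs1sm.differentiable (by simp)
  have Dc2 : Differentiable ℝ c2 := hc2sm.differentiable (by simp)
  have Ds2 : Differentiable ℝ s2 := hs2sm.differentiable (by simp)
  -- span representations
  obtain ⟨vc1, hvc1⟩ := (Submodule.mem_span_range_iff_exists_fun ℝ).mp
    (hfspan c1 (inEigenspace_cosl k₁ k₂ μ hμ))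
  obtain ⟨vs1, hvs1⟩ := (Submodule.mem_span_range_iff_exists_fun ℝ).mp
    (hfspan s1 (inEigenspace_sinl k₁ k₂ μ hμ))
  obtain ⟨vc2, hvc2⟩ := (Submodule.mem_span_range_iff_exists_fun ℝ).mp
    (hfspan c2 (inEigenspace_cosl (-k₂) k₁ μ hμ'))
  obtain ⟨vs2, hvs2⟩ := (Submodule.mem_span_range_iff_exists_fun ℝ).mp
    (hfspan s2 (inEigenspace_sinl (-k₂) k₁ μ hμ'))
  have hvc1q : ∀ q, (∑ i, vc1 i * f i q) = c1 q := fun q => by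
    have := congrFun hvc1 q; simpa using this
  have hvs1q : ∀ q, (∑ i, vs1 i * f i q) = s1 q := fun q => by
    have := congrFun hvs1 q; simpa using this
  have hvc2q : ∀ q, (∑ i, vc2 i * f i q) = c2 q := fun q => by
    have := congrFun hvc2 q; simpa using this
  have hvs2q : ∀ q, (∑ i, vs2 i * f i q) = s2 q := fun q => by
    have := congrFun hvs2 q; simpa using this
  -- derivative families
  have hfdx : ∀ i, Differentiable ℝ (pdx (f i)) := fun i =>
    (contDiff_pdx (hfs i)).differentiable (by simp)
  have hfdy : ∀ i, Differentiable ℝ (pdy (f i)) := fun i =>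
    (contDiff_pdy (hfs i)).differentiable (by simp)
  have Dc1x : Differentiable ℝ (pdx c1) := (contDiff_pdx hc1sm).differentiable (by simp)
  have Dc1y : Differentiable ℝ (pdy c1) := (contDiff_pdy hc1sm).differentiable (by simp)
  have Ds1x : Differentiable ℝ (pdx s1) := (contDiff_pdx hs1sm).differentiable (by simp)
  have Ds1y : Differentiable ℝ (pdy s1) := (contDiff_pdy hs1sm).differentiable (by simp)
  have Dc2x : Differentiable ℝ (pdx c2) := (contDiff_pdx hc2sm).differentiable (by simp)
  have Dc2y : Differentiable ℝ (pdy c2) := (contDiff_pdy hc2sm).differentiable (by simp)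
  have Ds2x : Differentiable ℝ (pdx s2) := (contDiff_pdx hs2sm).differentiable (by simp)
  have Ds2y : Differentiable ℝ (pdy s2) := (contDiff_pdy hs2sm).differentiable (by simp)
  have hPdx : ∀ (a : Fin m → ℝ) (t : Bsp), pdx (shape f c1 c2 c1 s2 s1 c2 s1 s2 a t)
      = shape (fun i => pdx (f i)) (pdx c1) (pdx c2) (pdx c1) (pdx s2) (pdx s1) (pdx c2)
          (pdx s1) (pdx s2) a t :=
    fun a t => pdx_shape hfd Dc1 Dc2 Dc1 Ds2 Ds1 Dc2 Ds1 Ds2 a t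
  have hPdy : ∀ (a : Fin m → ℝ) (t : Bsp), pdy (shape f c1 c2 c1 s2 s1 c2 s1 s2 a t)
      = shape (fun i => pdy (f i)) (pdy c1) (pdy c2) (pdy c1) (pdy s2) (pdy s1) (pdy c2)
          (pdy s1) (pdy s2) a t :=
    fun a t => pdy_shape hfd Dc1 Dc2 Dc1 Ds2 Ds1 Dc2 Ds1 Ds2 a t
  have hPdxx : ∀ (a : Fin m → ℝ) (t : Bsp), pdx (pdx (shape f c1 c2 c1 s2 s1 c2 s1 s2 a t))
      = shape (fun i => pdx (pdx (f i))) (pdx (pdx c1)) (pdx (pdx c2)) (pdx (pdx c1))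
          (pdx (pdx s2)) (pdx (pdx s1)) (pdx (pdx c2)) (pdx (pdx s1)) (pdx (pdx s2)) a t :=
    fun a t => by
      rw [hPdx a t]; exact pdx_shape hfdx Dc1x Dc2x Dc1x Ds2x Ds1x Dc2x Ds1x Ds2x a t
  have hPdyx : ∀ (a : Fin m → ℝ) (t : Bsp), pdy (pdx (shape f c1 c2 c1 s2 s1 c2 s1 s2 a t))
      = shape (fun i => pdy (pdx (f i))) (pdy (pdx c1)) (pdy (pdx c2)) (pdy (pdx c1))
          (pdy (pdx s2)) (pdy (pdx s1)) (pdy (pdx c2)) (pdy (pdx s1)) (pdy (pdx s2)) a t :=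
    fun a t => by
      rw [hPdx a t]; exact pdy_shape hfdx Dc1x Dc2x Dc1x Ds2x Ds1x Dc2x Ds1x Ds2x a t
  have hPdxy : ∀ (a : Fin m → ℝ) (t : Bsp), pdx (pdy (shape f c1 c2 c1 s2 s1 c2 s1 s2 a t))
      = shape (fun i => pdx (pdy (f i))) (pdx (pdy c1)) (pdx (pdy c2)) (pdx (pdy c1))
          (pdx (pdy s2)) (pdx (pdy s1)) (pdx (pdy c2)) (pdx (pdy s1)) (pdx (pdy s2)) a t :=
    fun a t => by
      rw [hPdy a t]; exact pdx_shape hfdy Dc1y Dc2y Dc1y Ds2y Ds1y Dc2y Ds1y Ds2y a t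
  have hPdyy : ∀ (a : Fin m → ℝ) (t : Bsp), pdy (pdy (shape f c1 c2 c1 s2 s1 c2 s1 s2 a t))
      = shape (fun i => pdy (pdy (f i))) (pdy (pdy c1)) (pdy (pdy c2)) (pdy (pdy c1))
          (pdy (pdy s2)) (pdy (pdy s1)) (pdy (pdy c2)) (pdy (pdy s1)) (pdy (pdy s2)) a t :=
    fun a t => by
      rw [hPdy a t]; exact pdy_shape hfdy Dc1y Dc2y Dc1y Ds2y Ds1y Dc2y Ds1y Ds2y a t
  -- the closed "bad point" set and its projection
  set W1 : ((Fin m → ℝ) × Bsp) × (ℝ×ℝ) → ℝ := fun z =>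
    shape (fun i => pdx (f i)) (pdx c1) (pdx c2) (pdx c1) (pdx s2) (pdx s1) (pdx c2)
      (pdx s1) (pdx s2) z.1.1 z.1.2 z.2 with hW1def
  set W2 : ((Fin m → ℝ) × Bsp) × (ℝ×ℝ) → ℝ := fun z =>
    shape (fun i => pdy (f i)) (pdy c1) (pdy c2) (pdy c1) (pdy s2) (pdy s1) (pdy c2)
      (pdy s1) (pdy s2) z.1.1 z.1.2 z.2 with hW2def
  set Wxx : ((Fin m → ℝ) × Bsp) × (ℝ×ℝ) → ℝ := fun z =>
    shape (fun i => pdx (pdx (f i))) (pdx (pdx c1)) (pdx (pdx c2)) (pdx (pdx c1))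
      (pdx (pdx s2)) (pdx (pdx s1)) (pdx (pdx c2)) (pdx (pdx s1)) (pdx (pdx s2))
      z.1.1 z.1.2 z.2 with hWxxdef
  set Wyx : ((Fin m → ℝ) × Bsp) × (ℝ×ℝ) → ℝ := fun z =>
    shape (fun i => pdy (pdx (f i))) (pdy (pdx c1)) (pdy (pdx c2)) (pdy (pdx c1))
      (pdy (pdx s2)) (pdy (pdx s1)) (pdy (pdx c2)) (pdy (pdx s1)) (pdy (pdx s2))
      z.1.1 z.1.2 z.2 with hWyxdef
  set Wxy : ((Fin m → ℝ) × Bsp) × (ℝ×ℝ) → ℝ := fun z =>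
    shape (fun i => pdx (pdy (f i))) (pdx (pdy c1)) (pdx (pdy c2)) (pdx (pdy c1))
      (pdx (pdy s2)) (pdx (pdy s1)) (pdx (pdy c2)) (pdx (pdy s1)) (pdx (pdy s2))
      z.1.1 z.1.2 z.2 with hWxydef
  set Wyy : ((Fin m → ℝ) × Bsp) × (ℝ×ℝ) → ℝ := fun z =>
    shape (fun i => pdy (pdy (f i))) (pdy (pdy c1)) (pdy (pdy c2)) (pdy (pdy c1))
      (pdy (pdy s2)) (pdy (pdy s1)) (pdy (pdy c2)) (pdy (pdy s1)) (pdy (pdy s2))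
      z.1.1 z.1.2 z.2 with hWyydef
  set W3 : ((Fin m → ℝ) × Bsp) × (ℝ×ℝ) → ℝ := fun z => Wxx z * Wyy z - Wxy z * Wyx z
    with hW3def
  set Cset : Set (((Fin m → ℝ) × Bsp) × (ℝ×ℝ)) :=
    W1 ⁻¹' {0} ∩ (W2 ⁻¹' {0} ∩ W3 ⁻¹' {0}) with hCsetdef
  have hW1cont : Continuous W1 := cont_shapeEval
    (fun i => (contDiff_pdx (hfs i)).continuous) (contDiff_pdx hc1sm).continuous
    (contDiff_pdx hc2sm).continuous (contDiff_pdx hc1sm).continuous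
    (contDiff_pdx hs2sm).continuous (contDiff_pdx hs1sm).continuous
    (contDiff_pdx hc2sm).continuous (contDiff_pdx hs1sm).continuous
    (contDiff_pdx hs2sm).continuous
  have hW2cont : Continuous W2 := cont_shapeEval
    (fun i => (contDiff_pdy (hfs i)).continuous) (contDiff_pdy hc1sm).continuous
    (contDiff_pdy hc2sm).continuous (contDiff_pdy hc1sm).continuous
    (contDiff_pdy hs2sm).continuous (contDiff_pdy hs1sm).continuous
    (contDiff_pdy hc2sm).continuous (contDiff_pdy hs1sm).continuous
    (contDiff_pdy hs2sm).continuous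
  have hWxxcont : Continuous Wxx := cont_shapeEval
    (fun i => (contDiff_pdx (contDiff_pdx (hfs i))).continuous)
    (contDiff_pdx (contDiff_pdx hc1sm)).continuous
    (contDiff_pdx (contDiff_pdx hc2sm)).continuous
    (contDiff_pdx (contDiff_pdx hc1sm)).continuous
    (contDiff_pdx (contDiff_pdx hs2sm)).continuous
    (contDiff_pdx (contDiff_pdx hs1sm)).continuous
    (contDiff_pdx (contDiff_pdx hc2sm)).continuous
    (contDiff_pdx (contDiff_pdx hs1sm)).continuous
    (contDiff_pdx (contDiff_pdx hs2sm)).continuous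
  have hWyxcont : Continuous Wyx := cont_shapeEval
    (fun i => (contDiff_pdy (contDiff_pdx (hfs i))).continuous)
    (contDiff_pdy (contDiff_pdx hc1sm)).continuous
    (contDiff_pdy (contDiff_pdx hc2sm)).continuous
    (contDiff_pdy (contDiff_pdx hc1sm)).continuous
    (contDiff_pdy (contDiff_pdx hs2sm)).continuous
    (contDiff_pdy (contDiff_pdx hs1sm)).continuous
    (contDiff_pdy (contDiff_pdx hc2sm)).continuous
    (contDiff_pdy (contDiff_pdx hs1sm)).continuous
    (contDiff_pdy (contDiff_pdx hs2sm)).continuous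
  have hWxycont : Continuous Wxy := cont_shapeEval
    (fun i => (contDiff_pdx (contDiff_pdy (hfs i))).continuous)
    (contDiff_pdx (contDiff_pdy hc1sm)).continuous
    (contDiff_pdx (contDiff_pdy hc2sm)).continuous
    (contDiff_pdx (contDiff_pdy hc1sm)).continuous
    (contDiff_pdx (contDiff_pdy hs2sm)).continuous
    (contDiff_pdx (contDiff_pdy hs1sm)).continuous
    (contDiff_pdx (contDiff_pdy hc2sm)).continuous
    (contDiff_pdx (contDiff_pdy hs1sm)).continuous
    (contDiff_pdx (contDiff_pdy hs2sm)).continuous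
  have hWyycont : Continuous Wyy := cont_shapeEval
    (fun i => (contDiff_pdy (contDiff_pdy (hfs i))).continuous)
    (contDiff_pdy (contDiff_pdy hc1sm)).continuous
    (contDiff_pdy (contDiff_pdy hc2sm)).continuous
    (contDiff_pdy (contDiff_pdy hc1sm)).continuous
    (contDiff_pdy (contDiff_pdy hs2sm)).continuous
    (contDiff_pdy (contDiff_pdy hs1sm)).continuous
    (contDiff_pdy (contDiff_pdy hc2sm)).continuous
    (contDiff_pdy (contDiff_pdy hs1sm)).continuous
    (contDiff_pdy (contDiff_pdy hs2sm)).continuous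
  have hW3cont : Continuous W3 := (hWxxcont.mul hWyycont).sub (hWxycont.mul hWyxcont)
  have hCclosed : IsClosed Cset := by
    exact (isClosed_singleton.preimage hW1cont).inter
      ((isClosed_singleton.preimage hW2cont).inter (isClosed_singleton.preimage hW3cont))
  -- regions
  set V1 : Set (ℝ×ℝ) := (fun p : ℝ×ℝ => Real.sin ((k₁:ℝ)*p.1+(k₂:ℝ)*p.2)^2) ⁻¹' Set.Ici (1/2)
      ∩ (fun p : ℝ×ℝ => Real.sin (((-k₂:ℤ):ℝ)*p.1+((k₁:ℤ):ℝ)*p.2)^2) ⁻¹' Set.Ici (1/2)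
    with hV1def
  set V2 : Set (ℝ×ℝ) := (fun p : ℝ×ℝ => Real.sin ((k₁:ℝ)*p.1+(k₂:ℝ)*p.2)^2) ⁻¹' Set.Ici (1/2)
      ∩ (fun p : ℝ×ℝ => Real.cos (((-k₂:ℤ):ℝ)*p.1+((k₁:ℤ):ℝ)*p.2)^2) ⁻¹' Set.Ici (1/2)
    with hV2def
  set V3 : Set (ℝ×ℝ) := (fun p : ℝ×ℝ => Real.cos ((k₁:ℝ)*p.1+(k₂:ℝ)*p.2)^2) ⁻¹' Set.Ici (1/2)
      ∩ (fun p : ℝ×ℝ => Real.sin (((-k₂:ℤ):ℝ)*p.1+((k₁:ℤ):ℝ)*p.2)^2) ⁻¹' Set.Ici (1/2)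
    with hV3def
  set V4 : Set (ℝ×ℝ) := (fun p : ℝ×ℝ => Real.cos ((k₁:ℝ)*p.1+(k₂:ℝ)*p.2)^2) ⁻¹' Set.Ici (1/2)
      ∩ (fun p : ℝ×ℝ => Real.cos (((-k₂:ℤ):ℝ)*p.1+((k₁:ℤ):ℝ)*p.2)^2) ⁻¹' Set.Ici (1/2)
    with hV4def
  set U1 : Set (ℝ×ℝ) := {p | Real.sin ((k₁:ℝ)*p.1+(k₂:ℝ)*p.2) ≠ 0
      ∧ Real.sin (((-k₂:ℤ):ℝ)*p.1+((k₁:ℤ):ℝ)*p.2) ≠ 0} with hU1def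
  set U2 : Set (ℝ×ℝ) := {p | Real.sin ((k₁:ℝ)*p.1+(k₂:ℝ)*p.2) ≠ 0
      ∧ Real.cos (((-k₂:ℤ):ℝ)*p.1+((k₁:ℤ):ℝ)*p.2) ≠ 0} with hU2def
  set U3 : Set (ℝ×ℝ) := {p | Real.cos ((k₁:ℝ)*p.1+(k₂:ℝ)*p.2) ≠ 0
      ∧ Real.sin (((-k₂:ℤ):ℝ)*p.1+((k₁:ℤ):ℝ)*p.2) ≠ 0} with hU3def
  set U4 : Set (ℝ×ℝ) := {p | Real.cos ((k₁:ℝ)*p.1+(k₂:ℝ)*p.2) ≠ 0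
      ∧ Real.cos (((-k₂:ℤ):ℝ)*p.1+((k₁:ℤ):ℝ)*p.2) ≠ 0} with hU4def
  have hlin1 : Continuous (fun p : ℝ×ℝ => (k₁:ℝ)*p.1+(k₂:ℝ)*p.2) :=
    (continuous_const.mul continuous_fst).add (continuous_const.mul continuous_snd)
  have hlin2 : Continuous (fun p : ℝ×ℝ => ((-k₂:ℤ):ℝ)*p.1+((k₁:ℤ):ℝ)*p.2) :=
    (continuous_const.mul continuous_fst).add (continuous_const.mul continuous_snd)
  have hU1open : IsOpen U1 := by
    rw [hU1def]
    have e : {p : ℝ×ℝ | Real.sin ((k₁:ℝ)*p.1+(k₂:ℝ)*p.2) ≠ 0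
        ∧ Real.sin (((-k₂:ℤ):ℝ)*p.1+((k₁:ℤ):ℝ)*p.2) ≠ 0}
        = (fun p : ℝ×ℝ => Real.sin ((k₁:ℝ)*p.1+(k₂:ℝ)*p.2)) ⁻¹' {(0:ℝ)}ᶜ
          ∩ (fun p : ℝ×ℝ => Real.sin (((-k₂:ℤ):ℝ)*p.1+((k₁:ℤ):ℝ)*p.2)) ⁻¹' {(0:ℝ)}ᶜ := by
      ext p; simp [Set.mem_inter_iff]
    rw [e]
    exact (isOpen_compl_singleton.preimage (Real.continuous_sin.comp hlin1)).inter
      (isOpen_compl_singleton.preimage (Real.continuous_sin.comp hlin2))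
  have hU2open : IsOpen U2 := by
    rw [hU2def]
    have e : {p : ℝ×ℝ | Real.sin ((k₁:ℝ)*p.1+(k₂:ℝ)*p.2) ≠ 0
        ∧ Real.cos (((-k₂:ℤ):ℝ)*p.1+((k₁:ℤ):ℝ)*p.2) ≠ 0}
        = (fun p : ℝ×ℝ => Real.sin ((k₁:ℝ)*p.1+(k₂:ℝ)*p.2)) ⁻¹' {(0:ℝ)}ᶜ
          ∩ (fun p : ℝ×ℝ => Real.cos (((-k₂:ℤ):ℝ)*p.1+((k₁:ℤ):ℝ)*p.2)) ⁻¹' {(0:ℝ)}ᶜ := by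
      ext p; simp [Set.mem_inter_iff]
    rw [e]
    exact (isOpen_compl_singleton.preimage (Real.continuous_sin.comp hlin1)).inter
      (isOpen_compl_singleton.preimage (Real.continuous_cos.comp hlin2))
  have hU3open : IsOpen U3 := by
    rw [hU3def]
    have e : {p : ℝ×ℝ | Real.cos ((k₁:ℝ)*p.1+(k₂:ℝ)*p.2) ≠ 0
        ∧ Real.sin (((-k₂:ℤ):ℝ)*p.1+((k₁:ℤ):ℝ)*p.2) ≠ 0}
        = (fun p : ℝ×ℝ => Real.cos ((k₁:ℝ)*p.1+(k₂:ℝ)*p.2)) ⁻¹' {(0:ℝ)}ᶜ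
          ∩ (fun p : ℝ×ℝ => Real.sin (((-k₂:ℤ):ℝ)*p.1+((k₁:ℤ):ℝ)*p.2)) ⁻¹' {(0:ℝ)}ᶜ := by
      ext p; simp [Set.mem_inter_iff]
    rw [e]
    exact (isOpen_compl_singleton.preimage (Real.continuous_cos.comp hlin1)).inter
      (isOpen_compl_singleton.preimage (Real.continuous_sin.comp hlin2))
  have hU4open : IsOpen U4 := by
    rw [hU4def]
    have e : {p : ℝ×ℝ | Real.cos ((k₁:ℝ)*p.1+(k₂:ℝ)*p.2) ≠ 0
        ∧ Real.cos (((-k₂:ℤ):ℝ)*p.1+((k₁:ℤ):ℝ)*p.2) ≠ 0}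
        = (fun p : ℝ×ℝ => Real.cos ((k₁:ℝ)*p.1+(k₂:ℝ)*p.2)) ⁻¹' {(0:ℝ)}ᶜ
          ∩ (fun p : ℝ×ℝ => Real.cos (((-k₂:ℤ):ℝ)*p.1+((k₁:ℤ):ℝ)*p.2)) ⁻¹' {(0:ℝ)}ᶜ := by
      ext p; simp [Set.mem_inter_iff]
    rw [e]
    exact (isOpen_compl_singleton.preimage (Real.continuous_cos.comp hlin1)).inter
      (isOpen_compl_singleton.preimage (Real.continuous_cos.comp hlin2))
  have sqne : ∀ x : ℝ, (1:ℝ)/2 ≤ x^2 → x ≠ 0 := by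
    intro x hx h0; rw [h0] at hx; norm_num at hx
  have hV1U1 : V1 ⊆ U1 := fun p hp => ⟨sqne _ hp.1, sqne _ hp.2⟩
  have hV2U2 : V2 ⊆ U2 := fun p hp => ⟨sqne _ hp.1, sqne _ hp.2⟩
  have hV3U3 : V3 ⊆ U3 := fun p hp => ⟨sqne _ hp.1, sqne _ hp.2⟩
  have hV4U4 : V4 ⊆ U4 := fun p hp => ⟨sqne _ hp.1, sqne _ hp.2⟩
  have hV1closed : IsClosed V1 :=
    (isClosed_Ici.preimage ((Real.continuous_sin.comp hlin1).pow 2)).inter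
      (isClosed_Ici.preimage ((Real.continuous_sin.comp hlin2).pow 2))
  have hV2closed : IsClosed V2 :=
    (isClosed_Ici.preimage ((Real.continuous_sin.comp hlin1).pow 2)).inter
      (isClosed_Ici.preimage ((Real.continuous_cos.comp hlin2).pow 2))
  have hV3closed : IsClosed V3 :=
    (isClosed_Ici.preimage ((Real.continuous_cos.comp hlin1).pow 2)).inter
      (isClosed_Ici.preimage ((Real.continuous_sin.comp hlin2).pow 2))
  have hV4closed : IsClosed V4 :=
    (isClosed_Ici.preimage ((Real.continuous_cos.comp hlin1).pow 2)).inter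
      (isClosed_Ici.preimage ((Real.continuous_cos.comp hlin2).pow 2))
  have hcover : ∀ p : ℝ×ℝ, p ∈ V1 ∪ (V2 ∪ (V3 ∪ V4)) := by
    intro p
    have h1 : (1:ℝ)/2 ≤ Real.sin ((k₁:ℝ)*p.1+(k₂:ℝ)*p.2)^2
        ∨ (1:ℝ)/2 ≤ Real.cos ((k₁:ℝ)*p.1+(k₂:ℝ)*p.2)^2 := by
      have := Real.sin_sq_add_cos_sq ((k₁:ℝ)*p.1+(k₂:ℝ)*p.2)
      by_contra hcon; push_neg at hcon; linarith [hcon.1, hcon.2]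
    have h2 : (1:ℝ)/2 ≤ Real.sin (((-k₂:ℤ):ℝ)*p.1+((k₁:ℤ):ℝ)*p.2)^2
        ∨ (1:ℝ)/2 ≤ Real.cos (((-k₂:ℤ):ℝ)*p.1+((k₁:ℤ):ℝ)*p.2)^2 := by
      have := Real.sin_sq_add_cos_sq (((-k₂:ℤ):ℝ)*p.1+((k₁:ℤ):ℝ)*p.2)
      by_contra hcon; push_neg at hcon; linarith [hcon.1, hcon.2]
    rcases h1 with ha | ha <;> rcases h2 with hb | hb
    · exact Or.inl ⟨ha, hb⟩
    · exact Or.inr (Or.inl ⟨ha, hb⟩)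
    · exact Or.inr (Or.inr (Or.inl ⟨ha, hb⟩))
    · exact Or.inr (Or.inr (Or.inr ⟨ha, hb⟩))
  -- determinants of the gradient pairs
  have hdd1 : ∀ p ∈ U1, dd c1 c2 p ≠ 0 := by
    intro p hp
    have heq : dd c1 c2 p = Real.sin ((k₁:ℝ)*p.1+(k₂:ℝ)*p.2)
        * Real.sin (((-k₂:ℤ):ℝ)*p.1+((k₁:ℤ):ℝ)*p.2) * μ := by
      simp only [dd, hc1def, hc2def, pdx_cosl, pdy_cosl]
      rw [hμ]; push_cast; ring
    rw [heq]
    exact mul_ne_zero (mul_ne_zero hp.1 hp.2) hμ0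
  have hdd2 : ∀ p ∈ U2, dd c1 s2 p ≠ 0 := by
    intro p hp
    have heq : dd c1 s2 p = -(Real.sin ((k₁:ℝ)*p.1+(k₂:ℝ)*p.2)
        * Real.cos (((-k₂:ℤ):ℝ)*p.1+((k₁:ℤ):ℝ)*p.2) * μ) := by
      simp only [dd, hc1def, hs2def, pdx_cosl, pdy_cosl, pdx_sinl, pdy_sinl]
      rw [hμ]; push_cast; ring
    rw [heq]
    exact neg_ne_zero.mpr (mul_ne_zero (mul_ne_zero hp.1 hp.2) hμ0)
  have hdd3 : ∀ p ∈ U3, dd s1 c2 p ≠ 0 := by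
    intro p hp
    have heq : dd s1 c2 p = -(Real.cos ((k₁:ℝ)*p.1+(k₂:ℝ)*p.2)
        * Real.sin (((-k₂:ℤ):ℝ)*p.1+((k₁:ℤ):ℝ)*p.2) * μ) := by
      simp only [dd, hs1def, hc2def, pdx_cosl, pdy_cosl, pdx_sinl, pdy_sinl]
      rw [hμ]; push_cast; ring
    rw [heq]
    exact neg_ne_zero.mpr (mul_ne_zero (mul_ne_zero hp.1 hp.2) hμ0)
  have hdd4 : ∀ p ∈ U4, dd s1 s2 p ≠ 0 := by
    intro p hp
    have heq : dd s1 s2 p = Real.cos ((k₁:ℝ)*p.1+(k₂:ℝ)*p.2)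
        * Real.cos (((-k₂:ℤ):ℝ)*p.1+((k₁:ℤ):ℝ)*p.2) * μ := by
      simp only [dd, hs1def, hs2def, pdx_sinl, pdy_sinl]
      rw [hμ]; push_cast; ring
    rw [heq]
    exact mul_ne_zero (mul_ne_zero hp.1 hp.2) hμ0
  -- bad parameter sets
  set T : Set ((Fin m → ℝ) × Bsp) := {x | ∃ p : ℝ×ℝ, (x, p) ∈ Cset} with hTdef
  set T1 : Set ((Fin m → ℝ) × Bsp) :=
    {x | ∃ p : ℝ×ℝ, (x, p) ∈ Cset ∩ Prod.snd ⁻¹' V1} with hT1def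
  set T2 : Set ((Fin m → ℝ) × Bsp) :=
    {x | ∃ p : ℝ×ℝ, (x, p) ∈ Cset ∩ Prod.snd ⁻¹' V2} with hT2def
  set T3 : Set ((Fin m → ℝ) × Bsp) :=
    {x | ∃ p : ℝ×ℝ, (x, p) ∈ Cset ∩ Prod.snd ⁻¹' V3} with hT3def
  set T4 : Set ((Fin m → ℝ) × Bsp) :=
    {x | ∃ p : ℝ×ℝ, (x, p) ∈ Cset ∩ Prod.snd ⁻¹' V4} with hT4def
  have hTmeas : MeasurableSet T := measurableSet_proj hCclosed
  have hT1meas : MeasurableSet T1 :=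
    measurableSet_proj (hCclosed.inter (hV1closed.preimage continuous_snd))
  have hT2meas : MeasurableSet T2 :=
    measurableSet_proj (hCclosed.inter (hV2closed.preimage continuous_snd))
  have hT3meas : MeasurableSet T3 :=
    measurableSet_proj (hCclosed.inter (hV3closed.preimage continuous_snd))
  have hT4meas : MeasurableSet T4 :=
    measurableSet_proj (hCclosed.inter (hV4closed.preimage continuous_snd))
  have hTsub : T ⊆ T1 ∪ (T2 ∪ (T3 ∪ T4)) := by
    rintro x ⟨p, hp⟩
    rcases hcover p with h | h | h | h
    · exact Or.inl ⟨p, hp, h⟩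
    · exact Or.inr (Or.inl ⟨p, hp, h⟩)
    · exact Or.inr (Or.inr (Or.inl ⟨p, hp, h⟩))
    · exact Or.inr (Or.inr (Or.inr ⟨p, hp, h⟩))
  have hT1null : volume T1 = 0 := by
    refine prod_null_right hT1meas (fun a => ?_)
    have hSa : MeasurableSet {t : Bsp | (a, t) ∈ T1} :=
      hT1meas.preimage measurable_prodMk_left
    refine prod_null_left hSa (fun rest => ?_)
    set gA : ℝ×ℝ→ℝ := fun q => (∑ i, a i * f i q) +
      (rest.1.1 * c1 q + rest.1.2 * s2 q + (rest.2.1.1 * s1 q + rest.2.1.2 * c2 q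
        + (rest.2.2.1 * s1 q + rest.2.2.2 * s2 q))) with hgAdef
    have hgAsm : ContDiff ℝ (⊤ : ℕ∞) gA := by
      rw [hgAdef]
      exact (ContDiff.sum fun i _ => contDiff_const.mul (hfs i)).add
        (((contDiff_const.mul hc1sm).add (contDiff_const.mul hs2sm)).add
          (((contDiff_const.mul hs1sm).add (contDiff_const.mul hc2sm)).add
            ((contDiff_const.mul hs1sm).add (contDiff_const.mul hs2sm))))
    refine measure_mono_null ?_ (core gA c1 c2 hgAsm hc1sm hc2sm U1 hU1open hdd1)
    rintro b ⟨p, hpC, hpV⟩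
    have hfe : shape f c1 c2 c1 s2 s1 c2 s1 s2 a (b, rest)
        = fun q => gA q + b.1 * c1 q + b.2 * c2 q := by
      funext q; simp only [shape, hgAdef]; ring
    have h1 : W1 ((a, (b, rest)), p) = 0 := hpC.1
    have h2 : W2 ((a, (b, rest)), p) = 0 := hpC.2.1
    have h3 : Wxx ((a, (b, rest)), p) * Wyy ((a, (b, rest)), p)
        - Wxy ((a, (b, rest)), p) * Wyx ((a, (b, rest)), p) = 0 := hpC.2.2
    refine ⟨p, hV1U1 hpV, ?_, ?_, ?_⟩
    · have e1 : pdx (fun q => gA q + b.1 * c1 q + b.2 * c2 q) p = W1 ((a, (b, rest)), p) := by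
        rw [← hfe]; exact congrFun (hPdx a (b, rest)) p
      rw [e1]; exact h1
    · have e2 : pdy (fun q => gA q + b.1 * c1 q + b.2 * c2 q) p = W2 ((a, (b, rest)), p) := by
        rw [← hfe]; exact congrFun (hPdy a (b, rest)) p
      rw [e2]; exact h2
    · have exx : pdx (pdx (fun q => gA q + b.1 * c1 q + b.2 * c2 q)) p
          = Wxx ((a, (b, rest)), p) := by
        rw [← hfe]; exact congrFun (hPdxx a (b, rest)) p
      have eyy : pdy (pdy (fun q => gA q + b.1 * c1 q + b.2 * c2 q)) p
          = Wyy ((a, (b, rest)), p) := by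
        rw [← hfe]; exact congrFun (hPdyy a (b, rest)) p
      have exy : pdx (pdy (fun q => gA q + b.1 * c1 q + b.2 * c2 q)) p
          = Wxy ((a, (b, rest)), p) := by
        rw [← hfe]; exact congrFun (hPdxy a (b, rest)) p
      have eyx : pdy (pdx (fun q => gA q + b.1 * c1 q + b.2 * c2 q)) p
          = Wyx ((a, (b, rest)), p) := by
        rw [← hfe]; exact congrFun (hPdyx a (b, rest)) p
      rw [exx, eyy, exy, eyx]; exact h3
  have hT2null : volume T2 = 0 := by
    refine prod_null_right hT2meas (fun a => ?_)
    have hSa : MeasurableSet {t : Bsp | (a, t) ∈ T2} :=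
      hT2meas.preimage measurable_prodMk_left
    refine prod_null_right hSa (fun b1 => ?_)
    have hSb1 : MeasurableSet {r : (ℝ×ℝ) × ((ℝ×ℝ) × (ℝ×ℝ)) | (a, (b1, r)) ∈ T2} :=
      hSa.preimage measurable_prodMk_left
    refine prod_null_left hSb1 (fun r34 => ?_)
    set gA : ℝ×ℝ→ℝ := fun q => (∑ i, a i * f i q) + (b1.1 * c1 q + b1.2 * c2 q + (r34.1.1 * s1 q + r34.1.2 * c2 q
        + (r34.2.1 * s1 q + r34.2.2 * s2 q))) with hgAdef
    have hgAsm : ContDiff ℝ (⊤ : ℕ∞) gA := by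
      rw [hgAdef]
      exact (ContDiff.sum fun i _ => contDiff_const.mul (hfs i)).add
        (((contDiff_const.mul hc1sm).add (contDiff_const.mul hc2sm)).add
          (((contDiff_const.mul hs1sm).add (contDiff_const.mul hc2sm)).add
            ((contDiff_const.mul hs1sm).add (contDiff_const.mul hs2sm))))
    refine measure_mono_null ?_ (core gA c1 s2 hgAsm hc1sm hs2sm U2 hU2open hdd2)
    rintro b ⟨p, hpC, hpV⟩
    have hfe : shape f c1 c2 c1 s2 s1 c2 s1 s2 a (b1, (b, r34))
        = fun q => gA q + b.1 * c1 q + b.2 * s2 q := by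
      funext q; simp only [shape, hgAdef]; ring
    have h1 : W1 ((a, (b1, (b, r34))), p) = 0 := hpC.1
    have h2 : W2 ((a, (b1, (b, r34))), p) = 0 := hpC.2.1
    have h3 : Wxx ((a, (b1, (b, r34))), p) * Wyy ((a, (b1, (b, r34))), p)
        - Wxy ((a, (b1, (b, r34))), p) * Wyx ((a, (b1, (b, r34))), p) = 0 := hpC.2.2
    refine ⟨p, hV2U2 hpV, ?_, ?_, ?_⟩
    · have e1 : pdx (fun q => gA q + b.1 * c1 q + b.2 * s2 q) p = W1 ((a, (b1, (b, r34))), p) := by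
        rw [← hfe]; exact congrFun (hPdx a (b1, (b, r34))) p
      rw [e1]; exact h1
    · have e2 : pdy (fun q => gA q + b.1 * c1 q + b.2 * s2 q) p = W2 ((a, (b1, (b, r34))), p) := by
        rw [← hfe]; exact congrFun (hPdy a (b1, (b, r34))) p
      rw [e2]; exact h2
    · have exx : pdx (pdx (fun q => gA q + b.1 * c1 q + b.2 * s2 q)) p = Wxx ((a, (b1, (b, r34))), p) := by
        rw [← hfe]; exact congrFun (hPdxx a (b1, (b, r34))) p
      have eyy : pdy (pdy (fun q => gA q + b.1 * c1 q + b.2 * s2 q)) p = Wyy ((a, (b1, (b, r34))), p) := by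
        rw [← hfe]; exact congrFun (hPdyy a (b1, (b, r34))) p
      have exy : pdx (pdy (fun q => gA q + b.1 * c1 q + b.2 * s2 q)) p = Wxy ((a, (b1, (b, r34))), p) := by
        rw [← hfe]; exact congrFun (hPdxy a (b1, (b, r34))) p
      have eyx : pdy (pdx (fun q => gA q + b.1 * c1 q + b.2 * s2 q)) p = Wyx ((a, (b1, (b, r34))), p) := by
        rw [← hfe]; exact congrFun (hPdyx a (b1, (b, r34))) p
      rw [exx, eyy, exy, eyx]; exact h3
  have hT3null : volume T3 = 0 := by
    refine prod_null_right hT3meas (fun a => ?_)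
    have hSa : MeasurableSet {t : Bsp | (a, t) ∈ T3} :=
      hT3meas.preimage measurable_prodMk_left
    refine prod_null_right hSa (fun b1 => ?_)
    have hSb1 : MeasurableSet {r : (ℝ×ℝ) × ((ℝ×ℝ) × (ℝ×ℝ)) | (a, (b1, r)) ∈ T3} :=
      hSa.preimage measurable_prodMk_left
    refine prod_null_right hSb1 (fun b2 => ?_)
    have hSb2 : MeasurableSet {r : (ℝ×ℝ) × (ℝ×ℝ) | (a, (b1, (b2, r))) ∈ T3} :=
      hSb1.preimage measurable_prodMk_left
    refine prod_null_left hSb2 (fun b4 => ?_)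
    set gA : ℝ×ℝ→ℝ := fun q => (∑ i, a i * f i q) + (b1.1 * c1 q + b1.2 * c2 q + (b2.1 * c1 q + b2.2 * s2 q
        + (b4.1 * s1 q + b4.2 * s2 q))) with hgAdef
    have hgAsm : ContDiff ℝ (⊤ : ℕ∞) gA := by
      rw [hgAdef]
      exact (ContDiff.sum fun i _ => contDiff_const.mul (hfs i)).add
        (((contDiff_const.mul hc1sm).add (contDiff_const.mul hc2sm)).add
          (((contDiff_const.mul hc1sm).add (contDiff_const.mul hs2sm)).add
            ((contDiff_const.mul hs1sm).add (contDiff_const.mul hs2sm))))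
    refine measure_mono_null ?_ (core gA s1 c2 hgAsm hs1sm hc2sm U3 hU3open hdd3)
    rintro b ⟨p, hpC, hpV⟩
    have hfe : shape f c1 c2 c1 s2 s1 c2 s1 s2 a (b1, (b2, (b, b4)))
        = fun q => gA q + b.1 * s1 q + b.2 * c2 q := by
      funext q; simp only [shape, hgAdef]; ring
    have h1 : W1 ((a, (b1, (b2, (b, b4)))), p) = 0 := hpC.1
    have h2 : W2 ((a, (b1, (b2, (b, b4)))), p) = 0 := hpC.2.1
    have h3 : Wxx ((a, (b1, (b2, (b, b4)))), p) * Wyy ((a, (b1, (b2, (b, b4)))), p)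
        - Wxy ((a, (b1, (b2, (b, b4)))), p) * Wyx ((a, (b1, (b2, (b, b4)))), p) = 0 := hpC.2.2
    refine ⟨p, hV3U3 hpV, ?_, ?_, ?_⟩
    · have e1 : pdx (fun q => gA q + b.1 * s1 q + b.2 * c2 q) p = W1 ((a, (b1, (b2, (b, b4)))), p) := by
        rw [← hfe]; exact congrFun (hPdx a (b1, (b2, (b, b4)))) p
      rw [e1]; exact h1
    · have e2 : pdy (fun q => gA q + b.1 * s1 q + b.2 * c2 q) p = W2 ((a, (b1, (b2, (b, b4)))), p) := by
        rw [← hfe]; exact congrFun (hPdy a (b1, (b2, (b, b4)))) p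
      rw [e2]; exact h2
    · have exx : pdx (pdx (fun q => gA q + b.1 * s1 q + b.2 * c2 q)) p = Wxx ((a, (b1, (b2, (b, b4)))), p) := by
        rw [← hfe]; exact congrFun (hPdxx a (b1, (b2, (b, b4)))) p
      have eyy : pdy (pdy (fun q => gA q + b.1 * s1 q + b.2 * c2 q)) p = Wyy ((a, (b1, (b2, (b, b4)))), p) := by
        rw [← hfe]; exact congrFun (hPdyy a (b1, (b2, (b, b4)))) p
      have exy : pdx (pdy (fun q => gA q + b.1 * s1 q + b.2 * c2 q)) p = Wxy ((a, (b1, (b2, (b, b4)))), p) := by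
        rw [← hfe]; exact congrFun (hPdxy a (b1, (b2, (b, b4)))) p
      have eyx : pdy (pdx (fun q => gA q + b.1 * s1 q + b.2 * c2 q)) p = Wyx ((a, (b1, (b2, (b, b4)))), p) := by
        rw [← hfe]; exact congrFun (hPdyx a (b1, (b2, (b, b4)))) p
      rw [exx, eyy, exy, eyx]; exact h3
  have hT4null : volume T4 = 0 := by
    refine prod_null_right hT4meas (fun a => ?_)
    have hSa : MeasurableSet {t : Bsp | (a, t) ∈ T4} :=
      hT4meas.preimage measurable_prodMk_left
    refine prod_null_right hSa (fun b1 => ?_)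
    have hSb1 : MeasurableSet {r : (ℝ×ℝ) × ((ℝ×ℝ) × (ℝ×ℝ)) | (a, (b1, r)) ∈ T4} :=
      hSa.preimage measurable_prodMk_left
    refine prod_null_right hSb1 (fun b2 => ?_)
    have hSb2 : MeasurableSet {r : (ℝ×ℝ) × (ℝ×ℝ) | (a, (b1, (b2, r))) ∈ T4} :=
      hSb1.preimage measurable_prodMk_left
    refine prod_null_right hSb2 (fun b3 => ?_)
    set gA : ℝ×ℝ→ℝ := fun q => (∑ i, a i * f i q) + (b1.1 * c1 q + b1.2 * c2 q + (b2.1 * c1 q + b2.2 * s2 q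
        + (b3.1 * s1 q + b3.2 * c2 q))) with hgAdef
    have hgAsm : ContDiff ℝ (⊤ : ℕ∞) gA := by
      rw [hgAdef]
      exact (ContDiff.sum fun i _ => contDiff_const.mul (hfs i)).add
        (((contDiff_const.mul hc1sm).add (contDiff_const.mul hc2sm)).add
          (((contDiff_const.mul hc1sm).add (contDiff_const.mul hs2sm)).add
            ((contDiff_const.mul hs1sm).add (contDiff_const.mul hc2sm))))
    refine measure_mono_null ?_ (core gA s1 s2 hgAsm hs1sm hs2sm U4 hU4open hdd4)
    rintro b ⟨p, hpC, hpV⟩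
    have hfe : shape f c1 c2 c1 s2 s1 c2 s1 s2 a (b1, (b2, (b3, b)))
        = fun q => gA q + b.1 * s1 q + b.2 * s2 q := by
      funext q; simp only [shape, hgAdef]; ring
    have h1 : W1 ((a, (b1, (b2, (b3, b)))), p) = 0 := hpC.1
    have h2 : W2 ((a, (b1, (b2, (b3, b)))), p) = 0 := hpC.2.1
    have h3 : Wxx ((a, (b1, (b2, (b3, b)))), p) * Wyy ((a, (b1, (b2, (b3, b)))), p)
        - Wxy ((a, (b1, (b2, (b3, b)))), p) * Wyx ((a, (b1, (b2, (b3, b)))), p) = 0 := hpC.2.2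
    refine ⟨p, hV4U4 hpV, ?_, ?_, ?_⟩
    · have e1 : pdx (fun q => gA q + b.1 * s1 q + b.2 * s2 q) p = W1 ((a, (b1, (b2, (b3, b)))), p) := by
        rw [← hfe]; exact congrFun (hPdx a (b1, (b2, (b3, b)))) p
      rw [e1]; exact h1
    · have e2 : pdy (fun q => gA q + b.1 * s1 q + b.2 * s2 q) p = W2 ((a, (b1, (b2, (b3, b)))), p) := by
        rw [← hfe]; exact congrFun (hPdy a (b1, (b2, (b3, b)))) p
      rw [e2]; exact h2
    · have exx : pdx (pdx (fun q => gA q + b.1 * s1 q + b.2 * s2 q)) p = Wxx ((a, (b1, (b2, (b3, b)))), p) := by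
        rw [← hfe]; exact congrFun (hPdxx a (b1, (b2, (b3, b)))) p
      have eyy : pdy (pdy (fun q => gA q + b.1 * s1 q + b.2 * s2 q)) p = Wyy ((a, (b1, (b2, (b3, b)))), p) := by
        rw [← hfe]; exact congrFun (hPdyy a (b1, (b2, (b3, b)))) p
      have exy : pdx (pdy (fun q => gA q + b.1 * s1 q + b.2 * s2 q)) p = Wxy ((a, (b1, (b2, (b3, b)))), p) := by
        rw [← hfe]; exact congrFun (hPdxy a (b1, (b2, (b3, b)))) p
      have eyx : pdy (pdx (fun q => gA q + b.1 * s1 q + b.2 * s2 q)) p = Wyx ((a, (b1, (b2, (b3, b)))), p) := by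
        rw [← hfe]; exact congrFun (hPdyx a (b1, (b2, (b3, b)))) p
      rw [exx, eyy, exy, eyx]; exact h3
  have hTnull : volume T = 0 :=
    measure_mono_null hTsub (measure_union_null hT1null
      (measure_union_null hT2null (measure_union_null hT3null hT4null)))
  -- pick a good perturbation t₀
  have hBne : (volume : Measure Bsp) ≠ 0 := by
    have h2 : (volume : Measure (ℝ×ℝ)) Set.univ = ⊤ := by
      rw [Measure.volume_eq_prod, ← Set.univ_prod_univ, Measure.prod_prod,
        Real.volume_univ, ENNReal.top_mul_top]
    have h34 : (volume : Measure ((ℝ×ℝ)×(ℝ×ℝ))) Set.univ = ⊤ := by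
      rw [Measure.volume_eq_prod, ← Set.univ_prod_univ, Measure.prod_prod, h2,
        ENNReal.top_mul_top]
    have h234 : (volume : Measure ((ℝ×ℝ)×((ℝ×ℝ)×(ℝ×ℝ)))) Set.univ = ⊤ := by
      rw [Measure.volume_eq_prod, ← Set.univ_prod_univ, Measure.prod_prod, h2, h34,
        ENNReal.top_mul_top]
    have hB : (volume : Measure Bsp) Set.univ = ⊤ := by
      rw [Measure.volume_eq_prod, ← Set.univ_prod_univ, Measure.prod_prod, h2, h234,
        ENNReal.top_mul_top]
    intro h0
    rw [h0] at hB
    simp at hB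
  obtain ⟨t₀, ht₀⟩ := exists_null_slice hBne hTmeas hTnull
  set v : Fin m → ℝ := fun i => (t₀.1.1 + t₀.2.1.1) * vc1 i + (t₀.1.2 + t₀.2.2.1.2) * vc2 i
    + (t₀.2.2.1.1 + t₀.2.2.2.1) * vs1 i + (t₀.2.1.2 + t₀.2.2.2.2) * vs2 i with hvdef
  have key : ∀ a : Fin m → ℝ, shape f c1 c2 c1 s2 s1 c2 s1 s2 a t₀
      = fun q => ∑ i, (a i + v i) * f i q := by
    intro a; funext q
    calc shape f c1 c2 c1 s2 s1 c2 s1 s2 a t₀ q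
        = (∑ i, a i * f i q) + ((t₀.1.1 + t₀.2.1.1) * c1 q + (t₀.1.2 + t₀.2.2.1.2) * c2 q
          + (t₀.2.2.1.1 + t₀.2.2.2.1) * s1 q + (t₀.2.1.2 + t₀.2.2.2.2) * s2 q) := by
          simp only [shape]; ring
      _ = (∑ i, a i * f i q) + ((t₀.1.1 + t₀.2.1.1) * (∑ i, vc1 i * f i q)
          + (t₀.1.2 + t₀.2.2.1.2) * (∑ i, vc2 i * f i q)
          + (t₀.2.2.1.1 + t₀.2.2.2.1) * (∑ i, vs1 i * f i q)
          + (t₀.2.1.2 + t₀.2.2.2.2) * (∑ i, vs2 i * f i q)) := by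
          rw [hvc1q q, hvc2q q, hvs1q q, hvs2q q]
      _ = ∑ i, (a i + v i) * f i q := by
          rw [Finset.mul_sum, Finset.mul_sum, Finset.mul_sum, Finset.mul_sum,
            ← Finset.sum_add_distrib, ← Finset.sum_add_distrib, ← Finset.sum_add_distrib,
            ← Finset.sum_add_distrib]
          exact Finset.sum_congr rfl fun i _ => by simp only [hvdef]; ring
  rw [MeasureTheory.ae_iff]
  have hsub : {a : Fin m → ℝ | ¬ IsMorse (fun q => ∑ i, a i * f i q)}
      ⊆ (fun a : Fin m → ℝ => a - v) ⁻¹' {x : Fin m → ℝ | (x, t₀) ∈ T} := by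
    intro a ha
    simp only [Set.mem_setOf_eq, IsMorse] at ha
    push_neg at ha
    obtain ⟨p, hp1, hp2, hp3⟩ := ha
    have hFa : shape f c1 c2 c1 s2 s1 c2 s1 s2 (a - v) t₀
        = (fun q => ∑ i, a i * f i q) := by
      rw [key (a - v)]
      funext q
      exact Finset.sum_congr rfl fun i _ => by simp [sub_add_cancel]
    have hsm : ContDiff ℝ (⊤ : ℕ∞) (fun q => ∑ i, a i * f i q) :=
      ContDiff.sum fun i _ => contDiff_const.mul (hfs i)
    have e1 : pdx (fun q => ∑ i, a i * f i q) p = W1 ((a - v, t₀), p) := by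
      rw [← hFa]; exact congrFun (hPdx (a - v) t₀) p
    have e2 : pdy (fun q => ∑ i, a i * f i q) p = W2 ((a - v, t₀), p) := by
      rw [← hFa]; exact congrFun (hPdy (a - v) t₀) p
    have exx : pdx (pdx (fun q => ∑ i, a i * f i q)) p = Wxx ((a - v, t₀), p) := by
      rw [← hFa]; exact congrFun (hPdxx (a - v) t₀) p
    have eyy : pdy (pdy (fun q => ∑ i, a i * f i q)) p = Wyy ((a - v, t₀), p) := by
      rw [← hFa]; exact congrFun (hPdyy (a - v) t₀) p
    have exy : pdx (pdy (fun q => ∑ i, a i * f i q)) p = Wxy ((a - v, t₀), p) := by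
      rw [← hFa]; exact congrFun (hPdxy (a - v) t₀) p
    have eyx : pdy (pdx (fun q => ∑ i, a i * f i q)) p = Wyx ((a - v, t₀), p) := by
      rw [← hFa]; exact congrFun (hPdyx (a - v) t₀) p
    refine Set.mem_preimage.2 ⟨p, ?_, ?_, ?_⟩
    · show W1 ((a - v, t₀), p) = 0
      rw [← e1]; exact hp1
    · show W2 ((a - v, t₀), p) = 0
      rw [← e2]; exact hp2
    · show Wxx ((a - v, t₀), p) * Wyy ((a - v, t₀), p)
        - Wxy ((a - v, t₀), p) * Wyx ((a - v, t₀), p) = 0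
      rw [← exx, ← eyy, ← exy, ← eyx, ← pdx_pdy_symm hsm p]
      linear_combination hp3
  refine measure_mono_null hsub ?_
  have hshift : (fun a : Fin m → ℝ => a - v) = fun a => a + (-v) :=
    funext fun a => sub_eq_add_neg a v
  rw [hshift, measure_preimage_add_right volume (-v) _]
  exact ht₀
end

section
/- Let $\lambda \neq 0$ be a real constant and let $H : \mathbb{R}^2 \to \mathbb{R}$ be a smooth $2\pi\mathbb{Z}^2$-periodic function, not identically zero, satisfying $\Delta H = -\lambda^2 H$. Define the vector field $X : \mathbb{R}^3 \to \mathbb{R}^3$ by $X(x,y,z) = \left(\tfrac{1}{\lambda}\partial_y H(x,y),\; -\tfrac{1}{\lambda}\partial_x H(x,y),\; H(x,y)\sin z\right)$. Then there exist points $p_+, p_- \in \mathbb{R}^2$ with $\nabla H(p_\pm) = 0$, $H(p_+) > 0$ and $H(p_-) < 0$, such that for every $z_0 \in (0,\pi)$ the curves $\gamma_\pm(t) = (p_\pm,\, z_\pm(t))$, where $z_\pm$ solves $z' = H(p_\pm)\sin z$ with $z_\pm(0) = z_0$, are solutions of $\gamma' = X \circ \gamma$ contained in $\mathbb{R}^2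 \times (0,\pi)$; moreover $\lim_{t\to\infty}\gamma_+(t) = (p_+,\pi)$, $\lim_{t\to-\infty}\gamma_+(t) = (p_+,0)$, $\lim_{t\to\infty}\gamma_-(t) = (p_-,0)$, $\lim_{t\to-\infty}\gamma_-(t) = (p_-,\pi)$, and $X$ vanishes at all four limit points. In particular, $X$ has at least two distinct singular periodic orbits. -/
open Real Filter

section Aux

open MeasureTheory Set

lemma pdx_contDiff {f : ℝ × ℝ → ℝ} (hf : ContDiff ℝ (⊤ : ℕ∞) f) : ContDiff ℝ (⊤ : ℕ∞) (pdx f) :=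
  (hf.fderiv_right (by simp)).clm_apply contDiff_const

lemma pdy_contDiff {f : ℝ × ℝ → ℝ} (hf : ContDiff ℝ (⊤ : ℕ∞) f) : ContDiff ℝ (⊤ : ℕ∞) (pdy f) :=
  (hf.fderiv_right (by simp)).clm_apply contDiff_const

lemma pdx_neg (f : ℝ × ℝ → ℝ) : pdx (fun p => -f p) = fun p => -pdx f p := by
  funext p; simp [pdx, fderiv_neg]

lemma pdy_neg (f : ℝ × ℝ → ℝ) : pdy (fun p => -f p) = fun p => -pdy f p := by
  funext p; simp [pdy, fderiv_neg]

lemma fderiv_translate {f : ℝ × ℝ → ℝ} (hf : Differentiable ℝ f) (c : ℝ × ℝ)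
    (h : ∀ p, f (p + c) = f p) (p : ℝ × ℝ) : fderiv ℝ f (p + c) = fderiv ℝ f p := by
  have h1 : HasFDerivAt (fun q => f (q + c)) (fderiv ℝ f (p + c)) p := by
    simpa [Function.comp_def] using ((hf (p + c)).hasFDerivAt.comp p ((hasFDerivAt_id p).add_const c))
  have h2 : (fun q => f (q + c)) = f := funext h
  rw [h2] at h1
  exact h1.fderiv.symm

lemma isTorusPeriodic_shift {f : ℝ × ℝ → ℝ} (hf : IsTorusPeriodic f) (m n : ℤ) (p : ℝ × ℝ) :
    f (p + (2 * Real.pi * m, 2 * Real.pi * n)) = f p := by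
  have := hf p m n
  exact this

lemma pdx_periodic {f : ℝ × ℝ → ℝ} (hf : ContDiff ℝ (⊤ : ℕ∞) f) (hp : IsTorusPeriodic f) :
    IsTorusPeriodic (pdx f) := by
  intro p m n
  have key := fderiv_translate (hf.differentiable (by simp)) (2 * Real.pi * m, 2 * Real.pi * n)
    (isTorusPeriodic_shift hp m n) p
  simp only [pdx]
  rw [show ((p.1 + 2 * Real.pi * m, p.2 + 2 * Real.pi * n) : ℝ × ℝ)
      = p + (2 * Real.pi * m, 2 * Real.pi * n) from rfl, key]

lemma pdy_periodic {f : ℝ × ℝ → ℝ} (hf : ContDiff ℝ (⊤ : ℕ∞) f) (hp : IsTorusPeriodic f) :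
    IsTorusPeriodic (pdy f) := by
  intro p m n
  have key := fderiv_translate (hf.differentiable (by simp)) (2 * Real.pi * m, 2 * Real.pi * n)
    (isTorusPeriodic_shift hp m n) p
  simp only [pdy]
  rw [show ((p.1 + 2 * Real.pi * m, p.2 + 2 * Real.pi * n) : ℝ × ℝ)
      = p + (2 * Real.pi * m, 2 * Real.pi * n) from rfl, key]

lemma reduce_to_square {f : ℝ × ℝ → ℝ} (hp : IsTorusPeriodic f) (p : ℝ × ℝ) :
    ∃ p' ∈ Set.Icc (0:ℝ) (2*Real.pi) ×ˢ Set.Icc (0:ℝ) (2*Real.pi), f p' = f p := by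
  have hT : (0:ℝ) < 2 * Real.pi := by positivity
  set T : ℝ := 2 * Real.pi
  refine ⟨(p.1 - ⌊p.1 / T⌋ * T, p.2 - ⌊p.2 / T⌋ * T), ?_, ?_⟩
  · constructor
    · exact ⟨Int.sub_floor_div_mul_nonneg _ hT, (Int.sub_floor_div_mul_lt _ hT).le⟩
    · exact ⟨Int.sub_floor_div_mul_nonneg _ hT, (Int.sub_floor_div_mul_lt _ hT).le⟩
  · have := hp (p.1 - ⌊p.1 / T⌋ * T, p.2 - ⌊p.2 / T⌋ * T) ⌊p.1 / T⌋ ⌊p.2 / T⌋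
    rw [← this]
    congr 1 <;> simp [T] <;> ring

lemma exists_global_max {f : ℝ × ℝ → ℝ} (hf : ContDiff ℝ (⊤ : ℕ∞) f) (hp : IsTorusPeriodic f) :
    ∃ p0, ∀ p, f p ≤ f p0 := by
  obtain ⟨p0, -, hmax⟩ := (isCompact_Icc.prod isCompact_Icc).exists_isMaxOn
    (s := Set.Icc (0:ℝ) (2*Real.pi) ×ˢ Set.Icc (0:ℝ) (2*Real.pi))
    ⟨(0, 0), by constructor <;> exact ⟨le_refl _, by positivity⟩⟩
    hf.continuous.continuousOn
  refine ⟨p0, fun p => ?_⟩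
  obtain ⟨p', hp', he⟩ := reduce_to_square hp p
  rw [← he]
  exact hmax hp'

lemma pd_eq_zero_of_max {f : ℝ × ℝ → ℝ} {p0 : ℝ × ℝ} (h : ∀ p, f p ≤ f p0) :
    pdx f p0 = 0 ∧ pdy f p0 = 0 := by
  have hmax : IsLocalMax f p0 := Filter.Eventually.of_forall h
  have hz := hmax.fderiv_eq_zero
  constructor <;> simp [pdx, pdy, hz]

lemma interval_pos {g : ℝ → ℝ} (hg : Continuous g) (h0 : ∀ x, 0 ≤ g x) {x0 : ℝ}
    (hx0 : 0 < g x0) :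
    0 < ∫ x in (x0 - Real.pi)..(x0 - Real.pi + 2 * Real.pi), g x := by
  rw [intervalIntegral.integral_pos_iff_support_of_nonneg_ae (ae_of_all _ h0)
    (hg.intervalIntegrable _ _)]
  refine ⟨by linarith [pi_pos], ?_⟩
  obtain ⟨ε, hε, hsub⟩ : ∃ ε > 0, Ioo (x0 - ε) (x0 + ε) ⊆ {x | 0 < g x} := by
    have h1 : {x | 0 < g x} ∈ nhds x0 := (isOpen_lt continuous_const hg).mem_nhds hx0
    rcases Metric.mem_nhds_iff.1 h1 with ⟨ε, hε, hball⟩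
    exact ⟨ε, hε, by rwa [← Real.ball_eq_Ioo]⟩
  have hπ := pi_pos
  set ε' := min ε Real.pi with hε'def
  have hε' : 0 < ε' := lt_min hε hπ
  have h1 : ε' ≤ ε := min_le_left _ _
  have h2 : ε' ≤ Real.pi := min_le_right _ _
  calc (0:ENNReal) < volume (Ioo (x0 - ε') (x0 + ε')) := by
        rw [Real.volume_Ioo]; exact ENNReal.ofReal_pos.2 (by linarith)
    _ ≤ _ := by
        apply measure_mono
        rintro y ⟨hy1, hy2⟩
        constructor
        · exact ne_of_gt (hsub ⟨by linarith, by linarith⟩)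
        · exact ⟨by linarith, by linarith⟩

lemma exists_pos_aux (lam : ℝ) (hlam : lam ≠ 0)
    (H : ℝ × ℝ → ℝ) (hH : ContDiff ℝ (⊤ : ℕ∞) H) (hper : IsTorusPeriodic H)
    (heig : ∀ p, pdx (pdx H) p + pdy (pdy H) p = -lam ^ 2 * H p)
    {q : ℝ × ℝ} (hq : H q < 0) : ∃ p, 0 < H p := by
  by_contra hcon
  push_neg at hcon
  have hπ := Real.pi_pos
  set a := q.1 - Real.pi with ha
  set b := q.2 - Real.pi with hb
  have hCx := pdx_contDiff hH
  have hCy := pdy_contDiff hH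
  have Hcont : Continuous fun p : ℝ × ℝ =>
      fderiv ℝ (pdx H) p (1, 0) + fderiv ℝ (pdy H) p (0, 1) :=
    ((pdx_contDiff hCx).continuous).add ((pdy_contDiff hCy).continuous)
  have div := integral2_divergence_prod_of_hasFDerivAt_off_countable
    (pdx H) (pdy H) (fun p => fderiv ℝ (pdx H) p) (fun p => fderiv ℝ (pdy H) p)
    a b (a + 2 * Real.pi) (b + 2 * Real.pi) ∅ Set.countable_empty
    (hCx.continuous.continuousOn) (hCy.continuous.continuousOn)
    (fun x _ => ((hCx.differentiable (by simp)) x).hasFDerivAt)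
    (fun x _ => ((hCy.differentiable (by simp)) x).hasFDerivAt)
    (Hcont.continuousOn.integrableOn_compact (isCompact_uIcc.prod isCompact_uIcc))
  have e1 : ∀ x : ℝ, pdy H (x, b + 2 * Real.pi) = pdy H (x, b) := by
    intro x
    have := pdy_periodic hH hper (x, b) 0 1
    simpa using this
  have e2 : ∀ y : ℝ, pdx H (a + 2 * Real.pi, y) = pdx H (a, y) := by
    intro y
    have := pdx_periodic hH hper (a, y) 1 0
    simpa using this
  have eL : ∀ x y : ℝ, fderiv ℝ (pdx H) (x, y) (1, 0) + fderiv ℝ (pdy H) (x, y) (0, 1)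
      = -lam ^ 2 * H (x, y) := fun x y => heig (x, y)
  simp_rw [e1, e2, eL, sub_self, zero_add, intervalIntegral.integral_const_mul] at div
  rw [sub_self] at div
  have hIH : (∫ x in a..(a + 2 * Real.pi), ∫ y in b..(b + 2 * Real.pi), H (x, y)) = 0 := by
    rcases mul_eq_zero.1 div with h | h
    · exact absurd h (by simp [hlam])
    · exact h
  set φ : ℝ → ℝ := fun x => ∫ y in b..(b + 2 * Real.pi), -H (x, y) with hφ
  have hφcont : Continuous φ := by
    apply intervalIntegral.continuous_parametric_intervalIntegral_of_continuous'
      (f := fun x y => -H (x, y)) (μ := volume)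
    have : (Function.uncurry fun x y => -H (x, y)) = fun p : ℝ × ℝ => -H p := by
      ext p; simp [Function.uncurry]
    rw [this]
    exact hH.continuous.neg
  have hφ0 : ∀ x, 0 ≤ φ x := by
    intro x
    apply intervalIntegral.integral_nonneg (by linarith)
    intro y _
    simpa using hcon (x, y)
  have hφq : 0 < φ q.1 := by
    have hgc : Continuous fun y => -H (q.1, y) :=
      (hH.continuous.comp (continuous_const.prodMk continuous_id)).neg
    have hgx : 0 < -H (q.1, q.2) := by simpa using hq
    have := interval_pos (x0 := q.2) hgc (fun y => by simpa using hcon (q.1, y)) hgx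
    simpa [hφ, hb] using this
  have hsum : (∫ x in a..(a + 2 * Real.pi), φ x) = 0 := by
    have : ∀ x : ℝ, φ x = -(∫ y in b..(b + 2 * Real.pi), H (x, y)) := by
      intro x; simp [hφ, intervalIntegral.integral_neg]
    simp_rw [this, intervalIntegral.integral_neg, hIH, neg_zero]
  have hpos : 0 < ∫ x in a..(a + 2 * Real.pi), φ x := by
    have := interval_pos (x0 := q.1) hφcont hφ0 hφq
    simpa [ha] using this
  rw [hsum] at hpos
  exact lt_irrefl 0 hpos

lemma ode_uniq {v : ℝ → ℝ} {K : NNReal} (hv : LipschitzWith K v) {f g : ℝ → ℝ}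
    (hf : ∀ t, HasDerivAt f (v (f t)) t) (hg : ∀ t, HasDerivAt g (v (g t)) t)
    (h0 : f 0 = g 0) (t : ℝ) : f t = g t := by
  rcases le_total 0 t with ht | ht
  · exact ODE_solution_unique (v := fun _ x => v x) (fun _ => hv)
      (fun s _ => (hf s).continuousAt.continuousWithinAt)
      (fun s _ => (hf s).hasDerivWithinAt)
      (fun s _ => (hg s).continuousAt.continuousWithinAt)
      (fun s _ => (hg s).hasDerivWithinAt) h0 ⟨ht, le_refl t⟩
  · have hv' : LipschitzWith K (fun x => -v x) := by
      apply LipschitzWith.of_dist_le_mul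
      intro x y
      rw [dist_neg_neg]
      exact hv.dist_le_mul x y
    have hF : ∀ s, HasDerivAt (fun s => f (-s)) (-(v (f (-s)))) s := by
      intro s
      simpa [mul_comm, Function.comp_def] using (hf (-s)).comp s (hasDerivAt_neg' (x := s))
    have hG : ∀ s, HasDerivAt (fun s => g (-s)) (-(v (g (-s)))) s := by
      intro s
      simpa [mul_comm, Function.comp_def] using (hg (-s)).comp s (hasDerivAt_neg' (x := s))
    have := ODE_solution_unique (v := fun _ x => -v x) (a := 0) (b := -t) (fun _ => hv')
      (fun s _ => (hF s).continuousAt.continuousWithinAt)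
      (fun s _ => (hF s).hasDerivWithinAt)
      (fun s _ => (hG s).continuousAt.continuousWithinAt)
      (fun s _ => (hG s).hasDerivWithinAt) (show f (-0) = g (-0) by simpa using h0)
      (Set.mem_Icc.2 ⟨by linarith, le_refl (-t)⟩)
    simpa using this

lemma lipschitz_c_sin (c : ℝ) : LipschitzWith ‖c‖₊ (fun x => c * Real.sin x) := by
  apply lipschitzWith_of_nnnorm_deriv_le
  · exact fun x => ((Real.hasDerivAt_sin x).const_mul c).differentiableAt
  · intro x
    rw [((Real.hasDerivAt_sin x).const_mul c).deriv]
    rw [nnnorm_mul]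
    apply mul_le_of_le_one_right zero_le
    rw [← NNReal.coe_le_coe]
    simpa [Real.norm_eq_abs] using Real.abs_cos_le_one x

lemma ode_core {c : ℝ} (hc : 0 < c) {z₀ : ℝ} (h01 : 0 < z₀) (h02 : z₀ < Real.pi) (z : ℝ → ℝ)
    (hz0 : z 0 = z₀) (hz : ∀ t, HasDerivAt z (c * Real.sin (z t)) t) :
    (∀ t, z t ∈ Set.Ioo 0 Real.pi) ∧ Tendsto z atTop (nhds Real.pi) ∧
      Tendsto z atBot (nhds 0) := by
  have hπ := Real.pi_pos
  set K := Real.log (Real.tan (z₀ / 2)) with hK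
  set ζ : ℝ → ℝ := fun t => 2 * Real.arctan (Real.exp (K + c * t)) with hζ
  have hζmem : ∀ t, ζ t ∈ Set.Ioo 0 Real.pi := by
    intro t
    have h1 : (0:ℝ) < Real.arctan (Real.exp (K + c * t)) := by
      have := Real.arctan_strictMono (show (0:ℝ) < Real.exp (K + c * t) from Real.exp_pos _)
      rwa [Real.arctan_zero] at this
    have h2 := Real.arctan_lt_pi_div_two (Real.exp (K + c * t))
    exact ⟨by simp only [hζ]; linarith, by simp only [hζ]; linarith⟩
  have hζ0 : ζ 0 = z₀ := by
    have ht : 0 < Real.tan (z₀ / 2) :=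
      Real.tan_pos_of_pos_of_lt_pi_div_two (by linarith) (by linarith)
    simp only [hζ, mul_zero, add_zero, hK]
    rw [Real.exp_log ht, Real.arctan_tan (by linarith) (by linarith)]
    ring
  have hζd : ∀ t, HasDerivAt ζ (c * Real.sin (ζ t)) t := by
    intro t
    have h1 : HasDerivAt (fun t : ℝ => K + c * t) c t := by
      simpa using ((hasDerivAt_id t).const_mul c).const_add K
    have h2 : HasDerivAt (fun t => Real.exp (K + c * t)) (Real.exp (K + c * t) * c) t := h1.exp
    have h3 := (Real.hasDerivAt_arctan (Real.exp (K + c * t))).comp t h2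
    have h4 := h3.const_mul 2
    refine h4.congr_deriv (Eq.symm ?_)
    set u := Real.exp (K + c * t) with hu'
    have hu : 0 < u := Real.exp_pos _
    have hs : Real.sqrt (1 + u ^ 2) * Real.sqrt (1 + u ^ 2) = 1 + u ^ 2 :=
      Real.mul_self_sqrt (by positivity)
    have hsne : Real.sqrt (1 + u ^ 2) ≠ 0 := by positivity
    have h1u : (0:ℝ) < 1 + u ^ 2 := by positivity
    show c * Real.sin (2 * Real.arctan u) = 2 * (1 / (1 + u ^ 2) * (u * c))
    rw [Real.sin_two_mul, Real.sin_arctan, Real.cos_arctan]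
    field_simp
    ring_nf
    rw [Real.sq_sqrt h1u.le]
  have hzeq : z = ζ := by
    funext t
    exact ode_uniq (lipschitz_c_sin c) hz hζd (by rw [hz0, hζ0]) t
  have hTop : Tendsto ζ atTop (nhds Real.pi) := by
    have hT : Tendsto (fun t : ℝ => K + c * t) atTop atTop :=
      tendsto_atTop_add_const_left _ K (tendsto_id.const_mul_atTop hc)
    have hE : Tendsto (fun t : ℝ => Real.exp (K + c * t)) atTop atTop :=
      Real.tendsto_exp_atTop.comp hT
    have hA : Tendsto (fun t : ℝ => Real.arctan (Real.exp (K + c * t))) atTop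
        (nhds (Real.pi / 2)) := (Real.tendsto_arctan_atTop.mono_right nhdsWithin_le_nhds).comp hE
    have := hA.const_mul 2
    rw [show 2 * (Real.pi / 2) = Real.pi by ring] at this
    exact this
  have hBot : Tendsto ζ atBot (nhds 0) := by
    have hT : Tendsto (fun t : ℝ => K + c * t) atBot atBot :=
      tendsto_atBot_add_const_left _ K (tendsto_id.const_mul_atBot hc)
    have hE : Tendsto (fun t : ℝ => Real.exp (K + c * t)) atBot (nhds 0) :=
      Real.tendsto_exp_atBot.comp hT
    have hA : Tendsto (fun t : ℝ => Real.arctan (Real.exp (K + c * t))) atBot (nhds 0) := by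
      have := (Real.continuous_arctan.tendsto 0).comp hE
      rwa [Real.arctan_zero] at this
    have := hA.const_mul 2
    rw [mul_zero] at this
    exact this
  rw [hzeq]
  exact ⟨hζmem, hTop, hBot⟩

end Aux

theorem stmt16 (lam : ℝ) (hlam : lam ≠ 0)
    (H : ℝ × ℝ → ℝ) (hH : ContDiff ℝ (⊤ : ℕ∞) H) (hper : IsTorusPeriodic H)
    (hnontriv : ∃ p, H p ≠ 0)
    (heig : ∀ p, pdx (pdx H) p + pdy (pdy H) p = -lam ^ 2 * H p)
    (X : ℝ × ℝ × ℝ → ℝ × ℝ × ℝ)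
    (hX : ∀ p : ℝ × ℝ × ℝ,
      X p = ((1 / lam) * pdy H (p.1, p.2.1),
             -(1 / lam) * pdx H (p.1, p.2.1),
             H (p.1, p.2.1) * Real.sin p.2.2)) :
    ∃ pp pm : ℝ × ℝ,
      pp ≠ pm ∧
      pdx H pp = 0 ∧ pdy H pp = 0 ∧ pdx H pm = 0 ∧ pdy H pm = 0 ∧
      0 < H pp ∧ H pm < 0 ∧
      X (pp.1, pp.2, 0) = 0 ∧ X (pp.1, pp.2, Real.pi) = 0 ∧
      X (pm.1, pm.2, 0) = 0 ∧ X (pm.1, pm.2, Real.pi) = 0 ∧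
      (∀ z₀ ∈ Set.Ioo 0 Real.pi,
        (∀ zp : ℝ → ℝ, zp 0 = z₀ →
          (∀ t, HasDerivAt zp (H pp * Real.sin (zp t)) t) →
          (∀ t, zp t ∈ Set.Ioo 0 Real.pi) ∧
          (∀ t, HasDerivAt (fun s => ((pp.1, pp.2, zp s) : ℝ × ℝ × ℝ))
            (X (pp.1, pp.2, zp t)) t) ∧
          Tendsto (fun t => ((pp.1, pp.2, zp t) : ℝ × ℝ × ℝ)) atTop
            (nhds (pp.1, pp.2, Real.pi)) ∧
          Tendsto (fun t => ((pp.1, pp.2, zp t) : ℝ × ℝ × ℝ)) atBot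
            (nhds (pp.1, pp.2, 0))) ∧
        (∀ zm : ℝ → ℝ, zm 0 = z₀ →
          (∀ t, HasDerivAt zm (H pm * Real.sin (zm t)) t) →
          (∀ t, zm t ∈ Set.Ioo 0 Real.pi) ∧
          (∀ t, HasDerivAt (fun s => ((pm.1, pm.2, zm s) : ℝ × ℝ × ℝ))
            (X (pm.1, pm.2, zm t)) t) ∧
          Tendsto (fun t => ((pm.1, pm.2, zm t) : ℝ × ℝ × ℝ)) atTop
            (nhds (pm.1, pm.2, 0)) ∧
          Tendsto (fun t => ((pm.1, pm.2, zm t) : ℝ × ℝ × ℝ)) atBot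
            (nhds (pm.1, pm.2, Real.pi)))) := by
  -- existence of a point where H is negative
  have hex_neg : ∃ p, H p < 0 := by
    obtain ⟨q, hq⟩ := hnontriv
    rcases lt_or_gt_of_ne hq with h | h
    · exact ⟨q, h⟩
    · have hH' : ContDiff ℝ (⊤ : ℕ∞) (fun p => -H p) := hH.neg
      have hper' : IsTorusPeriodic (fun p => -H p) := fun p m n => by
        simp [hper p m n]
      have heig' : ∀ p, pdx (pdx fun p => -H p) p + pdy (pdy fun p => -H p) p
          = -lam ^ 2 * (-H p) := by
        intro p
        rw [pdx_neg H, pdx_neg (pdx H), pdy_neg H, pdy_neg (pdy H)]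
        have := heig p
        simp only
        linarith
      obtain ⟨p, hp⟩ := exists_pos_aux lam hlam _ hH' hper' heig' (q := q) (by simpa using h)
      exact ⟨p, by simpa using hp⟩
  -- existence of a point where H is positive
  have hex_pos : ∃ p, 0 < H p := by
    obtain ⟨q, hq⟩ := hex_neg
    exact exists_pos_aux lam hlam H hH hper heig hq
  -- global max pp
  obtain ⟨pp, hppmax⟩ := exists_global_max hH hper
  obtain ⟨hppx, hppy⟩ := pd_eq_zero_of_max hppmax
  have hHpp : 0 < H pp := by
    obtain ⟨r, hr⟩ := hex_pos
    exact lt_of_lt_of_le hr (hppmax r)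
  -- global min pm
  obtain ⟨pm, hpmmin'⟩ := exists_global_max (f := fun p => -H p) hH.neg
    (fun p m n => by simp [hper p m n])
  have hpmmin : ∀ p, H pm ≤ H p := fun p => by have := hpmmin' p; simpa using this
  have hpmz := pd_eq_zero_of_max hpmmin'
  have hpmx : pdx H pm = 0 := by
    have := hpmz.1
    rw [pdx_neg H] at this
    simpa using this
  have hpmy : pdy H pm = 0 := by
    have := hpmz.2
    rw [pdy_neg H] at this
    simpa using this
  have hHpm : H pm < 0 := by
    obtain ⟨r, hr⟩ := hex_neg
    exact lt_of_le_of_lt (hpmmin r) hr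
  have hne : pp ≠ pm := by
    intro h
    rw [h] at hHpp
    exact absurd hHpp (by linarith)
  refine ⟨pp, pm, hne, hppx, hppy, hpmx, hpmy, hHpp, hHpm, ?_, ?_, ?_, ?_, ?_⟩
  · rw [hX]; simp [hppx, hppy, Prod.ext_iff]
  · rw [hX]; simp [hppx, hppy, Real.sin_pi, Prod.ext_iff]
  · rw [hX]; simp [hpmx, hpmy, Prod.ext_iff]
  · rw [hX]; simp [hpmx, hpmy, Real.sin_pi, Prod.ext_iff]
  · intro z₀ hz₀
    constructor
    · intro zp hzp0 hzpd
      obtain ⟨hmem, hTop, hBot⟩ := ode_core hHpp hz₀.1 hz₀.2 zp hzp0 hzpd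
      refine ⟨hmem, ?_, ?_, ?_⟩
      · intro t
        have hD := (hasDerivAt_const t pp.1).prodMk ((hasDerivAt_const t pp.2).prodMk (hzpd t))
        convert hD using 1
        rw [hX]
        simp [hppx, hppy]
      · exact tendsto_const_nhds.prodMk_nhds (tendsto_const_nhds.prodMk_nhds hTop)
      · exact tendsto_const_nhds.prodMk_nhds (tendsto_const_nhds.prodMk_nhds hBot)
    · intro zm hzm0 hzmd
      set w : ℝ → ℝ := fun s => zm (-s) with hw
      have hw0 : w 0 = z₀ := by simpa [hw] using hzm0
      have hwd : ∀ s, HasDerivAt w ((-H pm) * Real.sin (w s)) s := by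
        intro s
        have h := (hzmd (-s)).comp s (hasDerivAt_neg' (x := s))
        refine h.congr_deriv ?_
        simp [hw]
      obtain ⟨hmem, hTop, hBot⟩ := ode_core (neg_pos.2 hHpm) hz₀.1 hz₀.2 w hw0 hwd
      have hzmem : ∀ t, zm t ∈ Set.Ioo 0 Real.pi := by
        intro t
        have := hmem (-t)
        simpa [hw] using this
      have hzmTop : Tendsto zm atTop (nhds 0) := by
        have h1 : Tendsto (fun t => w (-t)) atTop (nhds 0) := hBot.comp tendsto_neg_atTop_atBot
        exact h1.congr fun t => by simp [hw]
      have hzmBot : Tendsto zm atBot (nhds Real.pi) := by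
        have h1 : Tendsto (fun t => w (-t)) atBot (nhds Real.pi) :=
          hTop.comp tendsto_neg_atBot_atTop
        exact h1.congr fun t => by simp [hw]
      refine ⟨hzmem, ?_, ?_, ?_⟩
      · intro t
        have hD := (hasDerivAt_const t pm.1).prodMk ((hasDerivAt_const t pm.2).prodMk (hzmd t))
        convert hD using 1
        rw [hX]
        simp [hpmx, hpmy]
      · exact tendsto_const_nhds.prodMk_nhds (tendsto_const_nhds.prodMk_nhds hzmTop)
      · exact tendsto_const_nhds.prodMk_nhds (tendsto_const_nhds.prodMk_nhds hzmBot)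
end
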